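/- arXiv:math/0506621 — 10 statements merged into one kernel-verified Lean document; each statement's English description precedes it below -/
import Mathlib

section
/- Suppose −∞ < α < 0. Then for every T > 0 the backward Riccati equation Ṙ(t) − l(t)²·R(t)² + 2·b(t)·R(t) + β(1−β) = 0 for t ∈ [0,T], with terminal condition R(T) = 0, has a unique nonnegative solution R : [0,T] → ℝ. -/
open Set

/-- Barrier lemma: if `R T ≤ c` and the derivative is positive whenever `R ≥ c`,
then `R ≤ c` on `[0, T]`. -/
lemma barrier_aux {R d : ℝ → ℝ} {T c : ℝ} (hT : 0 < T)
    (hcont : ContinuousOn R (Icc 0 T))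
    (hd : ∀ t ∈ Ioo 0 T, HasDerivAt R (d t) t)
    (hTc : R T ≤ c)
    (hsign : ∀ t ∈ Ioo 0 T, c ≤ R t → 0 < d t) :
    ∀ t ∈ Icc 0 T, R t ≤ c := by
  intro t₁ ht₁
  by_contra hgt
  push_neg at hgt
  have ht₁T : t₁ < T := lt_of_le_of_ne ht₁.2 (by rintro rfl; linarith)
  set E : Set ℝ := Icc t₁ T ∩ R ⁻¹' Iic c with hE
  have hTE : T ∈ E := ⟨⟨le_of_lt ht₁T, le_rfl⟩, hTc⟩
  have hEne : E.Nonempty := ⟨T, hTE⟩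
  have hEbdd : BddBelow E := ⟨t₁, fun x hx => hx.1.1⟩
  have hEclosed : IsClosed E := by
    have h1 : ContinuousOn R (Icc t₁ T) := hcont.mono (Icc_subset_Icc_left ht₁.1)
    exact h1.preimage_isClosed_of_isClosed isClosed_Icc isClosed_Iic
  set t₂ : ℝ := sInf E with ht₂def
  have ht₂E : t₂ ∈ E := hEclosed.csInf_mem hEne hEbdd
  have ht₁t₂ : t₁ < t₂ := by
    have hle : t₁ ≤ t₂ := le_csInf hEne fun x hx => hx.1.1
    rcases eq_or_lt_of_le hle with h | h
    · exfalso
      have h2 : R t₂ ≤ c := ht₂E.2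
      rw [← h] at h2
      linarith
    · exact h
  have hkey : ∀ s ∈ Ioo t₁ t₂, c < R s := by
    intro s hs
    by_contra h
    push_neg at h
    have : s ∈ E := ⟨⟨le_of_lt hs.1, le_trans (le_of_lt hs.2) ht₂E.1.2⟩, h⟩
    exact absurd (csInf_le hEbdd this) (not_le.mpr hs.2)
  have hmono : StrictMonoOn R (Icc t₁ t₂) := by
    apply strictMonoOn_of_deriv_pos (convex_Icc t₁ t₂)
    · exact hcont.mono (Icc_subset_Icc ht₁.1 ht₂E.1.2)
    · intro s hs
      rw [interior_Icc] at hs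
      have hsIoo : s ∈ Ioo 0 T :=
        ⟨lt_of_le_of_lt ht₁.1 hs.1, lt_of_lt_of_le hs.2 ht₂E.1.2⟩
      rw [(hd s hsIoo).deriv]
      exact hsign s hsIoo (le_of_lt (hkey s hs))
  have h3 := hmono (left_mem_Icc.mpr (le_of_lt ht₁t₂)) (right_mem_Icc.mpr (le_of_lt ht₁t₂)) ht₁t₂
  have h4 : R t₂ ≤ c := ht₂E.2
  linarith

set_option maxHeartbeats 1000000 in
/-- Lemma 2.1 (ii): for `α < 0`, the backward Riccati equation
`Ṙ(t) − l(t)²·R(t)² + 2·b(t)·R(t) + β(1−β) = 0` on `[0,T]` with `R(T) = 0`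
has a unique nonnegative solution. -/
theorem stmt_0 (p q α β : ℝ) (hq : 0 < q) (hp : 0 ≤ p)
    (hα : α < 0) (hαβ : 1 / α + 1 / β = 1)
    (l b : ℝ → ℝ)
    (hl : ∀ t : ℝ, l t = p * (1 - 2 * p * q / ((2 * q + p) ^ 2 * Real.exp (2 * q * t) - p ^ 2)))
    (hb : ∀ t : ℝ, b t = -(p + q) + β * l t)
    (T : ℝ) (hT : 0 < T) :
    ∃ R : ℝ → ℝ,
      ((∀ t ∈ Set.Icc (0 : ℝ) T,
          HasDerivWithinAt R ((l t) ^ 2 * (R t) ^ 2 - 2 * b t * R t - β * (1 - β))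
            (Set.Icc (0 : ℝ) T) t) ∧
        R T = 0 ∧ (∀ t ∈ Set.Icc (0 : ℝ) T, 0 ≤ R t)) ∧
      (∀ R' : ℝ → ℝ,
        ((∀ t ∈ Set.Icc (0 : ℝ) T,
            HasDerivWithinAt R' ((l t) ^ 2 * (R' t) ^ 2 - 2 * b t * R' t - β * (1 - β))
              (Set.Icc (0 : ℝ) T) t) ∧
          R' T = 0 ∧ (∀ t ∈ Set.Icc (0 : ℝ) T, 0 ≤ R' t)) →
        ∀ t ∈ Set.Icc (0 : ℝ) T, R' t = R t) := by
  -- basic facts on β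
  have hβ0 : 0 < β := by
    by_contra h
    push_neg at h
    have h1 : 1 / α < 0 := div_neg_of_pos_of_neg one_pos hα
    have h2 : 1 / β ≤ 0 := div_nonpos_of_nonneg_of_nonpos zero_le_one h
    linarith
  have h1β : 1 < 1 / β := by
    have h1 : 1 / α < 0 := div_neg_of_pos_of_neg one_pos hα
    linarith
  have hβ1 : β < 1 := by
    have := mul_lt_mul_of_pos_left h1β hβ0
    rw [mul_one_div, div_self (ne_of_gt hβ0)] at this
    linarith
  have hγ : 0 < β * (1 - β) := mul_pos hβ0 (by linarith)
  -- the constant M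
  obtain ⟨M, hMdef⟩ : ∃ x : ℝ, x = β * (1 - β) / (2 * q) + 1 := ⟨_, rfl⟩
  have hM0 : 0 < M := by rw [hMdef]; positivity
  have hMq : 2 * q * M = β * (1 - β) + 2 * q := by
    rw [hMdef]; field_simp
  -- bounds on l and b at nonnegative times
  have hDpos : ∀ t : ℝ, 0 ≤ t → 2 * p * q ≤ (2 * q + p) ^ 2 * Real.exp (2 * q * t) - p ^ 2 ∧
      0 < (2 * q + p) ^ 2 * Real.exp (2 * q * t) - p ^ 2 := by
    intro t ht
    have he : 1 ≤ Real.exp (2 * q * t) := Real.one_le_exp (by positivity)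
    have h1 : (2 * q + p) ^ 2 ≤ (2 * q + p) ^ 2 * Real.exp (2 * q * t) := by
      nlinarith [sq_nonneg (2 * q + p)]
    constructor <;> nlinarith
  have hl0 : ∀ t : ℝ, 0 ≤ t → 0 ≤ l t := by
    intro t ht
    rw [hl t]
    obtain ⟨h1, h2⟩ := hDpos t ht
    have h3 : 2 * p * q / ((2 * q + p) ^ 2 * Real.exp (2 * q * t) - p ^ 2) ≤ 1 :=
      (div_le_one h2).mpr h1
    nlinarith
  have hlp : ∀ t : ℝ, 0 ≤ t → l t ≤ p := by
    intro t ht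
    rw [hl t]
    obtain ⟨h1, h2⟩ := hDpos t ht
    have h3 : 0 ≤ 2 * p * q / ((2 * q + p) ^ 2 * Real.exp (2 * q * t) - p ^ 2) :=
      div_nonneg (by positivity) (le_of_lt h2)
    nlinarith
  have hbub : ∀ t : ℝ, 0 ≤ t → b t ≤ -q := by
    intro t ht
    rw [hb t]
    have h1 := hl0 t ht
    have h2 := hlp t ht
    nlinarith
  have hblb : ∀ t : ℝ, 0 ≤ t → -(p + q) ≤ b t := by
    intro t ht
    rw [hb t]
    have h1 := hl0 t ht
    nlinarith
  -- time clamp and state clamp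
  obtain ⟨tc, htcdef⟩ : ∃ x : ℝ → ℝ, x = fun t => min T (max 0 t) := ⟨_, rfl⟩
  have htc0 : ∀ t, 0 ≤ tc t := by
    intro t; rw [htcdef]; exact le_min (le_of_lt hT) (le_max_left 0 t)
  have htcT : ∀ t, tc t ≤ T := by
    intro t; rw [htcdef]; exact min_le_left _ _
  have htc_id : ∀ t ∈ Icc (0 : ℝ) T, tc t = t := by
    intro t ht
    simp only [htcdef]
    rw [max_eq_right ht.1, min_eq_right ht.2]
  obtain ⟨pr, hprdef⟩ : ∃ x : ℝ → ℝ, x = fun x => max 0 (min x M) := ⟨_, rfl⟩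
  have hpr0 : ∀ x, 0 ≤ pr x := by
    intro x; rw [hprdef]; exact le_max_left _ _
  have hprM : ∀ x, pr x ≤ M := by
    intro x; rw [hprdef]; exact max_le (le_of_lt hM0) (min_le_right _ _)
  have hpr_id : ∀ x, 0 ≤ x → x ≤ M → pr x = x := by
    intro x h1 h2
    simp only [hprdef]
    rw [min_eq_left h2, max_eq_right h1]
  have hpr_lip : ∀ x y, |pr x - pr y| ≤ |x - y| := by
    intro x y
    simp only [hprdef]
    rw [max_comm 0 (min x M), max_comm 0 (min y M)]
    refine (abs_max_sub_max_le_abs _ _ _).trans ?_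
    have := abs_min_sub_min_le_max x M y M
    simpa using this
  -- the clamped vector field
  obtain ⟨w, hwdef⟩ : ∃ x : ℝ → ℝ → ℝ, x = fun t x =>
    (l (tc t)) ^ 2 * (pr x) ^ 2 - 2 * b (tc t) * pr x - β * (1 - β) := ⟨_, rfl⟩
  have hweq : ∀ t ∈ Icc (0 : ℝ) T, ∀ x : ℝ, 0 ≤ x → x ≤ M →
      w t x = (l t) ^ 2 * x ^ 2 - 2 * b t * x - β * (1 - β) := by
    intro t ht x h1 h2
    simp only [hwdef]
    rw [htc_id t ht, hpr_id x h1 h2]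
  -- Lipschitz constant
  obtain ⟨K, hKdef⟩ : ∃ x : NNReal, x = Real.toNNReal (2 * p ^ 2 * M + 2 * (p + q)) := ⟨_, rfl⟩
  have hKcoe : (K : ℝ) = 2 * p ^ 2 * M + 2 * (p + q) := by
    rw [hKdef, Real.coe_toNNReal]
    positivity
  have hK : ∀ t, LipschitzWith K (w t) := by
    intro t
    apply LipschitzWith.of_dist_le_mul
    intro x y
    rw [Real.dist_eq, Real.dist_eq, hKcoe]
    have hl1 := hl0 (tc t) (htc0 t)
    have hl2 := hlp (tc t) (htc0 t)
    have hb1 := hbub (tc t) (htc0 t)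
    have hb2 := hblb (tc t) (htc0 t)
    have ha1 := hpr0 x
    have ha2 := hprM x
    have hc1 := hpr0 y
    have hc2 := hprM y
    have heq : w t x - w t y =
        (pr x - pr y) * ((l (tc t)) ^ 2 * (pr x + pr y) - 2 * b (tc t)) := by
      simp only [hwdef]; ring
    rw [heq, abs_mul]
    have hsq : (l (tc t)) ^ 2 ≤ p ^ 2 := by nlinarith
    have hmul : (l (tc t)) ^ 2 * (pr x + pr y) ≤ p ^ 2 * (2 * M) :=
      mul_le_mul hsq (by linarith) (by linarith) (by positivity)
    have hmul0 : 0 ≤ (l (tc t)) ^ 2 * (pr x + pr y) :=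
      mul_nonneg (sq_nonneg _) (by linarith)
    have hbd : |(l (tc t)) ^ 2 * (pr x + pr y) - 2 * b (tc t)| ≤ 2 * p ^ 2 * M + 2 * (p + q) := by
      have hpM : (0:ℝ) ≤ p ^ 2 * M := by positivity
      rw [abs_le]
      constructor
      · linarith
      · linarith
    calc |pr x - pr y| * |(l (tc t)) ^ 2 * (pr x + pr y) - 2 * b (tc t)|
        ≤ |x - y| * (2 * p ^ 2 * M + 2 * (p + q)) := by
          apply mul_le_mul (hpr_lip x y) hbd (abs_nonneg _) (abs_nonneg _)
      _ = (2 * p ^ 2 * M + 2 * (p + q)) * |x - y| := by ring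
  -- bound on the field
  obtain ⟨C, hCdef⟩ : ∃ x : ℝ, x = p ^ 2 * M ^ 2 + 2 * (p + q) * M + β * (1 - β) := ⟨_, rfl⟩
  have hC : ∀ (t x : ℝ), ‖w t x‖ ≤ C := by
    intro t x
    rw [Real.norm_eq_abs]
    have hl1 := hl0 (tc t) (htc0 t)
    have hl2 := hlp (tc t) (htc0 t)
    have hb1 := hbub (tc t) (htc0 t)
    have hb2 := hblb (tc t) (htc0 t)
    have ha1 := hpr0 x
    have ha2 := hprM x
    have hsq : (l (tc t)) ^ 2 ≤ p ^ 2 := by nlinarith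
    have hsq2 : (pr x) ^ 2 ≤ M ^ 2 := by nlinarith
    have h1 : (l (tc t)) ^ 2 * (pr x) ^ 2 ≤ p ^ 2 * M ^ 2 :=
      mul_le_mul hsq hsq2 (sq_nonneg _) (by positivity)
    have h2 : 0 ≤ (l (tc t)) ^ 2 * (pr x) ^ 2 := mul_nonneg (sq_nonneg _) (sq_nonneg _)
    have h3 : 0 ≤ -(2 * b (tc t)) * pr x := mul_nonneg (by linarith) ha1
    have h4 : -(2 * b (tc t)) * pr x ≤ 2 * (p + q) * M :=
      mul_le_mul (by linarith) ha2 ha1 (by positivity)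
    rw [abs_le]
    constructor <;> simp only [hwdef, hCdef] <;> nlinarith
  -- continuity of the clamped coefficient functions
  have hlc_cont : Continuous fun t => l (tc t) := by
    have hfe : (fun t => l (tc t)) =
        fun t => p * (1 - 2 * p * q / ((2 * q + p) ^ 2 * Real.exp (2 * q * tc t) - p ^ 2)) :=
      funext fun t => hl (tc t)
    have htc_cont : Continuous tc := by
      rw [htcdef]; fun_prop
    rw [hfe]
    apply Continuous.mul continuous_const
    apply Continuous.sub continuous_const
    apply Continuous.div continuous_const
    · fun_prop
    · intro t
      have h2 := (hDpos (tc t) (htc0 t)).2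
      exact ne_of_gt h2
  have hbc_cont : Continuous fun t => b (tc t) := by
    have hfe : (fun t => b (tc t)) = fun t => -(p + q) + β * l (tc t) :=
      funext fun t => hb (tc t)
    rw [hfe]
    exact continuous_const.add (continuous_const.mul hlc_cont)
  have hw_cont : ∀ x : ℝ, Continuous fun t => w t x := by
    intro x
    rw [hwdef]
    exact ((hlc_cont.pow 2).mul continuous_const).sub
      (((continuous_const.mul hbc_cont).mul continuous_const)) |>.sub continuous_const
  -- Picard-Lindelöf
  have hC0 : 0 < C := by rw [hCdef]; positivity
  have hPL : IsPicardLindelof w (tmin := 0) (tmax := T) ⟨T, right_mem_Icc.mpr (le_of_lt hT)⟩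
      0 (C * T).toNNReal 0 C.toNNReal K := by
    constructor
    · exact fun t _ => (hK t).lipschitzOnWith
    · exact fun x _ => (hw_cont x).continuousOn
    · intro t _ x _; rw [Real.coe_toNNReal _ hC0.le]; exact hC t x
    · have hmax : max (T - T) (T - 0) = T := by
        rw [max_eq_right] <;> simp [le_of_lt hT]
      simp only [hmax, Real.coe_toNNReal _ hC0.le, NNReal.coe_zero, sub_zero,
        Real.coe_toNNReal _ (by positivity : (0:ℝ) ≤ C * T), le_refl]
      rw [sub_self, max_eq_right hT.le]
  obtain ⟨R, hRT, hRd⟩ := hPL.exists_eq_forall_mem_Icc_hasDerivWithinAt₀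
  have hRT : R T = 0 := hRT
  have hRcont : ContinuousOn R (Icc 0 T) := fun t ht => (hRd t ht).continuousWithinAt
  have hRderivAt : ∀ t ∈ Ioo (0 : ℝ) T, HasDerivAt R (w t (R t)) t := fun t ht =>
    (hRd t (Ioo_subset_Icc_self ht)).hasDerivAt (Icc_mem_nhds ht.1 ht.2)
  -- a priori bounds for R
  have hRle : ∀ t ∈ Icc (0 : ℝ) T, R t ≤ M := by
    apply barrier_aux hT hRcont hRderivAt (by rw [hRT]; exact le_of_lt hM0)
    intro t ht hMR
    have hprR : pr (R t) = M := by
      rw [hprdef]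
      simp only
      rw [min_eq_right hMR, max_eq_right (le_of_lt hM0)]
    have hl1 := hl0 (tc t) (htc0 t)
    have hb1 := hbub (tc t) (htc0 t)
    rw [hwdef]
    simp only
    rw [hprR]
    nlinarith [mul_nonneg (sq_nonneg (l (tc t))) (sq_nonneg M)]
  have hRge : ∀ t ∈ Icc (0 : ℝ) T, 0 ≤ R t := by
    have h := barrier_aux (R := fun t => -R t) (d := fun t => -(w t (R t))) (c := 0) hT
      hRcont.neg (fun t ht => (hRderivAt t ht).neg) (by show -R T ≤ 0; rw [hRT]; norm_num) ?_
    · intro t ht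
      have h2 : -R t ≤ 0 := h t ht
      linarith
    · intro t ht hR0
      have hRt0 : R t ≤ 0 := by linarith
      have hprR : pr (R t) = 0 := by
        rw [hprdef]
        simp only
        rw [min_eq_left (le_trans hRt0 (le_of_lt hM0)), max_eq_left hRt0]
      rw [hwdef]
      simp only
      rw [hprR]
      ring_nf
      nlinarith
  -- R solves the original equation
  have hworig : ∀ (S : ℝ → ℝ), (∀ t ∈ Icc (0:ℝ) T, 0 ≤ S t) → (∀ t ∈ Icc (0:ℝ) T, S t ≤ M) →
      ∀ t ∈ Icc (0:ℝ) T, w t (S t) = (l t) ^ 2 * (S t) ^ 2 - 2 * b t * S t - β * (1 - β) :=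
    fun S h1 h2 t ht => hweq t ht (S t) (h1 t ht) (h2 t ht)
  refine ⟨R, ⟨?_, hRT, hRge⟩, ?_⟩
  · intro t ht
    rw [← hworig R hRge hRle t ht]
    exact hRd t ht
  -- uniqueness
  intro R' ⟨hR'd, hR'T, hR'ge⟩
  have hR'cont : ContinuousOn R' (Icc 0 T) := fun t ht => (hR'd t ht).continuousWithinAt
  have hR'derivAt : ∀ t ∈ Ioo (0 : ℝ) T,
      HasDerivAt R' ((l t) ^ 2 * (R' t) ^ 2 - 2 * b t * R' t - β * (1 - β)) t := fun t ht =>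
    (hR'd t (Ioo_subset_Icc_self ht)).hasDerivAt (Icc_mem_nhds ht.1 ht.2)
  have hR'le : ∀ t ∈ Icc (0 : ℝ) T, R' t ≤ M := by
    apply barrier_aux hT hR'cont hR'derivAt (by rw [hR'T]; exact le_of_lt hM0)
    intro t ht hMR
    have h0t : (0:ℝ) ≤ t := le_of_lt ht.1
    have hl1 := hl0 t h0t
    have hb1 := hbub t h0t
    have h1 : 0 ≤ (-(b t) - q) * R' t := mul_nonneg (by linarith) (by linarith)
    have h2 : 0 ≤ (l t) ^ 2 * (R' t) ^ 2 := mul_nonneg (sq_nonneg _) (sq_nonneg _)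
    have h3 : q * M ≤ q * R' t := by nlinarith
    nlinarith
  -- both solve the clamped ODE; use uniqueness
  have hfR' : ∀ t ∈ Ioc (0:ℝ) T, HasDerivWithinAt R' (w t (R' t)) (Iic t) t := by
    intro t ht
    have htIcc : t ∈ Icc (0:ℝ) T := ⟨le_of_lt ht.1, ht.2⟩
    have h1 : HasDerivWithinAt R' (w t (R' t)) (Icc 0 T) t := by
      rw [hworig R' hR'ge hR'le t htIcc]
      exact hR'd t htIcc
    apply h1.mono_of_mem_nhdsWithin
    exact mem_nhdsWithin.mpr ⟨Ioi 0, isOpen_Ioi, ht.1,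
      fun x hx => ⟨le_of_lt hx.1, le_trans hx.2 ht.2⟩⟩
  have hfR : ∀ t ∈ Ioc (0:ℝ) T, HasDerivWithinAt R (w t (R t)) (Iic t) t := by
    intro t ht
    have htIcc : t ∈ Icc (0:ℝ) T := ⟨le_of_lt ht.1, ht.2⟩
    apply (hRd t htIcc).mono_of_mem_nhdsWithin
    exact mem_nhdsWithin.mpr ⟨Ioi 0, isOpen_Ioi, ht.1,
      fun x hx => ⟨le_of_lt hx.1, le_trans hx.2 ht.2⟩⟩
  exact ODE_solution_unique_of_mem_Icc_left (v := w) (s := fun _ => univ) (K := K)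
    (fun t _ => (hK t).lipschitzOnWith) hR'cont hfR' (fun _ _ => mem_univ _)
    hRcont hfR (fun _ _ => mem_univ _) (by rw [hR'T, hRT])
end

section
/- Suppose p > 0 and 0 < α < 1. Then for every T > 0 the backward Riccati equation Ṙ(t) − l(t)²·R(t)² + 2·b(t)·R(t) + β(1−β) = 0 for t ∈ [0,T], with terminal condition R(T) = 0, has a unique solution R : [0,T] → ℝ satisfying R(t) ≥ b(t)/l(t)² for all t ∈ [0,T]. -/
open Set Filter Topology

lemma barrier_aux_s1 {a T : ℝ} {f g : ℝ → ℝ}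
    (hfc : ContinuousOn f (Set.Icc a T))
    (hgc : ContinuousOn g (Set.Icc a T))
    (hgm : MonotoneOn g (Set.Icc a T))
    (hfT : g T ≤ f T)
    (hder : ∀ t ∈ Set.Icc a T, f t = g t →
      ∃ d, d < 0 ∧ HasDerivWithinAt f d (Set.Icc a T) t) :
    ∀ t ∈ Set.Icc a T, g t ≤ f t := by
  by_contra hcon
  push_neg at hcon
  obtain ⟨t₁, ht₁, hflt⟩ := hcon
  set h : ℝ → ℝ := fun s => f s - g s with hh
  have hsub : Icc t₁ T ⊆ Icc a T := Icc_subset_Icc ht₁.1 le_rfl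
  have hhc : ContinuousOn h (Icc t₁ T) := (hfc.sub hgc).mono hsub
  have hht₁ : h t₁ < 0 := by simp [hh]; linarith
  have hhT : 0 ≤ h T := by simp [hh]; linarith
  -- the touching set
  set S : Set ℝ := Icc t₁ T ∩ h ⁻¹' {0} with hS
  have hSne : S.Nonempty := by
    have h0 : (0:ℝ) ∈ Icc (h t₁) (h T) := ⟨hht₁.le, hhT⟩
    obtain ⟨u, hu, hu0⟩ := intermediate_value_Icc ht₁.2 hhc h0
    exact ⟨u, hu, by simpa using hu0⟩
  have hScl : IsClosed S := hhc.preimage_isClosed_of_isClosed isClosed_Icc isClosed_singleton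
  have hSbdd : BddBelow S := ⟨t₁, fun x hx => hx.1.1⟩
  set t₂ : ℝ := sInf S with ht₂
  have ht₂S : t₂ ∈ S := hScl.csInf_mem hSne hSbdd
  have ht₂mem : t₂ ∈ Icc a T := hsub ht₂S.1
  have hft₂ : f t₂ = g t₂ := by
    have : h t₂ = 0 := ht₂S.2
    simpa [hh, sub_eq_zero] using this
  have ht₁lt : t₁ < t₂ := by
    rcases lt_or_eq_of_le ht₂S.1.1 with h' | h'
    · exact h'
    · exfalso; rw [← h'] at hft₂; rw [hft₂] at hflt; exact lt_irrefl _ hflt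
  -- f < g strictly before t₂
  have hneg : ∀ s ∈ Ico t₁ t₂, h s < 0 := by
    intro s hs
    by_contra hge
    push_neg at hge
    have hsT : s ≤ T := hs.2.le.trans ht₂S.1.2
    have h0 : (0:ℝ) ∈ Icc (h t₁) (h s) := ⟨hht₁.le, hge⟩
    obtain ⟨u, hu, hu0⟩ := intermediate_value_Icc hs.1 (hhc.mono (Icc_subset_Icc le_rfl hsT)) h0
    have huS : u ∈ S := ⟨⟨hu.1, hu.2.trans hsT⟩, by simpa using hu0⟩
    have : t₂ ≤ u := csInf_le hSbdd huS
    have : t₂ ≤ s := this.trans hu.2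
    exact absurd hs.2 (not_lt.mpr this)
  obtain ⟨d, hd, hdd⟩ := hder t₂ ht₂mem hft₂
  rw [hasDerivWithinAt_iff_tendsto_slope] at hdd
  have hev : ∀ᶠ s in 𝓝[Icc a T \ {t₂}] t₂, slope f t₂ s < 0 :=
    hdd.eventually_lt_const hd
  have hmono : 𝓝[Ico t₁ t₂] t₂ ≤ 𝓝[Icc a T \ {t₂}] t₂ := by
    apply nhdsWithin_mono
    intro x hx
    exact ⟨⟨ht₁.1.trans hx.1, hx.2.le.trans ht₂mem.2⟩, ne_of_lt hx.2⟩
  have hnebot : (𝓝[Ico t₁ t₂] t₂).NeBot := by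
    rw [← mem_closure_iff_nhdsWithin_neBot, closure_Ico (ne_of_lt ht₁lt)]
    exact ⟨ht₁lt.le, le_rfl⟩
  have hev2 : ∀ᶠ s in 𝓝[Ico t₁ t₂] t₂, slope f t₂ s < 0 ∧ s ∈ Ico t₁ t₂ :=
    (hev.filter_mono hmono).and self_mem_nhdsWithin
  obtain ⟨s, hs1, hs2⟩ := hev2.exists
  -- but slope must be positive
  have hfs : f s < f t₂ := by
    have h1 : h s < 0 := hneg s hs2
    have h2 : g s ≤ g t₂ := hgm (hsub ⟨hs2.1, hs2.2.le.trans ht₂S.1.2⟩) ht₂mem hs2.2.le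
    simp only [hh] at h1; linarith
  have : 0 < slope f t₂ s := by
    rw [slope_def_field]
    exact div_pos_of_neg_of_neg (by linarith) (by linarith [hs2.2])
  linarith


set_option maxHeartbeats 1000000 in
/-- Lemma 2.1 (iii): for `p > 0` and `0 < α < 1`, the backward Riccati equation
`Ṙ(t) − l(t)²·R(t)² + 2·b(t)·R(t) + β(1−β) = 0` on `[0,T]` with `R(T) = 0`
has a unique solution satisfying `R(t) ≥ b(t)/l(t)²` on `[0,T]`. -/
theorem stmt_1 (p q α β : ℝ) (hq : 0 < q) (hp : 0 < p)
    (hα0 : 0 < α) (hα1 : α < 1) (hαβ : 1 / α + 1 / β = 1)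
    (l b : ℝ → ℝ)
    (hl : ∀ t : ℝ, l t = p * (1 - 2 * p * q / ((2 * q + p) ^ 2 * Real.exp (2 * q * t) - p ^ 2)))
    (hb : ∀ t : ℝ, b t = -(p + q) + β * l t)
    (T : ℝ) (hT : 0 < T) :
    ∃ R : ℝ → ℝ,
      ((∀ t ∈ Set.Icc (0 : ℝ) T,
          HasDerivWithinAt R ((l t) ^ 2 * (R t) ^ 2 - 2 * b t * R t - β * (1 - β))
            (Set.Icc (0 : ℝ) T) t) ∧
        R T = 0 ∧ (∀ t ∈ Set.Icc (0 : ℝ) T, b t / (l t) ^ 2 ≤ R t)) ∧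
      (∀ R' : ℝ → ℝ,
        ((∀ t ∈ Set.Icc (0 : ℝ) T,
            HasDerivWithinAt R' ((l t) ^ 2 * (R' t) ^ 2 - 2 * b t * R' t - β * (1 - β))
              (Set.Icc (0 : ℝ) T) t) ∧
          R' T = 0 ∧ (∀ t ∈ Set.Icc (0 : ℝ) T, b t / (l t) ^ 2 ≤ R' t)) →
        ∀ t ∈ Set.Icc (0 : ℝ) T, R' t = R t) := by
  -- β is negative
  have hβ : β < 0 := by
    have h1 : 1 < 1/α := by rw [lt_div_iff₀ hα0]; linarith
    exact one_div_neg.mp (by linarith)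
  have hββ : β * (1 - β) < 0 := mul_neg_of_neg_of_pos hβ (by linarith)
  -- facts about the denominator
  have hD : ∀ t : ℝ, 0 ≤ t → 2*p*q < (2*q+p)^2 * Real.exp (2*q*t) - p^2 := by
    intro t ht
    have he : 1 ≤ Real.exp (2*q*t) := Real.one_le_exp (by positivity)
    nlinarith [sq_nonneg (2*q+p), mul_pos hq hq, mul_pos hp hq]
  have hDpos : ∀ t : ℝ, 0 ≤ t → 0 < (2*q+p)^2 * Real.exp (2*q*t) - p^2 := by
    intro t ht
    have := hD t ht
    nlinarith [mul_pos (mul_pos two_pos hp) hq]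
  -- facts about l
  have hlpos : ∀ t : ℝ, 0 ≤ t → 0 < l t := by
    intro t ht
    rw [hl t]
    have h2 : 2*p*q / ((2*q+p)^2 * Real.exp (2*q*t) - p^2) < 1 :=
      (div_lt_one (hDpos t ht)).mpr (hD t ht)
    have : (2:ℝ)*p*q = 2 * p * q := by ring
    nlinarith
  have hlle : ∀ t : ℝ, 0 ≤ t → l t ≤ p := by
    intro t ht
    rw [hl t]
    have h2 : 0 ≤ 2*p*q / ((2*q+p)^2 * Real.exp (2*q*t) - p^2) :=
      div_nonneg (by positivity) (hDpos t ht).le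
    nlinarith
  have hlmono : ∀ s t : ℝ, 0 ≤ s → s ≤ t → l s ≤ l t := by
    intro s t hs hst
    rw [hl s, hl t]
    have hDs := hDpos s hs
    have hDle : (2*q+p)^2 * Real.exp (2*q*s) - p^2 ≤ (2*q+p)^2 * Real.exp (2*q*t) - p^2 := by
      have : Real.exp (2*q*s) ≤ Real.exp (2*q*t) := Real.exp_le_exp.mpr (by nlinarith)
      nlinarith [sq_nonneg (2*q+p)]
    have hdiv : 2*p*q / ((2*q+p)^2 * Real.exp (2*q*t) - p^2)
        ≤ 2*p*q / ((2*q+p)^2 * Real.exp (2*q*s) - p^2) := by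
      gcongr
    nlinarith
  -- facts about b
  have hbneg : ∀ t : ℝ, 0 ≤ t → b t < 0 := by
    intro t ht
    rw [hb t]
    have := mul_neg_of_neg_of_pos hβ (hlpos t ht)
    linarith
  have hblo : ∀ t : ℝ, 0 ≤ t → -(p+q) + β*p ≤ b t := by
    intro t ht
    rw [hb t]
    have h1 : β * (p - l t) ≤ 0 :=
      mul_nonpos_of_nonpos_of_nonneg hβ.le (by linarith [hlle t ht])
    nlinarith
  -- the barrier φ = b / l²
  obtain ⟨φ, hφ⟩ : ∃ φ : ℝ → ℝ, φ = fun t => b t / (l t)^2 := ⟨_, rfl⟩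
  have hφneg : ∀ t : ℝ, 0 ≤ t → φ t < 0 := by
    intro t ht
    rw [hφ]
    exact div_neg_of_neg_of_pos (hbneg t ht) (pow_pos (hlpos t ht) 2)
  have hφmono : ∀ s t : ℝ, 0 ≤ s → s ≤ t → φ s ≤ φ t := by
    intro s t hs hst
    have hls := hlpos s hs
    have hlt := hlpos t (hs.trans hst)
    have hll := hlmono s t hs hst
    simp only [hφ]
    rw [div_le_div_iff₀ (pow_pos hls 2) (pow_pos hlt 2)]
    rw [hb s, hb t]
    have h1 : 0 ≤ (p+q) * ((l t) - (l s)) * ((l t) + (l s)) :=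
      mul_nonneg (mul_nonneg (by linarith) (by linarith)) (by linarith)
    have h2 : 0 ≤ (-β) * (l s) * (l t) * ((l t) - (l s)) := by
      apply mul_nonneg
      apply mul_nonneg
      apply mul_nonneg (by linarith) hls.le
      exact hlt.le
      linarith
    nlinarith [h1, h2]
  -- the clamp function
  obtain ⟨m, hm⟩ : ∃ m : ℝ, m = φ 0 := ⟨_, rfl⟩
  have hmneg : m < 0 := by rw [hm]; exact hφneg 0 le_rfl
  have hmle : ∀ t : ℝ, 0 ≤ t → m ≤ φ t := fun t ht => by
    rw [hm]; exact hφmono 0 t le_rfl ht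
  obtain ⟨c, hc⟩ : ∃ c : ℝ → ℝ, c = fun x => max m (min x 0) := ⟨_, rfl⟩
  have hcge : ∀ x, m ≤ c x := fun x => by rw [hc]; exact le_max_left _ _
  have hcle : ∀ x, c x ≤ 0 := fun x => by rw [hc]; exact max_le hmneg.le (min_le_right _ _)
  have hceq : ∀ x, m ≤ x → x ≤ 0 → c x = x := by
    intro x h1 h2
    simp only [hc]
    rw [min_eq_left h2, max_eq_right h1]
  have hc0 : c 0 = 0 := hceq 0 hmneg.le le_rfl
  have hclip : ∀ x y : ℝ, |c x - c y| ≤ |x - y| := by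
    intro x y
    simp only [hc]
    rw [max_comm m (min x 0), max_comm m (min y 0)]
    calc |max (min x 0) m - max (min y 0) m| ≤ |min x 0 - min y 0| :=
          abs_max_sub_max_le_abs _ _ _
      _ ≤ max |x - y| |(0:ℝ) - 0| := abs_min_sub_min_le_max _ _ _ _
      _ = |x - y| := by simp
  -- the truncated vector field
  obtain ⟨w, hw⟩ : ∃ w : ℝ → ℝ → ℝ,
      w = fun t x => (l t)^2 * (c x)^2 - 2 * b t * (c x) - β*(1-β) := ⟨_, rfl⟩
  -- sign facts
  have hw0 : ∀ t : ℝ, 0 ≤ t → 0 < w t 0 := by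
    intro t ht
    simp only [hw, hc0]
    nlinarith
  have hwφ : ∀ t : ℝ, 0 ≤ t → w t (φ t) < 0 := by
    intro t ht
    have hlt := hlpos t ht
    have hcφ : c (φ t) = φ t := hceq _ (hmle t ht) (hφneg t ht).le
    simp only [hw, hcφ]
    have hφval : φ t = b t / (l t)^2 := by rw [hφ]
    have key : ((l t)^2 * (φ t)^2 - 2 * b t * (φ t) - β*(1-β)) * (l t)^2
        = -((b t)^2 + β*(1-β)*(l t)^2) := by
      rw [hφval]
      field_simp
      ring
    have hnum : 0 < (b t)^2 + β*(1-β)*(l t)^2 := by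
      rw [hb t]
      have h2 : 0 < (-β) * (l t) * (2*(p+q) - l t) :=
        mul_pos (mul_pos (by linarith) hlt) (by linarith [hlle t ht])
      nlinarith [sq_nonneg (p+q)]
    nlinarith [pow_pos hlt 2]
  -- continuity
  have hlcont : ContinuousOn l (Set.Icc 0 T) := by
    have hc1 : ContinuousOn (fun t : ℝ => p * (1 - 2*p*q /
        ((2*q+p)^2 * Real.exp (2*q*t) - p^2))) (Set.Icc 0 T) := by
      apply ContinuousOn.mul continuousOn_const
      apply ContinuousOn.sub continuousOn_const
      apply ContinuousOn.div continuousOn_const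
      · exact ((continuous_const.mul (Real.continuous_exp.comp
          (continuous_const.mul continuous_id))).sub continuous_const).continuousOn
      · intro t ht
        exact ne_of_gt (hDpos t ht.1)
    apply hc1.congr
    intro t ht
    rw [hl t]
  have hbcont : ContinuousOn b (Set.Icc 0 T) := by
    apply ((continuousOn_const (c := -(p+q))).add ((continuousOn_const (c := β)).mul hlcont)).congr
    intro t ht
    rw [hb t]
    rfl
  have hφcont : ContinuousOn φ (Set.Icc 0 T) := by
    rw [hφ]
    apply hbcont.div (hlcont.pow 2)
    intro t ht
    exact ne_of_gt (pow_pos (hlpos t ht.1) 2)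
  -- constants
  obtain ⟨Blo, hBlo⟩ : ∃ x : ℝ, x = -(p+q) + β*p := ⟨_, rfl⟩
  have hBloneg : Blo < 0 := by
    have := mul_neg_of_neg_of_pos hβ hp
    rw [hBlo]; linarith
  have hbloB : ∀ t : ℝ, 0 ≤ t → Blo ≤ b t := fun t ht => by rw [hBlo]; exact hblo t ht
  obtain ⟨C₀, hC₀⟩ : ∃ x : ℝ, x = p^2*m^2 + 2*(Blo*m) + (-(β*(1-β))) := ⟨_, rfl⟩
  have hBlom : 0 ≤ Blo * m := by
    have := mul_nonneg (neg_nonneg.mpr hBloneg.le) (neg_nonneg.mpr hmneg.le)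
    nlinarith
  have hC₀pos : 0 < C₀ := by
    have e1 : 0 ≤ p^2*m^2 := by positivity
    rw [hC₀]; linarith [hBlom, hββ, e1]
  obtain ⟨K0, hK0⟩ : ∃ x : ℝ, x = 2*p^2*(-m) + 2*(-Blo) := ⟨_, rfl⟩
  have hK0nn : 0 ≤ K0 := by
    have e1 : 0 ≤ p^2*(-m) := mul_nonneg (sq_nonneg p) (by linarith)
    rw [hK0]; linarith
  -- bound for the truncated field
  have hwbound : ∀ t : ℝ, 0 ≤ t → ∀ x : ℝ, |w t x| ≤ C₀ := by
    intro t ht x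
    have h1 := hcge x
    have h2 := hcle x
    have hl1 := hlpos t ht
    have hl2 := hlle t ht
    have hb1 := hbneg t ht
    have hb2 := hbloB t ht
    have p1 : 0 ≤ (b t - Blo) * (-(c x)) := mul_nonneg (by linarith) (by linarith)
    have p2 : 0 ≤ (-Blo) * (c x - m) := mul_nonneg (by linarith) (by linarith)
    have p3 : (c x)^2 ≤ m^2 := by nlinarith
    have p4 : 0 ≤ b t * c x := by
      have := mul_nonneg (neg_nonneg.mpr hb1.le) (neg_nonneg.mpr h2)
      nlinarith
    have p5 : (l t)^2 * (c x)^2 ≤ p^2 * m^2 := by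
      have e1 : (l t)^2 ≤ p^2 := by nlinarith
      exact mul_le_mul e1 p3 (sq_nonneg (c x)) (sq_nonneg p)
    have p6 : 0 ≤ (l t)^2 * (c x)^2 := by positivity
    rw [abs_le]
    constructor
    · simp only [hw]; nlinarith
    · simp only [hw]; nlinarith
  -- Lipschitz bound for the truncated field
  have hwlip : ∀ t : ℝ, 0 ≤ t → ∀ x y : ℝ, |w t x - w t y| ≤ K0 * |x - y| := by
    intro t ht x y
    have key : w t x - w t y = (c x - c y) * ((l t)^2 * (c x + c y) - 2 * b t) := by
      simp only [hw]; ring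
    rw [key, abs_mul]
    have hl1 := hlpos t ht
    have hl2 := hlle t ht
    have hb1 := hbneg t ht
    have hb2 := hbloB t ht
    have hcx1 := hcge x
    have hcx2 := hcle x
    have hcy1 := hcge y
    have hcy2 := hcle y
    have hl3 : (l t)^2 ≤ p^2 := by nlinarith
    have h2 : |(l t)^2 * (c x + c y) - 2 * b t| ≤ K0 := by
      rw [abs_le]
      have prodB : 0 ≤ (l t)^2 * (c x + c y - 2*m) := mul_nonneg (sq_nonneg _) (by linarith)
      have prodA : 0 ≤ (p^2 - (l t)^2) * (-(2*m)) := mul_nonneg (by linarith) (by linarith)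
      have prodC : (l t)^2 * (c x + c y) ≤ 0 :=
        mul_nonpos_of_nonneg_of_nonpos (sq_nonneg _) (by linarith)
      constructor
      · rw [hK0]; nlinarith
      · rw [hK0]; nlinarith [sq_nonneg p]
    calc |c x - c y| * |(l t)^2 * (c x + c y) - 2 * b t| ≤ |x - y| * K0 :=
          mul_le_mul (hclip x y) h2 (abs_nonneg _) (abs_nonneg _)
      _ = K0 * |x - y| := mul_comm _ _
  -- Picard–Lindelöf
  have hpl : IsPicardLindelof w (tmin := 0) (tmax := T) ⟨T, hT.le, le_rfl⟩ 0 (Real.toNNReal (C₀*T)) 0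
      (Real.toNNReal C₀) (Real.toNNReal K0) := by
    refine ⟨?_, ?_, ?_, ?_⟩
    · intro t ht
      apply LipschitzOnWith.of_dist_le_mul
      intro x _ y _
      rw [Real.dist_eq, Real.dist_eq, Real.coe_toNNReal _ hK0nn]
      exact hwlip t ht.1 x y
    · intro x _
      simp only [hw]
      exact (((hlcont.pow 2).mul continuousOn_const).sub
        ((continuousOn_const.mul hbcont).mul continuousOn_const)).sub continuousOn_const
    · intro t ht x _
      rw [Real.norm_eq_abs, Real.coe_toNNReal _ hC₀pos.le]
      exact hwbound t ht.1 x
    · simp [Real.coe_toNNReal _ hC₀pos.le, Real.coe_toNNReal _ (mul_pos hC₀pos hT).le, max_eq_right hT.le]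
  obtain ⟨R, hR0, hRd⟩ := hpl.exists_eq_forall_mem_Icc_hasDerivWithinAt₀
  replace hR0 : R T = 0 := hR0
  have hRc : ContinuousOn R (Set.Icc 0 T) := fun t ht => (hRd t ht).continuousWithinAt
  -- upper bound : R ≤ 0 on [0,T]
  have hub : ∀ t ∈ Set.Icc (0:ℝ) T, R t ≤ 0 := by
    have hbar := barrier_aux_s1 (T := T) (f := fun s => -R s) (g := fun _ => (0:ℝ))
      hRc.neg continuousOn_const monotoneOn_const (by simp [hR0]) ?_
    · intro t ht
      have := hbar t ht
      simpa using this
    · intro t ht htouch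
      have h2 : R t = 0 := by simpa [neg_eq_zero] using htouch
      refine ⟨-(w t 0), by linarith [hw0 t ht.1], ?_⟩
      have h1 := (hRd t ht).neg
      rwa [h2] at h1
  -- lower bound : φ ≤ R on [0,T]
  have hlb : ∀ t ∈ Set.Icc (0:ℝ) T, φ t ≤ R t := by
    apply barrier_aux_s1 hRc hφcont (fun s hs t ht hst => hφmono s t hs.1 hst)
      (by rw [hR0]; exact (hφneg T hT.le).le)
    intro t ht htouch
    exact ⟨w t (R t), by rw [htouch]; exact hwφ t ht.1, hRd t ht⟩
  -- R solves the original (untruncated) equation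
  have hfix : ∀ t ∈ Set.Icc (0:ℝ) T,
      w t (R t) = (l t)^2*(R t)^2 - 2*b t*R t - β*(1-β) := by
    intro t ht
    have h1 : c (R t) = R t := hceq _ ((hmle t ht.1).trans (hlb t ht)) (hub t ht)
    simp only [hw, h1]
  have hRode : ∀ t ∈ Set.Icc (0:ℝ) T,
      HasDerivWithinAt R ((l t)^2*(R t)^2 - 2*b t*R t - β*(1-β)) (Set.Icc (0:ℝ) T) t := by
    intro t ht
    have := hRd t ht
    rwa [hfix t ht] at this
  have hφlb : ∀ t ∈ Set.Icc (0:ℝ) T, b t / (l t)^2 ≤ R t := by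
    intro t ht
    have := hlb t ht
    rwa [hφ] at this
  refine ⟨R, ⟨hRode, hR0, hφlb⟩, ?_⟩
  -- uniqueness
  intro R' hR'
  obtain ⟨hR'd, hR'T, -⟩ := hR'
  have hR'c : ContinuousOn R' (Set.Icc 0 T) := fun t ht => (hR'd t ht).continuousWithinAt
  obtain ⟨M₁, hM₁⟩ := isCompact_Icc.exists_bound_of_continuousOn hRc
  obtain ⟨M₂, hM₂⟩ := isCompact_Icc.exists_bound_of_continuousOn hR'c
  obtain ⟨M, hM⟩ : ∃ x : ℝ, x = max M₁ M₂ := ⟨_, rfl⟩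
  have hMR : ∀ t ∈ Set.Icc (0:ℝ) T, |R t| ≤ M := by
    intro t ht
    have := hM₁ t ht
    rw [Real.norm_eq_abs] at this
    rw [hM]
    exact this.trans (le_max_left _ _)
  have hMR' : ∀ t ∈ Set.Icc (0:ℝ) T, |R' t| ≤ M := by
    intro t ht
    have := hM₂ t ht
    rw [Real.norm_eq_abs] at this
    rw [hM]
    exact this.trans (le_max_right _ _)
  have hM0 : 0 ≤ M := (abs_nonneg (R T)).trans (hMR T ⟨hT.le, le_rfl⟩)
  obtain ⟨τ, hτ⟩ : ∃ τ : ℝ → ℝ, τ = fun t => max 0 (min t T) := ⟨_, rfl⟩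
  have hτmem : ∀ t : ℝ, 0 ≤ τ t ∧ τ t ≤ T := fun t => by
    rw [hτ]
    exact ⟨le_max_left _ _, max_le hT.le (min_le_right _ _)⟩
  have hτeq : ∀ t ∈ Set.Ioc (0:ℝ) T, τ t = t := by
    intro t ht
    rw [hτ]
    simp only
    rw [min_eq_left ht.2, max_eq_right ht.1.le]
  obtain ⟨vb, hvb⟩ : ∃ vb : ℝ → ℝ → ℝ,
      vb = fun t x => (l (τ t))^2 * x^2 - 2*b (τ t)*x - β*(1-β) := ⟨_, rfl⟩
  obtain ⟨K1, hK1⟩ : ∃ x : ℝ, x = 2*p^2*M + 2*(-Blo) := ⟨_, rfl⟩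
  have hK1nn : 0 ≤ K1 := by
    have e1 : 0 ≤ p^2*M := mul_nonneg (sq_nonneg p) hM0
    rw [hK1]; linarith
  have hvlip : ∀ t : ℝ, LipschitzOnWith (Real.toNNReal K1) (vb t) (Metric.closedBall 0 M) := by
    intro t
    apply LipschitzOnWith.of_dist_le_mul
    intro x hx y hy
    rw [Real.dist_eq, Real.dist_eq, Real.coe_toNNReal _ hK1nn]
    rw [Metric.mem_closedBall, Real.dist_eq, sub_zero] at hx hy
    obtain ⟨hx1, hx2⟩ := abs_le.mp hx
    obtain ⟨hy1, hy2⟩ := abs_le.mp hy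
    have h0 := (hτmem t).1
    have h1 := (hτmem t).2
    have hl1 := hlpos _ h0
    have hl2 := hlle _ h0
    have hl3 : (l (τ t))^2 ≤ p^2 := by nlinarith
    have hb1 := hbneg _ h0
    have hb2 := hbloB _ h0
    have key : vb t x - vb t y = (x - y) * ((l (τ t))^2*(x+y) - 2*b (τ t)) := by
      simp only [hvb]; ring
    rw [key, abs_mul]
    have h2 : |(l (τ t))^2*(x+y) - 2*b (τ t)| ≤ K1 := by
      rw [abs_le]
      have e1 : 0 ≤ (l (τ t))^2 * (x + y + 2*M) := mul_nonneg (sq_nonneg _) (by linarith)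
      have e2 : 0 ≤ (p^2 - (l (τ t))^2) * (2*M) := mul_nonneg (by linarith) (by linarith)
      have e3 : (l (τ t))^2 * (x + y) ≤ (l (τ t))^2 * (2*M) :=
        mul_le_mul_of_nonneg_left (by linarith) (sq_nonneg _)
      have e4 : (l (τ t))^2 * (2*M) ≤ p^2 * (2*M) :=
        mul_le_mul_of_nonneg_right hl3 (by linarith)
      constructor
      · rw [hK1]; nlinarith
      · rw [hK1]; nlinarith
    calc |x - y| * |(l (τ t))^2*(x+y) - 2*b (τ t)| ≤ |x - y| * K1 :=
          mul_le_mul_of_nonneg_left h2 (abs_nonneg _)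
      _ = K1 * |x - y| := mul_comm _ _
  have hmemIic : ∀ t ∈ Set.Ioc (0:ℝ) T, Set.Icc (0:ℝ) T ∈ nhdsWithin t (Set.Iic t) := by
    intro t ht
    rw [mem_nhdsWithin]
    exact ⟨Set.Ioi 0, isOpen_Ioi, ht.1, fun x hx => ⟨hx.1.le, hx.2.trans ht.2⟩⟩
  have hder' : ∀ F : ℝ → ℝ, (∀ t ∈ Set.Icc (0:ℝ) T,
        HasDerivWithinAt F ((l t)^2*(F t)^2 - 2*b t*F t - β*(1-β)) (Set.Icc (0:ℝ) T) t) →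
      ∀ t ∈ Set.Ioc (0:ℝ) T, HasDerivWithinAt F (vb t (F t)) (Set.Iic t) t := by
    intro F hF t ht
    have h1 := (hF t ⟨ht.1.le, ht.2⟩).mono_of_mem_nhdsWithin (hmemIic t ht)
    have h2 : vb t (F t) = (l t)^2*(F t)^2 - 2*b t*F t - β*(1-β) := by
      simp only [hvb, hτeq t ht]
    rwa [h2]
  have hball : ∀ (F : ℝ → ℝ), (∀ t ∈ Set.Icc (0:ℝ) T, |F t| ≤ M) →
      ∀ t ∈ Set.Ioc (0:ℝ) T, F t ∈ Metric.closedBall (0:ℝ) M := by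
    intro F hF t ht
    rw [Metric.mem_closedBall, Real.dist_eq, sub_zero]
    exact hF t ⟨ht.1.le, ht.2⟩
  have heq := ODE_solution_unique_of_mem_Icc_left (fun t _ => hvlip t)
    hR'c (hder' R' hR'd) (hball R' hMR') hRc (hder' R hRode) (hball R hMR)
    (by rw [hR'T, hR0])
  exact fun t ht => heq ht
end

section
/- Suppose p > 0 and 0 < α < 1 (so that β < 0). Then for every t ≥ 0 the function t ↦ b(t)/l(t)² is differentiable with derivative (d/dt)[b(t)/l(t)²] = ((2(p+q) − β·l(t))/l(t)³)·l′(t), and this derivative is strictly positive; in particular t ↦ b(t)/l(t)² is strictly increasing on [0,∞). -/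
/-!
Writing `b = -(p + q) + β l`, the quotient rule gives
`(b / l²)' = (2(p + q) - β l) / l³ · l'`. For `0 < α < 1` the conjugate exponent `β` is negative,
so the first factor is positive as soon as `l > 0`. With `D(t) = (2q + p)² e^{2qt} - p²` we have
`l = p (1 - 2pq / D)` and `D(t) > 2pq` for `t ≥ 0`, so `l > 0`, while
`l' = 4p²q²(2q + p)² e^{2qt} / D² > 0`.
-/

open Real

lemma neg_of_one_div_add_one_div_eq_one {α β : ℝ} (hα0 : 0 < α) (hα1 : α < 1)
    (hαβ : 1 / α + 1 / β = 1) : β < 0 := by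
  have : 1 < 1 / α := one_lt_one_div hα0 hα1
  exact one_div_neg.mp (by linarith)

lemma HasDerivAt.affine_div_sq {f : ℝ → ℝ} {f' c β t : ℝ} (hf : HasDerivAt f f' t)
    (ht : f t ≠ 0) :
    HasDerivAt (fun s => (-c + β * f s) / f s ^ 2) ((2 * c - β * f t) / f t ^ 3 * f') t := by
  refine (((hf.const_mul β).const_add (-c)).fun_div (hf.fun_pow 2)
    (pow_ne_zero 2 ht)).congr_deriv ?_
  field_simp
  ring

noncomputable def lDenom (p q t : ℝ) : ℝ := (2 * q + p) ^ 2 * exp (2 * q * t) - p ^ 2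

section lDenom

variable {p q t : ℝ}

lemma two_mul_mul_lt_lDenom (hp : 0 ≤ p) (hq : 0 < q) (ht : 0 ≤ t) :
    2 * p * q < lDenom p q t := by
  have hexp : 1 ≤ exp (2 * q * t) := one_le_exp (by positivity)
  have : (2 * q + p) ^ 2 ≤ (2 * q + p) ^ 2 * exp (2 * q * t) :=
    le_mul_of_one_le_right (by positivity) hexp
  unfold lDenom
  nlinarith

lemma lDenom_pos (hp : 0 ≤ p) (hq : 0 < q) (ht : 0 ≤ t) : 0 < lDenom p q t :=
  (by positivity : 0 ≤ 2 * p * q).trans_lt (two_mul_mul_lt_lDenom hp hq ht)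

lemma hasDerivAt_lDenom :
    HasDerivAt (lDenom p q) ((2 * q + p) ^ 2 * (exp (2 * q * t) * (2 * q))) t := by
  have hexp : HasDerivAt (fun s => exp (2 * q * s)) (exp (2 * q * t) * (2 * q)) t := by
    simpa using ((hasDerivAt_id t).const_mul (2 * q)).exp
  exact (hexp.const_mul _).sub_const _

lemma hasDerivAt_mul_one_sub_div_lDenom (ht : lDenom p q t ≠ 0) :
    HasDerivAt (fun s => p * (1 - 2 * p * q / lDenom p q s))
      (4 * p ^ 2 * q ^ 2 * (2 * q + p) ^ 2 * exp (2 * q * t) / lDenom p q t ^ 2) t := by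
  refine (((hasDerivAt_const t 1).fun_sub
    ((hasDerivAt_const t (2 * p * q)).fun_div hasDerivAt_lDenom ht)).const_mul p).congr_deriv ?_
  field_simp
  ring

lemma mul_one_sub_div_lDenom_pos (hp : 0 < p) (hq : 0 < q) (ht : 0 ≤ t) :
    0 < p * (1 - 2 * p * q / lDenom p q t) := by
  have : 2 * p * q / lDenom p q t < 1 :=
    (div_lt_one (lDenom_pos hp.le hq ht)).mpr (two_mul_mul_lt_lDenom hp.le hq ht)
  exact mul_pos hp (by linarith)

end lDenom

/-- For `p > 0` and `0 < α < 1` (so `β < 0`), the function `t ↦ b(t)/l(t)²` is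
differentiable with derivative `((2(p+q) − β·l(t))/l(t)³)·l′(t)`, which is strictly
positive; in particular `t ↦ b(t)/l(t)²` is strictly increasing on `[0,∞)`. -/
theorem stmt_3 (p q α β : ℝ) (hq : 0 < q) (hp : 0 < p)
    (hα0 : 0 < α) (hα1 : α < 1) (hαβ : 1 / α + 1 / β = 1)
    (l b : ℝ → ℝ)
    (hl : ∀ t : ℝ, l t = p * (1 - 2 * p * q / ((2 * q + p) ^ 2 * Real.exp (2 * q * t) - p ^ 2)))
    (hb : ∀ t : ℝ, b t = -(p + q) + β * l t) :
    (∀ t : ℝ, 0 ≤ t →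
      HasDerivAt (fun s => b s / (l s) ^ 2)
        ((2 * (p + q) - β * l t) / (l t) ^ 3 * deriv l t) t ∧
      0 < (2 * (p + q) - β * l t) / (l t) ^ 3 * deriv l t) ∧
    StrictMonoOn (fun s => b s / (l s) ^ 2) (Set.Ici (0 : ℝ)) := by
  have hβ : β < 0 := neg_of_one_div_add_one_div_eq_one hα0 hα1 hαβ
  have hlfun : l = fun s => p * (1 - 2 * p * q / lDenom p q s) := funext hl
  have hbfun : (fun s => b s / l s ^ 2) = fun s => (-(p + q) + β * l s) / l s ^ 2 := by
    simp only [hb]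
  have hderiv : ∀ t : ℝ, 0 ≤ t →
      HasDerivAt (fun s => b s / (l s) ^ 2)
        ((2 * (p + q) - β * l t) / (l t) ^ 3 * deriv l t) t ∧
      0 < (2 * (p + q) - β * l t) / (l t) ^ 3 * deriv l t := by
    intro t ht
    have hlpos : 0 < l t := hlfun ▸ mul_one_sub_div_lDenom_pos hp hq ht
    have hl' := hlfun ▸ hasDerivAt_mul_one_sub_div_lDenom (lDenom_pos hp.le hq ht).ne'
    have hl'pos : 0 < deriv l t := by
      rw [hl'.deriv]
      have := lDenom_pos hp.le hq ht
      positivity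
    rw [hbfun]
    refine ⟨hl'.differentiableAt.hasDerivAt.affine_div_sq hlpos.ne', ?_⟩
    exact mul_pos (div_pos (by nlinarith) (pow_pos hlpos 3)) hl'pos
  refine ⟨hderiv, strictMonoOn_of_deriv_pos (convex_Ici 0) ?_ ?_⟩
  · exact fun t ht => (hderiv t ht).1.continuousAt.continuousWithinAt
  · intro t ht
    rw [interior_Ici] at ht
    obtain ⟨hasDeriv, hpos⟩ := hderiv t ht.le
    exact hasDeriv.deriv ▸ hpos
end

section
/- For q > 0 and p ≥ 0, the function l satisfies 0 ≤ l(t) ≤ p for all t ≥ 0, l is nondecreasing on [0,∞) (strictly increasing if p > 0), and |l(t) − p| ≤ (p²/(2(p+q)))·e^{−2qt} for all t ≥ 0; in particular l(t) converges to p exponentially fast as t → ∞. -/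
/-!
In the variable `x = e^{2qt} ≥ 1` the function is `p (1 - 2pq / D(x))` with the increasing
denominator `D(x) = (2q+p)² x - p²`, and `D(1) = 4q(p+q) ≥ 2pq`, so it increases from
`p (1 - p/(2(p+q)))` towards `p`. The gap is `p - l = 2p²q / D(x)`, and
`p² D(x) - 4p²q(p+q) x = p⁴ (x - 1) ≥ 0` gives the bound `p²/(2(p+q)) · x⁻¹`.
-/

open Real Set

noncomputable def lOfExp (p q x : ℝ) : ℝ := p * (1 - 2 * p * q / ((2 * q + p) ^ 2 * x - p ^ 2))

section

variable {p q x : ℝ}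

lemma four_mul_le_denom (hx : 1 ≤ x) : 4 * q * (q + p) ≤ (2 * q + p) ^ 2 * x - p ^ 2 := by
  nlinarith [sq_nonneg (2 * q + p)]

lemma denom_pos (hq : 0 < q) (hp : 0 ≤ p) (hx : 1 ≤ x) : 0 < (2 * q + p) ^ 2 * x - p ^ 2 :=
  (by positivity : 0 < 4 * q * (q + p)).trans_le (four_mul_le_denom hx)

lemma lOfExp_mem_Icc (hq : 0 < q) (hp : 0 ≤ p) (hx : 1 ≤ x) : lOfExp p q x ∈ Icc 0 p := by
  have hD := denom_pos hq hp hx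
  have h0 : 0 ≤ 2 * p * q / ((2 * q + p) ^ 2 * x - p ^ 2) := by positivity
  have h1 : 2 * p * q / ((2 * q + p) ^ 2 * x - p ^ 2) ≤ 1 := by
    rw [div_le_one hD]; nlinarith [four_mul_le_denom (p := p) (q := q) hx]
  constructor
  · exact mul_nonneg hp (by linarith)
  · unfold lOfExp; nlinarith

lemma monotoneOn_lOfExp (hq : 0 < q) (hp : 0 ≤ p) : MonotoneOn (lOfExp p q) (Ici 1) := by
  intro x hx y _ hxy
  have := denom_pos hq hp hx
  unfold lOfExp
  gcongr

lemma strictMonoOn_lOfExp (hq : 0 < q) (hp : 0 < p) : StrictMonoOn (lOfExp p q) (Ici 1) := by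
  intro x hx y _ hxy
  have := denom_pos hq hp.le hx
  unfold lOfExp
  gcongr

lemma abs_lOfExp_sub_le (hq : 0 < q) (hp : 0 ≤ p) (hx : 1 ≤ x) :
    |lOfExp p q x - p| ≤ p ^ 2 / (2 * (p + q)) * x⁻¹ := by
  have hD := denom_pos hq hp hx
  have hgap : lOfExp p q x - p = -(2 * p ^ 2 * q / ((2 * q + p) ^ 2 * x - p ^ 2)) := by
    unfold lOfExp; field_simp; ring
  rw [hgap, abs_neg, abs_of_nonneg (by positivity), ← div_eq_mul_inv, div_div,
    div_le_div_iff₀ hD (by positivity)]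
  nlinarith [mul_nonneg (pow_nonneg hp 4) (sub_nonneg.2 hx)]

end

/-- For `q > 0` and `p ≥ 0`: `0 ≤ l(t) ≤ p` for all `t ≥ 0`, `l` is nondecreasing on
`[0,∞)` (strictly increasing if `p > 0`), and `|l(t) − p| ≤ (p²/(2(p+q)))·e^{−2qt}`
for all `t ≥ 0`; in particular `l(t) → p` exponentially fast as `t → ∞`. -/
theorem stmt_4 (p q : ℝ) (hq : 0 < q) (hp : 0 ≤ p)
    (l : ℝ → ℝ)
    (hl : ∀ t : ℝ, l t = p * (1 - 2 * p * q / ((2 * q + p) ^ 2 * Real.exp (2 * q * t) - p ^ 2))) :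
    (∀ t : ℝ, 0 ≤ t → 0 ≤ l t ∧ l t ≤ p) ∧
    MonotoneOn l (Set.Ici (0 : ℝ)) ∧
    (0 < p → StrictMonoOn l (Set.Ici (0 : ℝ))) ∧
    (∀ t : ℝ, 0 ≤ t → |l t - p| ≤ p ^ 2 / (2 * (p + q)) * Real.exp (-2 * q * t)) := by
  have hl' : l = lOfExp p q ∘ fun t ↦ exp (2 * q * t) := funext hl
  have hexp : StrictMono fun t ↦ exp (2 * q * t) :=
    exp_strictMono.comp (strictMono_mul_left_of_pos (by positivity))
  have hmaps : MapsTo (fun t ↦ exp (2 * q * t)) (Ici 0) (Ici 1) :=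
    fun t (ht : 0 ≤ t) ↦ one_le_exp (by positivity)
  subst hl'
  refine ⟨fun t ht ↦ lOfExp_mem_Icc hq hp (hmaps ht), ?_, ?_, fun t ht ↦ ?_⟩
  · exact (monotoneOn_lOfExp hq hp).comp (hexp.monotone.monotoneOn _) hmaps
  · exact fun hp ↦ (strictMonoOn_lOfExp hq hp).comp (hexp.strictMonoOn _) hmaps
  · rw [neg_mul, neg_mul, exp_neg]
    exact abs_lOfExp_sub_le hq hp (hmaps ht)
end

section
/- Let α ∈ (−∞,1) with α ≠ 0. For each T > 0 let R(·;T) denote the unique solution on [0,T] of the backward Riccati equation Ṙ(t) − l(t)²·R(t)² + 2·b(t)·R(t) + β(1−β) = 0, R(T) = 0, in the sense of Lemma 2.1 (the unique solution if p = 0; the unique nonnegative solution if α < 0; the unique solution with R(t) ≥ b(t)/l(t)² for all t if p > 0 and 0 < α < 1). Then: (i) sup over (t,T) ∈ Δ of |R(t;T)| is finite; (ii) R(t;T) → R̄ as t → ∞ and T − t → ∞, i.e. for every ε > 0 there exists N such that |R(t;T) − R̄| < ε whenever (t,T) ∈ Δ, t ≥ N and T − t ≥ N; (iii) for all δ, ε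 ∈ (0,∞) with δ + ε < 1, lim_{T→∞} sup_{δT ≤ t ≤ (1−ε)T} |R(t;T) − R̄| = 0. -/
open Set Filter

section AuxODElemmas

lemma stayBelow' {y f : ℝ → ℝ} {a b M : ℝ}
    (hy : ∀ s ∈ Set.Icc a b, HasDerivWithinAt y (f s) (Set.Icc a b) s)
    (h0 : y a ≤ M)
    (hf : ∀ s ∈ Set.Icc a b, M ≤ y s → f s < 0) :
    ∀ s ∈ Set.Icc a b, y s ≤ M := by
  have hcont : ContinuousOn y (Set.Icc a b) := fun s hs => (hy s hs).continuousWithinAt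
  by_contra hcon
  push_neg at hcon
  obtain ⟨s₀, hs₀, hys₀⟩ := hcon
  have hsub : Set.Icc a s₀ ⊆ Set.Icc a b := Set.Icc_subset_Icc le_rfl hs₀.2
  have hAne : (Set.Icc a s₀ ∩ y ⁻¹' Set.Iic M).Nonempty := ⟨a, ⟨le_rfl, hs₀.1⟩, h0⟩
  have hAbdd : BddAbove (Set.Icc a s₀ ∩ y ⁻¹' Set.Iic M) := ⟨s₀, fun x hx => hx.1.2⟩
  have hAcl : IsClosed (Set.Icc a s₀ ∩ y ⁻¹' Set.Iic M) :=
    (hcont.mono hsub).preimage_isClosed_of_isClosed isClosed_Icc isClosed_Iic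
  have hs₁A : sSup (Set.Icc a s₀ ∩ y ⁻¹' Set.Iic M) ∈ Set.Icc a s₀ ∩ y ⁻¹' Set.Iic M :=
    hAcl.csSup_mem hAne hAbdd
  set s₁ := sSup (Set.Icc a s₀ ∩ y ⁻¹' Set.Iic M) with hs₁def
  have hs₁b : s₁ ∈ Set.Icc a b := hsub hs₁A.1
  have hs₁M : y s₁ ≤ M := hs₁A.2
  have hs₁lt : s₁ < s₀ :=
    lt_of_le_of_ne hs₁A.1.2 fun h => absurd hys₀ (not_lt.2 (h ▸ hs₁M))
  have hmax : ∀ u ∈ Set.Ioo s₁ s₀, M < y u := by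
    intro u hu
    by_contra h
    push_neg at h
    have huA : u ∈ Set.Icc a s₀ ∩ y ⁻¹' Set.Iic M :=
      ⟨⟨hs₁A.1.1.trans hu.1.le, hu.2.le⟩, h⟩
    exact absurd (le_csSup hAbdd huA) (not_le.2 hu.1)
  have hanti : StrictAntiOn y (Set.Icc s₁ s₀) := by
    apply strictAntiOn_of_deriv_neg (convex_Icc _ _)
      (hcont.mono (Set.Icc_subset_Icc hs₁b.1 hs₀.2))
    intro u hu
    rw [interior_Icc] at hu
    have huab : u ∈ Set.Icc a b := ⟨hs₁b.1.trans hu.1.le, hu.2.le.trans hs₀.2⟩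
    have hder : HasDerivAt y (f u) u :=
      (hy u huab).hasDerivAt (Icc_mem_nhds (hs₁b.1.trans_lt hu.1) (hu.2.trans_le hs₀.2))
    rw [hder.deriv]
    exact hf u huab (hmax u hu).le
  have : y s₀ < y s₁ := hanti ⟨le_rfl, hs₁lt.le⟩ ⟨hs₁lt.le, le_rfl⟩ hs₁lt
  exact absurd hys₀ (not_lt.2 (this.le.trans hs₁M))

lemma stayAbove' {y f : ℝ → ℝ} {a b L : ℝ}
    (hy : ∀ s ∈ Set.Icc a b, HasDerivWithinAt y (f s) (Set.Icc a b) s)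
    (h0 : L ≤ y a)
    (hf : ∀ s ∈ Set.Icc a b, y s ≤ L → 0 < f s) :
    ∀ s ∈ Set.Icc a b, L ≤ y s := by
  have := stayBelow' (y := fun s => -y s) (f := fun s => -f s) (a := a) (b := b) (M := -L)
    (fun s hs => (hy s hs).neg) (show -y a ≤ -L by linarith)
    (fun s hs h => by
      have h' : y s ≤ L := by
        have h2 : -L ≤ -y s := h
        linarith
      have := hf s hs h'
      show -f s < 0
      linarith)
  intro s hs
  have h2 : -y s ≤ -L := this s hs
  linarith

lemma reachBelow' {y f : ℝ → ℝ} {a b U c : ℝ} (hab : a ≤ b) (hc : 0 < c)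
    (hy : ∀ s ∈ Set.Icc a b, HasDerivWithinAt y (f s) (Set.Icc a b) s)
    (hstart : y a - c * (b - a) < U)
    (hf : ∀ s ∈ Set.Icc a b, U ≤ y s → f s ≤ -c) :
    y b ≤ U := by
  have hcont : ContinuousOn y (Set.Icc a b) := fun s hs => (hy s hs).continuousWithinAt
  by_cases hex : ∃ s ∈ Set.Icc a b, y s ≤ U
  · obtain ⟨s₁, hs₁, hys₁⟩ := hex
    have hsub : Set.Icc s₁ b ⊆ Set.Icc a b := Set.Icc_subset_Icc hs₁.1 le_rfl
    have := stayBelow' (y := y) (f := f) (a := s₁) (b := b) (M := U)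
      (fun s hs => (hy s (hsub hs)).mono hsub) hys₁
      (fun s hs h => lt_of_le_of_lt (hf s (hsub hs) h) (by linarith))
    exact this b ⟨hs₁.2, le_rfl⟩
  · push_neg at hex
    exfalso
    have hanti : AntitoneOn (fun s => y s + c * s) (Set.Icc a b) := by
      apply antitoneOn_of_deriv_nonpos (convex_Icc _ _)
        (hcont.add (show ContinuousOn (fun s : ℝ => c * s) (Set.Icc a b) from
          Continuous.continuousOn (by continuity)))
      · intro u hu
        rw [interior_Icc] at hu
        have huab : u ∈ Set.Icc a b := Set.Ioo_subset_Icc_self hu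
        exact (((hy u huab).hasDerivAt (Icc_mem_nhds hu.1 hu.2)).add
          ((hasDerivAt_id u).const_mul c)).differentiableAt.differentiableWithinAt
      · intro u hu
        rw [interior_Icc] at hu
        have huab : u ∈ Set.Icc a b := Set.Ioo_subset_Icc_self hu
        have hder : HasDerivAt (fun s => y s + c * s) (f u + c) u := by
          have h := ((hy u huab).hasDerivAt (Icc_mem_nhds hu.1 hu.2)).add
            ((hasDerivAt_id u).const_mul c)
          simp only [mul_one] at h
          exact h
        show deriv (fun s => y s + c * s) u ≤ 0
        rw [hder.deriv]
        have := hf u huab (hex u huab).le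
        linarith
    have h1 : y b + c * b ≤ y a + c * a :=
      hanti ⟨le_rfl, hab⟩ ⟨hab, le_rfl⟩ hab
    have := hex b ⟨hab, le_rfl⟩
    nlinarith

lemma reachAbove' {y f : ℝ → ℝ} {a b L c : ℝ} (hab : a ≤ b) (hc : 0 < c)
    (hy : ∀ s ∈ Set.Icc a b, HasDerivWithinAt y (f s) (Set.Icc a b) s)
    (hstart : L < y a + c * (b - a))
    (hf : ∀ s ∈ Set.Icc a b, y s ≤ L → c ≤ f s) :
    L ≤ y b := by
  have := reachBelow' (y := fun s => -y s) (f := fun s => -f s) (a := a) (b := b) (U := -L)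
    (c := c) hab hc (fun s hs => (hy s hs).neg)
    (show -y a - c * (b - a) < -L by linarith)
    (fun s hs h => by
      have h' : y s ≤ L := by
        have h2 : -L ≤ -y s := h
        linarith
      have := hf s hs h'
      show -f s ≤ -c
      linarith)
  have h2 : -y b ≤ -L := this
  linarith

lemma conj_pos {a c : ℝ} (h : (a - 1) * (c - 1) = 1) (ha : a < 0) : 0 < c := by
  nlinarith [h]

lemma conj_neg {a c : ℝ} (h : (a - 1) * (c - 1) = 1) (h0 : 0 < a) (h1 : a < 1) : c < 0 := by
  nlinarith [h]

lemma conj_lt_one {a c : ℝ} (h : (a - 1) * (c - 1) = 1) (h1 : a < 1) : c < 1 := by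
  nlinarith [h]

end AuxODElemmas

set_option maxHeartbeats 2000000 in
/-- Proposition 3.1: asymptotic behaviour of the solution `R(·;T)` of the backward
Riccati equation `Ṙ − l²R² + 2bR + β(1−β) = 0`, `R(T) = 0`, in the sense of Lemma 2.1:
(i) boundedness on `Δ`; (ii) `R(t;T) → R̄` as `t → ∞`, `T − t → ∞`;
(iii) uniform convergence on `[δT, (1−ε)T]`. -/
theorem stmt_6 (p q α β : ℝ) (hq : 0 < q) (hp : 0 ≤ p)
    (hα1 : α < 1) (hα0 : α ≠ 0) (hαβ : 1 / α + 1 / β = 1)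
    (l b : ℝ → ℝ)
    (hl : ∀ t : ℝ, l t = p * (1 - 2 * p * q / ((2 * q + p) ^ 2 * Real.exp (2 * q * t) - p ^ 2)))
    (hb : ∀ t : ℝ, b t = -(p + q) + β * l t)
    (bbar K Rbar : ℝ)
    (hbbar : bbar = -(1 - β) * p - q)
    (hK : K = Real.sqrt (bbar ^ 2 + β * (1 - β) * p ^ 2))
    (hRbar0 : p = 0 → Rbar = β * (1 - β) / (2 * q))
    (hRbar1 : 0 < p → Rbar = (bbar + K) / p ^ 2)
    (R : ℝ → ℝ → ℝ)
    (hsol : ∀ T : ℝ, 0 < T →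
      (∀ t ∈ Set.Icc (0 : ℝ) T,
        HasDerivWithinAt (R T) ((l t) ^ 2 * (R T t) ^ 2 - 2 * b t * R T t - β * (1 - β))
          (Set.Icc (0 : ℝ) T) t) ∧ R T T = 0)
    (hside_neg : α < 0 → ∀ T : ℝ, 0 < T → ∀ t ∈ Set.Icc (0 : ℝ) T, 0 ≤ R T t)
    (hside_pos : 0 < p → 0 < α → ∀ T : ℝ, 0 < T →
      ∀ t ∈ Set.Icc (0 : ℝ) T, b t / (l t) ^ 2 ≤ R T t) :
    (∃ C : ℝ, ∀ T : ℝ, 0 < T → ∀ t ∈ Set.Icc (0 : ℝ) T, |R T t| ≤ C) ∧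
    (∀ ε : ℝ, 0 < ε → ∃ N : ℝ, ∀ T : ℝ, 0 < T → ∀ t ∈ Set.Icc (0 : ℝ) T,
      N ≤ t → N ≤ T - t → |R T t - Rbar| < ε) ∧
    (∀ δ ε : ℝ, 0 < δ → 0 < ε → δ + ε < 1 →
      Filter.Tendsto (fun T : ℝ => ⨆ t ∈ Set.Icc (δ * T) ((1 - ε) * T), |R T t - Rbar|)
        Filter.atTop (nhds 0)) := by
  -- ====== basic algebra on α, β ======
  have hβ0 : β ≠ 0 := by
    intro h
    rw [h, div_zero, add_zero] at hαβ
    have : α = 1 := by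
      field_simp at hαβ
      linarith
    exact absurd this (by linarith)
  have hrel : β + α = α * β := by
    field_simp at hαβ
    linarith
  have hprod : (α - 1) * (β - 1) = 1 := by linear_combination -hrel
  have h1β : 0 < 1 - β := by have := conj_lt_one hprod hα1; linarith
  have hbbar' : bbar = -(p + q) + β * p := by rw [hbbar]; ring
  have hbbarneg : bbar ≤ -q := by
    have h1 : 0 ≤ (1 - β) * p := mul_nonneg h1β.le hp
    rw [hbbar]
    linarith
  -- ====== facts about l and b ======
  have hDpos : ∀ t : ℝ, 0 ≤ t → 4 * q * (q + p) ≤ (2 * q + p) ^ 2 * Real.exp (2 * q * t) - p ^ 2 := by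
    intro t ht
    have h1 : (1:ℝ) ≤ Real.exp (2 * q * t) :=
      Real.one_le_exp (mul_nonneg (by linarith) ht)
    nlinarith [sq_nonneg (2 * q + p), hq, hp]
  have hDpos' : (0:ℝ) < 4 * q * (q + p) :=
    mul_pos (by linarith) (by linarith)
  have hl' : ∀ t : ℝ, l t = p - 2 * p ^ 2 * q / ((2 * q + p) ^ 2 * Real.exp (2 * q * t) - p ^ 2) := by
    intro t
    rw [hl t]
    ring
  have hnum : (0:ℝ) ≤ 2 * p ^ 2 * q := mul_nonneg (by positivity) hq.le
  have hlle : ∀ t : ℝ, 0 ≤ t → l t ≤ p := by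
    intro t ht
    rw [hl' t]
    have : (0:ℝ) ≤ 2 * p ^ 2 * q / ((2 * q + p) ^ 2 * Real.exp (2 * q * t) - p ^ 2) :=
      div_nonneg hnum (le_trans hDpos'.le (hDpos t ht))
    linarith
  have hlge : ∀ t : ℝ, 0 ≤ t → p - p ^ 2 / (2 * (q + p)) ≤ l t := by
    intro t ht
    rw [hl' t]
    have h1 : 2 * p ^ 2 * q / ((2 * q + p) ^ 2 * Real.exp (2 * q * t) - p ^ 2)
        ≤ 2 * p ^ 2 * q / (4 * q * (q + p)) :=
      div_le_div_of_nonneg_left hnum hDpos' (hDpos t ht)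
    have h2 : 2 * p ^ 2 * q / (4 * q * (q + p)) = p ^ 2 / (2 * (q + p)) := by
      rw [div_eq_div_iff hDpos'.ne' (show (2 * (q + p)) ≠ 0 by positivity).symm.symm]
      ring
    linarith
  have hlnn : ∀ t : ℝ, 0 ≤ t → 0 ≤ l t := by
    intro t ht
    have h1 := hlge t ht
    have h2 : p ^ 2 / (2 * (q + p)) ≤ p := by
      rw [div_le_iff₀ (by linarith)]
      have := mul_nonneg hp hq.le
      nlinarith [sq_nonneg p]
    linarith
  have hbq : ∀ t : ℝ, 0 ≤ t → b t ≤ -q := by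
    intro t ht
    rw [hb t]
    rcases le_or_gt 0 β with hβ | hβ
    · have e1 : β * l t ≤ β * p := mul_le_mul_of_nonneg_left (hlle t ht) hβ
      have e2 : 0 ≤ (1 - β) * p := mul_nonneg h1β.le hp
      linarith
    · have e1 : β * l t ≤ 0 := mul_nonpos_of_nonpos_of_nonneg hβ.le (hlnn t ht)
      linarith
  -- ====== derivative of s ↦ R T (T - s) ======
  have hz : ∀ T : ℝ, 0 < T → ∀ s ∈ Set.Icc (0:ℝ) T,
      HasDerivWithinAt (fun u => R T (T - u))
        (-((l (T - s)) ^ 2 * (R T (T - s)) ^ 2 - 2 * b (T - s) * (R T (T - s)) - β * (1 - β)))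
        (Set.Icc (0:ℝ) T) s := by
    intro T hT s hs
    rw [Set.mem_Icc] at hs
    have hmem : T - s ∈ Set.Icc (0:ℝ) T := Set.mem_Icc.2 ⟨by linarith [hs.2], by linarith [hs.1]⟩
    have houter := (hsol T hT).1 (T - s) hmem
    have hinner : HasDerivWithinAt (fun u : ℝ => T - u) (-1) (Set.Icc (0:ℝ) T) s := by
      simpa using (hasDerivWithinAt_id s (Set.Icc (0:ℝ) T)).const_sub T
    have hmap : Set.MapsTo (fun u : ℝ => T - u) (Set.Icc (0:ℝ) T) (Set.Icc (0:ℝ) T) := by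
      intro u hu
      rw [Set.mem_Icc] at hu
      show T - u ∈ Set.Icc (0:ℝ) T
      rw [Set.mem_Icc]
      exact ⟨by linarith [hu.2], by linarith [hu.1]⟩
    have hcomp := HasDerivWithinAt.comp s houter hinner hmap
    exact hcomp.congr_deriv (by ring)
  have hy0 : ∀ T : ℝ, 0 < T → R T (T - 0) = 0 := by
    intro T hT
    rw [sub_zero]
    exact (hsol T hT).2
  -- ====== final assembly helper ======
  have main : ∀ C : ℝ, (∀ T : ℝ, 0 < T → ∀ t ∈ Set.Icc (0:ℝ) T, |R T t| ≤ C) →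
      (∀ ε : ℝ, 0 < ε → ∃ N : ℝ, ∀ T : ℝ, 0 < T → ∀ t ∈ Set.Icc (0:ℝ) T,
        N ≤ t → N ≤ T - t → |R T t - Rbar| < ε) →
      ((∃ C : ℝ, ∀ T : ℝ, 0 < T → ∀ t ∈ Set.Icc (0 : ℝ) T, |R T t| ≤ C) ∧
      (∀ ε : ℝ, 0 < ε → ∃ N : ℝ, ∀ T : ℝ, 0 < T → ∀ t ∈ Set.Icc (0 : ℝ) T,
        N ≤ t → N ≤ T - t → |R T t - Rbar| < ε) ∧
      (∀ δ ε : ℝ, 0 < δ → 0 < ε → δ + ε < 1 →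
        Filter.Tendsto (fun T : ℝ => ⨆ t ∈ Set.Icc (δ * T) ((1 - ε) * T), |R T t - Rbar|)
          Filter.atTop (nhds 0))) := by
    intro C hC h2
    refine ⟨⟨C, hC⟩, h2, ?_⟩
    intro δ ε hδ hε hδε
    rw [Metric.tendsto_atTop]
    intro e he
    obtain ⟨N, hN⟩ := h2 (e / 2) (by linarith)
    refine ⟨max 1 (max (N / δ) (N / ε)), fun T hT => ?_⟩
    have hT1 : (1:ℝ) ≤ T := le_trans (le_max_left _ _) hT
    have hT0 : (0:ℝ) < T := by linarith
    have hTδ : N ≤ δ * T := by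
      have h3 : N / δ ≤ T := le_trans (le_trans (le_max_left _ _) (le_max_right _ _)) hT
      rw [div_le_iff₀ hδ] at h3
      linarith [h3]
    have hTε : N ≤ ε * T := by
      have h3 : N / ε ≤ T := le_trans (le_trans (le_max_right _ _) (le_max_right _ _)) hT
      rw [div_le_iff₀ hε] at h3
      linarith [h3]
    have hδT0 : 0 ≤ δ * T := mul_nonneg hδ.le hT0.le
    have hεT0 : 0 ≤ ε * T := mul_nonneg hε.le hT0.le
    have hterm : ∀ t : ℝ, (⨆ _ : t ∈ Set.Icc (δ * T) ((1 - ε) * T), |R T t - Rbar|) ≤ e / 2 := by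
      intro t
      apply Real.iSup_le _ (by linarith)
      intro ht
      rw [Set.mem_Icc] at ht
      have htIcc : t ∈ Set.Icc (0:ℝ) T := by
        rw [Set.mem_Icc]
        constructor
        · linarith [ht.1]
        · linarith [ht.2]
      have ht1 : N ≤ t := le_trans hTδ ht.1
      have ht2 : N ≤ T - t := by linarith [ht.2]
      exact (hN T hT0 t htIcc ht1 ht2).le
    have hle : (⨆ t ∈ Set.Icc (δ * T) ((1 - ε) * T), |R T t - Rbar|) ≤ e / 2 :=
      Real.iSup_le hterm (by linarith)
    have hge : 0 ≤ ⨆ t ∈ Set.Icc (δ * T) ((1 - ε) * T), |R T t - Rbar| :=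
      Real.iSup_nonneg fun t => Real.iSup_nonneg fun _ => abs_nonneg _
    rw [Real.dist_eq, sub_zero, abs_of_nonneg hge]
    linarith
  -- ====== case split on p ======
  rcases eq_or_lt_of_le hp with hp0 | hppos
  · -- ============== CASE p = 0 ==============
    have hl0 : ∀ t : ℝ, l t = 0 := by
      intro t
      rw [hl t, ← hp0]
      ring
    have hb0 : ∀ t : ℝ, b t = -q := by
      intro t
      rw [hb t, hl0 t, ← hp0]
      ring
    have hRq : 2 * q * Rbar = β * (1 - β) := by
      rw [hRbar0 hp0.symm]
      field_simp
    have habsR := le_abs_self Rbar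
    have habsR' := neg_abs_le Rbar
    have habs0 := abs_nonneg Rbar
    -- global bounds
    have hbound : ∀ T : ℝ, 0 < T → ∀ s ∈ Set.Icc (0:ℝ) T,
        -(|Rbar| + 1) ≤ R T (T - s) ∧ R T (T - s) ≤ |Rbar| + 1 := by
      intro T hT
      have hup := stayBelow' (y := fun u => R T (T - u))
        (f := fun s => -((l (T - s)) ^ 2 * (R T (T - s)) ^ 2
          - 2 * b (T - s) * (R T (T - s)) - β * (1 - β)))
        (a := 0) (b := T) (M := |Rbar| + 1)
        (hz T hT) (by show R T (T - 0) ≤ |Rbar| + 1; rw [hy0 T hT]; linarith)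
        (by
          intro s hs hge
          have hge' : |Rbar| + 1 ≤ R T (T - s) := hge
          show -((l (T - s)) ^ 2 * (R T (T - s)) ^ 2
            - 2 * b (T - s) * (R T (T - s)) - β * (1 - β)) < 0
          rw [hl0, hb0]
          have e1 : q * (|Rbar| + 1) ≤ q * R T (T - s) :=
            mul_le_mul_of_nonneg_left hge' hq.le
          have e2 : q * Rbar ≤ q * |Rbar| := mul_le_mul_of_nonneg_left habsR hq.le
          linarith [hRq, e1, e2, hq])
      have hdn := stayAbove' (y := fun u => R T (T - u))
        (f := fun s => -((l (T - s)) ^ 2 * (R T (T - s)) ^ 2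
          - 2 * b (T - s) * (R T (T - s)) - β * (1 - β)))
        (a := 0) (b := T) (L := -(|Rbar| + 1))
        (hz T hT) (by show -(|Rbar| + 1) ≤ R T (T - 0); rw [hy0 T hT]; linarith)
        (by
          intro s hs hle
          have hle' : R T (T - s) ≤ -(|Rbar| + 1) := hle
          show 0 < -((l (T - s)) ^ 2 * (R T (T - s)) ^ 2
            - 2 * b (T - s) * (R T (T - s)) - β * (1 - β))
          rw [hl0, hb0]
          have e1 : q * R T (T - s) ≤ q * (-(|Rbar| + 1)) :=
            mul_le_mul_of_nonneg_left hle' hq.le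
          have e2 : q * (-|Rbar|) ≤ q * Rbar := mul_le_mul_of_nonneg_left habsR' hq.le
          linarith [hRq, e1, e2, hq])
      exact fun s hs => ⟨hdn s hs, hup s hs⟩
    have hCb : ∀ T : ℝ, 0 < T → ∀ t ∈ Set.Icc (0:ℝ) T, |R T t| ≤ |Rbar| + 1 := by
      intro T hT t ht
      rw [Set.mem_Icc] at ht
      have hmem : T - t ∈ Set.Icc (0:ℝ) T := Set.mem_Icc.2 ⟨by linarith, by linarith⟩
      have := hbound T hT (T - t) hmem
      rw [sub_sub_cancel] at this
      exact abs_le.2 ⟨this.1, this.2⟩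
    apply main (|Rbar| + 1) hCb
    -- part (ii) for p = 0
    intro ε hε
    set ε' := ε / 2 with hε'
    have hε'pos : 0 < ε' := by rw [hε']; linarith
    set c := 2 * q * ε' with hc
    have hcpos : 0 < c := by rw [hc]; exact mul_pos (by linarith) hε'pos
    refine ⟨(|Rbar| + 1) / c + 1, ?_⟩
    intro T hT t ht hNt hNTt
    rw [Set.mem_Icc] at ht
    set sf := T - t with hsf
    have hsfpos : 0 < sf := by
      have h5 : 0 ≤ (|Rbar| + 1) / c := div_nonneg (by linarith) hcpos.le
      linarith [hNTt]
    have hcsf : |Rbar| + 1 + c ≤ c * sf := by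
      rw [← div_le_iff₀' hcpos]
      calc (|Rbar| + 1 + c) / c = (|Rbar| + 1) / c + 1 := by
            rw [add_div, div_self hcpos.ne']
        _ ≤ sf := hNTt
    have hsfT : sf ≤ T := by rw [hsf]; linarith
    have hJsub : Set.Icc (0:ℝ) sf ⊆ Set.Icc (0:ℝ) T := Set.Icc_subset_Icc le_rfl hsfT
    have hyJ : ∀ s ∈ Set.Icc (0:ℝ) sf,
        HasDerivWithinAt (fun u => R T (T - u))
          (-((l (T - s)) ^ 2 * (R T (T - s)) ^ 2
            - 2 * b (T - s) * (R T (T - s)) - β * (1 - β)))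
          (Set.Icc (0:ℝ) sf) s :=
      fun s hs => (hz T hT s (hJsub hs)).mono hJsub
    have hup := reachAbove' (a := 0) (b := sf) (L := Rbar - ε') (c := c) hsfpos.le hcpos hyJ
      (by
        show Rbar - ε' < R T (T - 0) + c * (sf - 0)
        rw [hy0 T hT]
        have : c * sf = c * (sf - 0) + c * 0 := by ring
        linarith [hcsf])
      (by
        intro s hs hle
        have hle' : R T (T - s) ≤ Rbar - ε' := hle
        show c ≤ -((l (T - s)) ^ 2 * (R T (T - s)) ^ 2
          - 2 * b (T - s) * (R T (T - s)) - β * (1 - β))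
        rw [hl0, hb0]
        have e1 : q * R T (T - s) ≤ q * (Rbar - ε') := mul_le_mul_of_nonneg_left hle' hq.le
        linarith [hRq, e1, hc])
    have hdn := reachBelow' (a := 0) (b := sf) (U := Rbar + ε') (c := c) hsfpos.le hcpos hyJ
      (by
        show R T (T - 0) - c * (sf - 0) < Rbar + ε'
        rw [hy0 T hT]
        have : c * sf = c * (sf - 0) + c * 0 := by ring
        linarith [hcsf])
      (by
        intro s hs hge
        have hge' : Rbar + ε' ≤ R T (T - s) := hge
        show -((l (T - s)) ^ 2 * (R T (T - s)) ^ 2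
          - 2 * b (T - s) * (R T (T - s)) - β * (1 - β)) ≤ -c
        rw [hl0, hb0]
        have e1 : q * (Rbar + ε') ≤ q * R T (T - s) := mul_le_mul_of_nonneg_left hge' hq.le
        linarith [hRq, e1, hc])
    have hzz : R T (T - sf) = R T t := by rw [hsf, sub_sub_cancel]
    have hup' : Rbar - ε' ≤ R T t := by rw [← hzz]; exact hup
    have hdn' : R T t ≤ Rbar + ε' := by rw [← hzz]; exact hdn
    rw [abs_lt]
    constructor <;> [linarith; linarith]
  · -- ============== CASE p > 0 ==============
    have hp2 : (0:ℝ) < p ^ 2 := pow_pos hppos 2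
    have hargpos : 0 < bbar ^ 2 + β * (1 - β) * p ^ 2 := by
      have h1 : bbar ^ 2 + β * (1 - β) * p ^ 2 = (1 - β) * p ^ 2 + 2 * ((1 - β) * p) * q + q ^ 2 := by
        rw [hbbar]; ring
      have e1 : 0 ≤ (1 - β) * p ^ 2 := mul_nonneg h1β.le (sq_nonneg p)
      have e2 : 0 ≤ ((1 - β) * p) * q := mul_nonneg (mul_nonneg h1β.le hp) hq.le
      have e3 : 0 < q ^ 2 := pow_pos hq 2
      rw [h1]
      linarith
    have hKpos : 0 < K := by rw [hK]; exact Real.sqrt_pos.2 hargpos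
    have hKsq : K ^ 2 = bbar ^ 2 + β * (1 - β) * p ^ 2 := by
      rw [hK, sq, Real.mul_self_sqrt hargpos.le]
    have hR : Rbar = (bbar + K) / p ^ 2 := hRbar1 hppos
    set rbar : ℝ := (bbar - K) / p ^ 2 with hrbar
    set m : ℝ := K / (2 * p ^ 2) with hm
    have hmpos : 0 < m := by rw [hm]; exact div_pos hKpos (by linarith)
    have h1 : p ^ 2 * Rbar = bbar + K := by rw [hR]; field_simp
    have h2 : p ^ 2 * rbar = bbar - K := by rw [hrbar]; field_simp
    have h3 : p ^ 2 * (Rbar * rbar) = -(β * (1 - β)) := by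
      have h4 : (p ^ 2 * Rbar) * (p ^ 2 * rbar) = bbar ^ 2 - K ^ 2 := by rw [h1, h2]; ring
      have h5 : p ^ 2 * (p ^ 2 * (Rbar * rbar)) = p ^ 2 * (-(β * (1 - β))) := by
        linear_combination h4 - hKsq
      exact mul_left_cancel₀ hp2.ne' h5
    have Gfact : ∀ x : ℝ, p ^ 2 * x ^ 2 - 2 * bbar * x - β * (1 - β)
        = p ^ 2 * ((x - Rbar) * (x - rbar)) := by
      intro x
      linear_combination x * h1 + x * h2 - h3
    have hdiffRr : p ^ 2 * (Rbar - rbar) = 2 * K := by linear_combination h1 - h2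
    have hrm : rbar + m = (bbar - K / 2) / p ^ 2 := by
      rw [hrbar, hm]
      field_simp
      ring
    have hrmneg : rbar + m ≤ 0 := by
      rw [hrm]
      apply div_nonpos_of_nonpos_of_nonneg _ hp2.le
      linarith [hbbarneg, hKpos, hq]
    -- limits
    have hDtend : Tendsto (fun t => (2 * q + p) ^ 2 * Real.exp (2 * q * t) - p ^ 2) atTop atTop := by
      have h4 : Tendsto (fun t : ℝ => 2 * q * t) atTop atTop :=
        Tendsto.const_mul_atTop (by linarith) tendsto_id
      have h5 : Tendsto (fun t : ℝ => Real.exp (2 * q * t)) atTop atTop :=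
        Real.tendsto_exp_atTop.comp h4
      have h6 : Tendsto (fun t : ℝ => (2 * q + p) ^ 2 * Real.exp (2 * q * t)) atTop atTop :=
        Tendsto.const_mul_atTop (pow_pos (by linarith) 2) h5
      simpa [sub_eq_add_neg] using tendsto_atTop_add_const_right atTop (-p ^ 2) h6
    have hltend : Tendsto l atTop (nhds p) := by
      have h4 : Tendsto (fun t => p - 2 * p ^ 2 * q /
          ((2 * q + p) ^ 2 * Real.exp (2 * q * t) - p ^ 2)) atTop (nhds (p - 0)) :=
        tendsto_const_nhds.sub (Tendsto.div_atTop tendsto_const_nhds hDtend)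
      rw [sub_zero] at h4
      exact h4.congr fun t => (hl' t).symm
    -- generic part (ii) machine for p > 0
    have keyp : ∀ X : ℝ, 0 ≤ X →
        (∀ T : ℝ, 0 < T → ∀ s ∈ Set.Icc (0:ℝ) T, |R T (T - s)| ≤ X) →
        ∀ t₁ : ℝ, 0 ≤ t₁ →
        (∀ T : ℝ, 0 < T → ∀ s ∈ Set.Icc (0:ℝ) T, t₁ ≤ T - s → rbar + m ≤ R T (T - s)) →
        ∀ ε : ℝ, 0 < ε → ∃ N : ℝ, ∀ T : ℝ, 0 < T → ∀ t ∈ Set.Icc (0:ℝ) T,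
          N ≤ t → N ≤ T - t → |R T t - Rbar| < ε := by
      intro X hX0 hXb t₁ ht₁0 hlow ε hε
      set ε' := ε / 2 with hε'
      have hε'pos : 0 < ε' := by rw [hε']; linarith
      set c := ε' * K / 4 with hc
      have hcpos : 0 < c := by rw [hc]; exact div_pos (mul_pos hε'pos hKpos) (by norm_num)
      set CX := 2 * p * X ^ 2 + 2 * |β| * X with hCX
      have hCX0 : 0 ≤ CX := by
        rw [hCX]
        have e1 : 0 ≤ 2 * p * X ^ 2 := mul_nonneg (by linarith) (sq_nonneg X)
        have e2 : 0 ≤ 2 * |β| * X := mul_nonneg (by positivity) hX0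
        linarith
      have hpertt : Tendsto (fun t => (p - l t) * CX) atTop (nhds 0) := by
        have h4 : Tendsto (fun t => (p - l t) * CX) atTop (nhds ((p - p) * CX)) :=
          (tendsto_const_nhds.sub hltend).mul_const CX
        simpa using h4
      obtain ⟨a, ha⟩ := eventually_atTop.1 (hpertt.eventually_le_const hcpos)
      set t₀ := max a t₁ with ht₀
      have habsR := le_abs_self Rbar
      have habsR' := neg_abs_le Rbar
      have habs0 := abs_nonneg Rbar
      refine ⟨max t₀ ((X + |Rbar| + 1) / c + 1), ?_⟩
      intro T hT t ht hNt hNTt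
      rw [Set.mem_Icc] at ht
      set sf := T - t with hsf
      have hN2 : (X + |Rbar| + 1) / c + 1 ≤ sf := le_trans (le_max_right _ _) hNTt
      have hsfpos : 0 < sf := by
        have h5 : 0 ≤ (X + |Rbar| + 1) / c := div_nonneg (by linarith) hcpos.le
        linarith
      have hcsf : X + |Rbar| + 1 + c ≤ c * sf := by
        rw [← div_le_iff₀' hcpos]
        calc (X + |Rbar| + 1 + c) / c = (X + |Rbar| + 1) / c + 1 := by
              rw [add_div, div_self hcpos.ne']
          _ ≤ sf := hN2
      have hsfT : sf ≤ T := by rw [hsf]; linarith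
      have hJsub : Set.Icc (0:ℝ) sf ⊆ Set.Icc (0:ℝ) T := Set.Icc_subset_Icc le_rfl hsfT
      have hyJ : ∀ s ∈ Set.Icc (0:ℝ) sf,
          HasDerivWithinAt (fun u => R T (T - u))
            (-((l (T - s)) ^ 2 * (R T (T - s)) ^ 2
              - 2 * b (T - s) * (R T (T - s)) - β * (1 - β)))
            (Set.Icc (0:ℝ) sf) s :=
        fun s hs => (hz T hT s (hJsub hs)).mono hJsub
      -- facts along the path
      have hpath : ∀ s ∈ Set.Icc (0:ℝ) sf,
          (p - l (T - s)) * CX ≤ c ∧ rbar + m ≤ R T (T - s) ∧ |R T (T - s)| ≤ X ∧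
          0 ≤ T - s := by
        intro s hs
        rw [Set.mem_Icc] at hs
        have hts : t ≤ T - s := by rw [hsf] at hs; linarith [hs.2]
        have hts0 : 0 ≤ T - s := le_trans ht.1 hts
        have hsIcc : s ∈ Set.Icc (0:ℝ) T := Set.mem_Icc.2 ⟨hs.1, le_trans hs.2 hsfT⟩
        have hta : a ≤ T - s :=
          le_trans (le_trans (le_max_left _ _) (le_trans (le_max_left _ _) hNt)) hts
        have htb : t₁ ≤ T - s :=
          le_trans (le_trans (le_max_right _ _) (le_trans (le_max_left _ _) hNt)) hts
        exact ⟨ha _ hta, hlow T hT s hsIcc htb, hXb T hT s hsIcc, hts0⟩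
      -- perturbation estimate
      have hpert : ∀ s ∈ Set.Icc (0:ℝ) sf,
          |((l (T - s)) ^ 2 * (R T (T - s)) ^ 2 - 2 * b (T - s) * (R T (T - s)) - β * (1 - β))
            - (p ^ 2 * (R T (T - s)) ^ 2 - 2 * bbar * (R T (T - s)) - β * (1 - β))| ≤ c := by
        intro s hs
        obtain ⟨hc1, _, hXz, hts0⟩ := hpath s hs
        set zv := R T (T - s) with hzv
        set lv := l (T - s) with hlv
        have hlv1 : lv ≤ p := hlle _ hts0
        have hlv0 : 0 ≤ lv := hlnn _ hts0
        have hid : lv ^ 2 * zv ^ 2 - 2 * b (T - s) * zv - β * (1 - β)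
            - (p ^ 2 * zv ^ 2 - 2 * bbar * zv - β * (1 - β))
            = (lv - p) * ((lv + p) * zv ^ 2 - 2 * β * zv) := by
          rw [hb (T - s), hbbar']
          ring
        rw [hid, abs_mul, abs_of_nonpos (by linarith)]
        have hW : |(lv + p) * zv ^ 2 - 2 * β * zv| ≤ CX := by
          have ht1 : |(lv + p) * zv ^ 2 - 2 * β * zv| ≤ |(lv + p) * zv ^ 2| + |2 * β * zv| :=
            abs_sub _ _
          have ht2 : |(lv + p) * zv ^ 2| = (lv + p) * zv ^ 2 :=
            abs_of_nonneg (mul_nonneg (by linarith) (sq_nonneg zv))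
          have ht3 : |2 * β * zv| = 2 * |β| * |zv| := by
            rw [abs_mul, abs_mul]
            norm_num
          have ht4 : zv ^ 2 ≤ X ^ 2 := by
            rw [← sq_abs zv]
            exact pow_le_pow_left₀ (abs_nonneg zv) hXz 2
          have ht5 : (lv + p) * zv ^ 2 ≤ 2 * p * X ^ 2 :=
            mul_le_mul (by linarith) ht4 (sq_nonneg zv) (by linarith)
          have ht6 : 2 * |β| * |zv| ≤ 2 * |β| * X :=
            mul_le_mul_of_nonneg_left hXz (by positivity)
          rw [hCX]
          calc |(lv + p) * zv ^ 2 - 2 * β * zv|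
              ≤ |(lv + p) * zv ^ 2| + |2 * β * zv| := ht1
            _ ≤ 2 * p * X ^ 2 + 2 * |β| * X := by rw [ht2, ht3]; linarith
        calc -(lv - p) * |(lv + p) * zv ^ 2 - 2 * β * zv|
            = (p - lv) * |(lv + p) * zv ^ 2 - 2 * β * zv| := by ring
          _ ≤ (p - lv) * CX := mul_le_mul_of_nonneg_left hW (by linarith)
          _ ≤ c := hc1
      have hpKm : p ^ 2 * (ε' * m) = ε' * K / 2 := by
        rw [hm]
        field_simp
      have hup := reachAbove' (a := 0) (b := sf) (L := Rbar - ε') (c := c) hsfpos.le hcpos hyJ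
        (by
          show Rbar - ε' < R T (T - 0) + c * (sf - 0)
          rw [hy0 T hT]
          have : c * sf = c * (sf - 0) + c * 0 := by ring
          linarith [hcsf])
        (by
          intro s hs hle
          have hle' : R T (T - s) ≤ Rbar - ε' := hle
          show c ≤ -((l (T - s)) ^ 2 * (R T (T - s)) ^ 2
            - 2 * b (T - s) * (R T (T - s)) - β * (1 - β))
          obtain ⟨_, hlowz, hXz, hts0⟩ := hpath s hs
          have hp1 := (abs_le.1 (hpert s hs)).2
          have hGf := Gfact (R T (T - s))
          have e1 : ε' ≤ Rbar - R T (T - s) := by linarith [hle']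
          have e2 : m ≤ R T (T - s) - rbar := by linarith
          have e3 : ε' * m ≤ (Rbar - R T (T - s)) * (R T (T - s) - rbar) :=
            mul_le_mul e1 e2 hmpos.le (by linarith)
          have hswap : (R T (T - s) - Rbar) * (R T (T - s) - rbar)
              = -((Rbar - R T (T - s)) * (R T (T - s) - rbar)) := by ring
          have hquad : (R T (T - s) - Rbar) * (R T (T - s) - rbar) ≤ -(ε' * m) := by
            rw [hswap]; linarith
          have hq2 := mul_le_mul_of_nonneg_left hquad hp2.le
          have hq3 : p ^ 2 * -(ε' * m) = -(ε' * K / 2) := by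
            rw [← hpKm]; ring
          linarith [hp1, hGf, hq2, hq3, hc, hcpos])
        -- end hup
      have hdn := reachBelow' (a := 0) (b := sf) (U := Rbar + ε') (c := c) hsfpos.le hcpos hyJ
        (by
          show R T (T - 0) - c * (sf - 0) < Rbar + ε'
          rw [hy0 T hT]
          have : c * sf = c * (sf - 0) + c * 0 := by ring
          linarith [hcsf])
        (by
          intro s hs hge
          have hge' : Rbar + ε' ≤ R T (T - s) := hge
          show -((l (T - s)) ^ 2 * (R T (T - s)) ^ 2
            - 2 * b (T - s) * (R T (T - s)) - β * (1 - β)) ≤ -c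
          obtain ⟨_, hlowz, hXz, hts0⟩ := hpath s hs
          have hp1 := (abs_le.1 (hpert s hs)).1
          have hGf := Gfact (R T (T - s))
          have hRr : Rbar - rbar = 2 * K / p ^ 2 := by
            rw [eq_div_iff hp2.ne']
            linarith [hdiffRr]
          have hpos2 : (0:ℝ) < 2 * K / p ^ 2 := div_pos (by linarith) hp2
          have hzr : 2 * K / p ^ 2 ≤ R T (T - s) - rbar := by linarith [hRr]
          have hzR : ε' ≤ R T (T - s) - Rbar := by linarith [hge']
          have hquad : ε' * (2 * K / p ^ 2) ≤ (R T (T - s) - Rbar) * (R T (T - s) - rbar) :=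
            mul_le_mul hzR hzr hpos2.le (by linarith)
          have hq2 := mul_le_mul_of_nonneg_left hquad hp2.le
          have h7 : p ^ 2 * (ε' * (2 * K / p ^ 2)) = 2 * (ε' * K) := by
            field_simp
          linarith [hp1, hGf, hq2, h7, hc, hcpos])
      have hzz : R T (T - sf) = R T t := by rw [hsf, sub_sub_cancel]
      have hup' : Rbar - ε' ≤ R T t := by rw [← hzz]; exact hup
      have hdn' : R T t ≤ Rbar + ε' := by rw [← hzz]; exact hdn
      rw [abs_lt]
      constructor <;> [linarith; linarith]
    -- subcases on sign of α
    rcases lt_or_gt_of_ne hα0 with hαneg | hαpos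
    · -- β ∈ (0, 1)
      have hβpos : 0 < β := conj_pos hprod hαneg
      have hββ : 0 < β * (1 - β) := mul_pos hβpos h1β
      set M := β * (1 - β) / q with hM
      have hMpos : 0 < M := by rw [hM]; exact div_pos hββ hq
      have hqM : q * M = β * (1 - β) := by rw [hM]; field_simp
      have hbound : ∀ T : ℝ, 0 < T → ∀ s ∈ Set.Icc (0:ℝ) T,
          0 ≤ R T (T - s) ∧ R T (T - s) ≤ M := by
        intro T hT s hs
        rw [Set.mem_Icc] at hs
        have hmem : T - s ∈ Set.Icc (0:ℝ) T :=
          Set.mem_Icc.2 ⟨by linarith [hs.2], by linarith [hs.1]⟩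
        refine ⟨hside_neg hαneg T hT (T - s) hmem, ?_⟩
        have hup := stayBelow' (y := fun u => R T (T - u))
          (f := fun s => -((l (T - s)) ^ 2 * (R T (T - s)) ^ 2
            - 2 * b (T - s) * (R T (T - s)) - β * (1 - β)))
          (a := 0) (b := T) (M := M)
          (hz T hT) (by show R T (T - 0) ≤ M; rw [hy0 T hT]; exact hMpos.le)
          (by
            intro u hu hge
            have hge' : M ≤ R T (T - u) := hge
            show -((l (T - u)) ^ 2 * (R T (T - u)) ^ 2
              - 2 * b (T - u) * (R T (T - u)) - β * (1 - β)) < 0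
            rw [Set.mem_Icc] at hu
            have hu0 : 0 ≤ T - u := by linarith [hu.2]
            have hbu := hbq (T - u) hu0
            have hzpos : 0 < R T (T - u) := lt_of_lt_of_le hMpos hge'
            have hbz : b (T - u) * R T (T - u) ≤ -q * R T (T - u) :=
              mul_le_mul_of_nonneg_right hbu hzpos.le
            have e4 : q * M ≤ q * R T (T - u) := mul_le_mul_of_nonneg_left hge' hq.le
            have e5 : 0 ≤ (l (T - u)) ^ 2 * (R T (T - u)) ^ 2 :=
              mul_nonneg (sq_nonneg _) (sq_nonneg _)
            linarith [hbz, e4, e5, hqM, hββ])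
        exact hup s (Set.mem_Icc.2 hs)
      have hCb : ∀ T : ℝ, 0 < T → ∀ t ∈ Set.Icc (0:ℝ) T, |R T t| ≤ M := by
        intro T hT t ht
        rw [Set.mem_Icc] at ht
        have hmem : T - t ∈ Set.Icc (0:ℝ) T := Set.mem_Icc.2 ⟨by linarith, by linarith⟩
        have := hbound T hT (T - t) hmem
        rw [sub_sub_cancel] at this
        exact abs_le.2 ⟨by linarith [this.1], this.2⟩
      apply main M hCb
      apply keyp M hMpos.le
        (fun T hT s hs => abs_le.2 ⟨by linarith [(hbound T hT s hs).1], (hbound T hT s hs).2⟩)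
        0 le_rfl
      intro T hT s hs _
      exact le_trans hrmneg ((hbound T hT s hs).1)
    · -- β < 0
      have hβneg : β < 0 := conj_neg hprod hαpos hα1
      set l0 : ℝ := p - p ^ 2 / (2 * (q + p)) with hl0def
      have hl0pos : 0 < l0 := by
        rw [hl0def, sub_pos, div_lt_iff₀ (by linarith)]
        have := mul_pos hppos hq
        linarith [sq_nonneg p, this]
      have hbmon : ∀ t : ℝ, 0 ≤ t → bbar ≤ b t ∧ b t ≤ -q := by
        intro t ht
        refine ⟨?_, hbq t ht⟩
        rw [hb t, hbbar']
        have e1 : β * p ≤ β * l t := mul_le_mul_of_nonpos_left (hlle t ht) hβneg.le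
        linarith
      have hbound : ∀ T : ℝ, 0 < T → ∀ s ∈ Set.Icc (0:ℝ) T,
          bbar / l0 ^ 2 ≤ R T (T - s) ∧ R T (T - s) ≤ 0 := by
        intro T hT s hs
        rw [Set.mem_Icc] at hs
        have hmem : T - s ∈ Set.Icc (0:ℝ) T :=
          Set.mem_Icc.2 ⟨by linarith [hs.2], by linarith [hs.1]⟩
        constructor
        · have hs1 := hside_pos hppos hαpos T hT (T - s) hmem
          have hu0 : (0:ℝ) ≤ T - s := by linarith [hs.2]
          have hl1 : l0 ≤ l (T - s) := by rw [hl0def]; exact hlge _ hu0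
          have hb1 := hbmon (T - s) hu0
          have hstep : bbar / l0 ^ 2 ≤ b (T - s) / (l (T - s)) ^ 2 := by
            rw [div_le_div_iff₀ (pow_pos hl0pos 2) (pow_pos (lt_of_lt_of_le hl0pos hl1) 2)]
            have hsq : l0 ^ 2 ≤ (l (T - s)) ^ 2 := pow_le_pow_left₀ hl0pos.le hl1 2
            have e1 : bbar * (l (T - s)) ^ 2 ≤ bbar * l0 ^ 2 :=
              mul_le_mul_of_nonpos_left hsq (by linarith [hbbarneg])
            have e2 : bbar * l0 ^ 2 ≤ b (T - s) * l0 ^ 2 :=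
              mul_le_mul_of_nonneg_right hb1.1 (pow_pos hl0pos 2).le
            linarith
          linarith
        · have hup := stayBelow' (y := fun u => R T (T - u))
            (f := fun s => -((l (T - s)) ^ 2 * (R T (T - s)) ^ 2
              - 2 * b (T - s) * (R T (T - s)) - β * (1 - β)))
            (a := 0) (b := T) (M := 0)
            (hz T hT) (by show R T (T - 0) ≤ 0; rw [hy0 T hT])
            (by
              intro u hu hge
              have hge' : (0:ℝ) ≤ R T (T - u) := hge
              show -((l (T - u)) ^ 2 * (R T (T - u)) ^ 2
                - 2 * b (T - u) * (R T (T - u)) - β * (1 - β)) < 0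
              rw [Set.mem_Icc] at hu
              have hu0 : 0 ≤ T - u := by linarith [hu.2]
              have hbu := hbq (T - u) hu0
              have hbz : b (T - u) * R T (T - u) ≤ 0 :=
                mul_nonpos_of_nonpos_of_nonneg (by linarith [hbq (T - u) hu0, hq]) hge'
              have e5 : 0 ≤ (l (T - u)) ^ 2 * (R T (T - u)) ^ 2 :=
                mul_nonneg (sq_nonneg _) (sq_nonneg _)
              have e6 : β * (1 - β) < 0 := mul_neg_of_neg_of_pos hβneg h1β
              linarith [hbz, e5, e6])
          exact hup s (Set.mem_Icc.2 hs)
      have hXdef : (0:ℝ) ≤ -(bbar / l0 ^ 2) := by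
        have : bbar / l0 ^ 2 ≤ 0 :=
          div_nonpos_of_nonpos_of_nonneg (by linarith [hbbarneg, hq]) (sq_nonneg l0)
        linarith
      have hCb : ∀ T : ℝ, 0 < T → ∀ t ∈ Set.Icc (0:ℝ) T, |R T t| ≤ -(bbar / l0 ^ 2) := by
        intro T hT t ht
        rw [Set.mem_Icc] at ht
        have hmem : T - t ∈ Set.Icc (0:ℝ) T := Set.mem_Icc.2 ⟨by linarith, by linarith⟩
        have := hbound T hT (T - t) hmem
        rw [sub_sub_cancel] at this
        exact abs_le.2 ⟨by linarith [this.1], by linarith [this.2]⟩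
      apply main (-(bbar / l0 ^ 2)) hCb
      -- path lower bound from convergence of b/l²
      have hbtend : Tendsto b atTop (nhds bbar) := by
        have h4 : Tendsto (fun t => -(p + q) + β * l t) atTop (nhds (-(p + q) + β * p)) :=
          tendsto_const_nhds.add (tendsto_const_nhds.mul hltend)
        rw [← hbbar'] at h4
        exact h4.congr fun t => (hb t).symm
      have hbltend : Tendsto (fun t => b t / (l t) ^ 2) atTop (nhds (bbar / p ^ 2)) :=
        hbtend.div (hltend.pow 2) (pow_ne_zero 2 hppos.ne')
      have hgt : rbar + m < bbar / p ^ 2 := by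
        rw [hrm, div_lt_div_iff₀ hp2 hp2]
        have := mul_pos hKpos hp2
        linarith [this]
      obtain ⟨a₂, ha₂⟩ := eventually_atTop.1 (hbltend.eventually_const_le hgt)
      apply keyp (-(bbar / l0 ^ 2)) hXdef
        (fun T hT s hs => abs_le.2
          ⟨by linarith [(hbound T hT s hs).1], by linarith [(hbound T hT s hs).2]⟩)
        (max a₂ 0) (le_max_right _ _)
      intro T hT s hs hts
      rw [Set.mem_Icc] at hs
      have hmem : T - s ∈ Set.Icc (0:ℝ) T :=
        Set.mem_Icc.2 ⟨by linarith [hs.2], by linarith [hs.1]⟩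
      have hs1 := hside_pos hppos hαpos T hT (T - s) hmem
      have := ha₂ (T - s) (le_trans (le_max_left _ _) hts)
      linarith
end

section
/- For q > 0, p ≥ 0, α ∈ (−∞,1) with α ≠ 0, and any λ̄ ∈ ℝ, define ḡ := p²·v̄² + 2·ρ̄·v̄ − p²·R̄ − β(1−β)·λ̄². Then ḡ = (α/(1−α)²)·((p+q)²/K²)·λ̄² − (b̄ + K), and moreover (1−α)·ḡ = F(α) + G(α), where F(α) := (p+q)²·λ̄²·α / [(1−α)(p+q)² + α·p·(p+2q)] and G(α) := (p+q) − q·α − (1−α)^{1/2}·[(1−α)(p+q)² + α·p·(p+2q)]^{1/2}. -/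
set_option maxHeartbeats 1000000


/-- For `q > 0`, `p ≥ 0`, `α < 1`, `α ≠ 0`, and any `λ̄ ∈ ℝ`, with
`ḡ := p²v̄² + 2ρ̄v̄ − p²R̄ − β(1−β)λ̄²`:
`ḡ = (α/(1−α)²)·((p+q)²/K²)·λ̄² − (b̄ + K)` and `(1−α)·ḡ = F(α) + G(α)`. -/
theorem stmt_9 (p q α β : ℝ) (hq : 0 < q) (hp : 0 ≤ p)
    (hα1 : α < 1) (hα0 : α ≠ 0) (hαβ : 1 / α + 1 / β = 1)
    (bbar K Rbar : ℝ)
    (hbbar : bbar = -(1 - β) * p - q)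
    (hK : K = Real.sqrt (bbar ^ 2 + β * (1 - β) * p ^ 2))
    (hRbar0 : p = 0 → Rbar = β * (1 - β) / (2 * q))
    (hRbar1 : 0 < p → Rbar = (bbar + K) / p ^ 2)
    (lambar rhobar vbar gbar : ℝ)
    (hrhobar : rhobar = -β * p * lambar)
    (hvbar : (bbar - p ^ 2 * Rbar) * vbar + β * (1 - β) * lambar - Rbar * rhobar = 0)
    (hgbar : gbar = p ^ 2 * vbar ^ 2 + 2 * rhobar * vbar - p ^ 2 * Rbar
      - β * (1 - β) * lambar ^ 2) :
    gbar = α / (1 - α) ^ 2 * ((p + q) ^ 2 / K ^ 2) * lambar ^ 2 - (bbar + K) ∧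
    (1 - α) * gbar
      = (p + q) ^ 2 * lambar ^ 2 * α
          / ((1 - α) * (p + q) ^ 2 + α * p * (p + 2 * q))
        + ((p + q) - q * α
          - Real.sqrt (1 - α) * Real.sqrt ((1 - α) * (p + q) ^ 2 + α * p * (p + 2 * q))) := by
  have h1a : (0:ℝ) < 1 - α := by linarith
  have hαne : α - 1 ≠ 0 := by intro h; linarith
  have hβ0 : β ≠ 0 := by
    intro h
    rw [h, div_zero, add_zero] at hαβ
    have : α = 1 := by field_simp at hαβ; linarith
    linarith
  have hβ : β = α / (α - 1) := by
    field_simp at hαβ ⊢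
    linarith
  subst hβ
  subst hbbar
  subst hrhobar
  subst hgbar
  have hD : 0 < (p + q) ^ 2 - α * q ^ 2 := by nlinarith [mul_pos h1a (mul_pos hq hq), mul_nonneg hp hq.le, sq_nonneg p]
  have harg : (-(1 - α / (α - 1)) * p - q) ^ 2 + α / (α - 1) * (1 - α / (α - 1)) * p ^ 2
      = ((p + q) ^ 2 - α * q ^ 2) / (1 - α) := by
    field_simp
    ring
  have harg0 : 0 ≤ (-(1 - α / (α - 1)) * p - q) ^ 2 + α / (α - 1) * (1 - α / (α - 1)) * p ^ 2 := by
    rw [harg]; positivity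
  have hKK : (1 - α) * K ^ 2 = (p + q) ^ 2 - α * q ^ 2 := by
    rw [hK, Real.sq_sqrt harg0, harg]
    field_simp
  have hKpos : 0 < K := by
    rw [hK]
    apply Real.sqrt_pos.mpr
    rw [harg]; positivity
  have h1K : (1 - α) * K = Real.sqrt (1 - α) * Real.sqrt ((p + q) ^ 2 - α * q ^ 2) := by
    rw [hK, show (-(1 - α / (α - 1)) * p - q) ^ 2 + α / (α - 1) * (1 - α / (α - 1)) * p ^ 2
      = ((p + q) ^ 2 - α * q ^ 2) / (1 - α) from harg, Real.sqrt_div hD.le]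
    have hs : Real.sqrt (1 - α) * Real.sqrt (1 - α) = 1 - α := Real.mul_self_sqrt h1a.le
    have hs0 : Real.sqrt (1 - α) ≠ 0 := by positivity
    have hs' : Real.sqrt (1 - α) ^ 2 = 1 - α := Real.sq_sqrt h1a.le
    field_simp
    linear_combination (-1) * hs'
  rcases eq_or_lt_of_le hp with hp0 | hp0
  · subst hp0
    have hKq : K = q := by nlinarith [hKK, mul_pos h1a (add_pos hKpos hq)]
    constructor
    · rw [hKq]
      have h6 : q ^ 2 - α * q ^ 2 ≠ 0 := ne_of_gt (by nlinarith [mul_pos h1a (mul_pos hq hq)])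
      field_simp [h6]
      ring
    · rw [show (1 - α) * (0 + q) ^ 2 + α * 0 * (0 + 2 * q) = (0 + q) ^ 2 - α * q ^ 2 by ring,
        ← h1K, hKq]
      have h6 : q ^ 2 - α * q ^ 2 ≠ 0 := ne_of_gt (by nlinarith [mul_pos h1a (mul_pos hq hq)])
      field_simp [h6]
      ring
  · have hR := hRbar1 hp0
    subst hR
    have hp' : p ≠ 0 := ne_of_gt hp0
    have hKne : K ≠ 0 := ne_of_gt hKpos
    have hbK : -(1 - α / (α - 1)) * p - q - p ^ 2 * ((-(1 - α / (α - 1)) * p - q + K) / p ^ 2)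
        = -K := by field_simp; ring
    rw [hbK] at hvbar
    have h1 : p * K * vbar = α / (α - 1) * lambar * (K - q) := by
      field_simp at hvbar
      linear_combination (norm := (field_simp; ring)) (-1 / (α - 1) ^ 2) * hvbar
    have goal1 : p ^ 2 * vbar ^ 2 + 2 * (-(α / (α - 1)) * p * lambar) * vbar
        - p ^ 2 * ((-(1 - α / (α - 1)) * p - q + K) / p ^ 2)
        - α / (α - 1) * (1 - α / (α - 1)) * lambar ^ 2
        = α / (1 - α) ^ 2 * ((p + q) ^ 2 / K ^ 2) * lambar ^ 2
          - (-(1 - α / (α - 1)) * p - q + K) := by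
      linear_combination (norm := (field_simp; ring))
        ((p * K * vbar + α / (α - 1) * lambar * (K - q) - 2 * (α / (α - 1)) * lambar * K) / K ^ 2) * h1
        + (α * lambar ^ 2 / ((1 - α) ^ 2 * K ^ 2)) * hKK
    refine ⟨goal1, ?_⟩
    rw [show (1 - α) * (p + q) ^ 2 + α * p * (p + 2 * q) = (p + q) ^ 2 - α * q ^ 2 by ring,
      ← h1K, goal1]
    linear_combination (norm := (field_simp; ring))
      (-(α * (p + q) ^ 2 * lambar ^ 2) / ((1 - α) * K ^ 2 * ((p + q) ^ 2 - α * q ^ 2))) * hKK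
end

section
/- Suppose p > 0 and α* < α < 0, where α* := −∞ if 0 < p ≤ 2q and α* := −3 − 8q/(p−2q) if p > 2q. Then p²·R̄² < (1−β)² (equivalently, −3p − 2q < (p−2q)·α), hence Q := β·(1 − (1−α)²·p²·R̄²) > 0, and consequently for every T > 0 the backward Riccati equation U̇(t) − l(t)²·U(t)² + 2·d(t)·U(t) + Q = 0 for t ∈ [0,T], with U(T) = 0, has a unique nonnegative solution, where d(t) := b(t) − α·p·R̄·l(t). -/
set_option maxHeartbeats 2000000

open Set

/-- If `V` has derivative `g'` on `[a,b]`, ends at `V b ≥ c`, and the derivative is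
nonpositive whenever `V < c`, then `V ≥ c` on `[a,b]`. -/
private lemma stays_above {V g' : ℝ → ℝ} {a b c : ℝ}
    (hderiv : ∀ τ ∈ Set.Icc a b, HasDerivWithinAt V (g' τ) (Set.Icc a b) τ)
    (hVb : c ≤ V b)
    (hneg : ∀ τ ∈ Set.Icc a b, V τ < c → g' τ ≤ 0) :
    ∀ τ ∈ Set.Icc a b, c ≤ V τ := by
  intro τ₁ hτ₁
  by_contra hlt
  push_neg at hlt
  have hVcont : ContinuousOn V (Set.Icc a b) := fun t ht => (hderiv t ht).continuousWithinAt
  set S : Set ℝ := Set.Icc τ₁ b ∩ V ⁻¹' Set.Ici c with hS_def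
  have hsub2 : Set.Icc τ₁ b ⊆ Set.Icc a b := Set.Icc_subset_Icc hτ₁.1 le_rfl
  have hSne : S.Nonempty := ⟨b, ⟨hτ₁.2, le_rfl⟩, hVb⟩
  have hSclosed : IsClosed S :=
    ContinuousOn.preimage_isClosed_of_isClosed (hVcont.mono hsub2) isClosed_Icc isClosed_Ici
  have hScompact : IsCompact S :=
    IsCompact.of_isClosed_subset isCompact_Icc hSclosed Set.inter_subset_left
  set τ₀ := sInf S with hτ₀_def
  have hτ₀S : τ₀ ∈ S := hScompact.sInf_mem hSne
  have hτ₀b : τ₀ ≤ b := hτ₀S.1.2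
  have hVτ₀ : c ≤ V τ₀ := hτ₀S.2
  have hτ₁τ₀ : τ₁ < τ₀ := lt_of_le_of_ne hτ₀S.1.1 (fun h => by rw [← h] at hVτ₀; linarith)
  have hmid : ∀ ξ ∈ Set.Ioo τ₁ τ₀, V ξ < c := by
    intro ξ hξ
    by_contra hge
    push_neg at hge
    have hmem : ξ ∈ S := ⟨⟨hξ.1.le, hξ.2.le.trans hτ₀b⟩, hge⟩
    have : τ₀ ≤ ξ := csInf_le ⟨τ₁, fun x hx => hx.1.1⟩ hmem
    linarith [hξ.2]
  obtain ⟨ξ, hξ, hslope⟩ :=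
    exists_hasDerivAt_eq_slope V g' hτ₁τ₀
      (hVcont.mono (Set.Icc_subset_Icc hτ₁.1 hτ₀b))
      (fun x hx => (hderiv x ⟨hτ₁.1.trans hx.1.le, hx.2.le.trans hτ₀b⟩).hasDerivAt
        (Icc_mem_nhds (lt_of_le_of_lt hτ₁.1 hx.1) (lt_of_lt_of_le hx.2 hτ₀b)))
  have h1 : 0 < g' ξ := by
    rw [hslope]
    apply div_pos (by linarith) (by linarith)
  have h2 : g' ξ ≤ 0 :=
    hneg ξ ⟨hτ₁.1.trans hξ.1.le, hξ.2.le.trans hτ₀b⟩ (hmid ξ hξ)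
  linarith

/-- Lemma 3.5 (ii): for `p > 0` and `α* < α < 0`, one has `p²R̄² < (1−β)²`
(equivalently `−3p − 2q < (p−2q)α`), hence `Q := β(1 − (1−α)²p²R̄²) > 0`, and for
every `T > 0` the backward Riccati equation `U̇ − l²U² + 2dU + Q = 0`, `U(T) = 0`,
with `d(t) = b(t) − αpR̄l(t)`, has a unique nonnegative solution. -/
theorem stmt_10 (p q α β : ℝ) (hq : 0 < q) (hp : 0 < p)
    (hα : α < 0) (hαstar : 2 * q < p → -3 - 8 * q / (p - 2 * q) < α)
    (hαβ : 1 / α + 1 / β = 1)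
    (l b : ℝ → ℝ)
    (hl : ∀ t : ℝ, l t = p * (1 - 2 * p * q / ((2 * q + p) ^ 2 * Real.exp (2 * q * t) - p ^ 2)))
    (hb : ∀ t : ℝ, b t = -(p + q) + β * l t)
    (bbar K Rbar Q : ℝ) (d : ℝ → ℝ)
    (hbbar : bbar = -(1 - β) * p - q)
    (hK : K = Real.sqrt (bbar ^ 2 + β * (1 - β) * p ^ 2))
    (hRbar : Rbar = (bbar + K) / p ^ 2)
    (hQ : Q = β * (1 - (1 - α) ^ 2 * p ^ 2 * Rbar ^ 2))
    (hd : ∀ t : ℝ, d t = b t - α * p * Rbar * l t) :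
    p ^ 2 * Rbar ^ 2 < (1 - β) ^ 2 ∧
    -3 * p - 2 * q < (p - 2 * q) * α ∧
    0 < Q ∧
    (∀ T : ℝ, 0 < T →
      ∃ U : ℝ → ℝ,
        ((∀ t ∈ Set.Icc (0 : ℝ) T,
            HasDerivWithinAt U ((l t) ^ 2 * (U t) ^ 2 - 2 * d t * U t - Q)
              (Set.Icc (0 : ℝ) T) t) ∧
          U T = 0 ∧ (∀ t ∈ Set.Icc (0 : ℝ) T, 0 ≤ U t)) ∧
        (∀ U' : ℝ → ℝ,
          ((∀ t ∈ Set.Icc (0 : ℝ) T,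
              HasDerivWithinAt U' ((l t) ^ 2 * (U' t) ^ 2 - 2 * d t * U' t - Q)
                (Set.Icc (0 : ℝ) T) t) ∧
            U' T = 0 ∧ (∀ t ∈ Set.Icc (0 : ℝ) T, 0 ≤ U' t)) →
          ∀ t ∈ Set.Icc (0 : ℝ) T, U' t = U t)) := by
  have hαne : α ≠ 0 := ne_of_lt hα
  have hβne : β ≠ 0 := by
    intro h
    rw [h] at hαβ
    simp at hαβ
    rcases hαβ with h1 | h1 <;> simp_all <;> linarith
  have hβeq : β * (α - 1) = α := by
    field_simp at hαβ
    linarith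
  have hβpos : 0 < β := by nlinarith
  have hβlt1 : β < 1 := by nlinarith
  have hbb : (1 - β) * (1 - α) = 1 := by linear_combination hβeq
  have A2 : -3 * p - 2 * q < (p - 2 * q) * α := by
    rcases lt_trichotomy (2 * q) p with h | h | h
    · have h8 := hαstar h
      have hpq : 0 < p - 2 * q := by linarith
      have hmul := mul_lt_mul_of_pos_left h8 hpq
      have hexp : (p - 2 * q) * (-3 - 8 * q / (p - 2 * q)) = -3 * p - 2 * q := by
        field_simp
        ring
      linarith [hexp ▸ hmul]
    · have hz : p - 2 * q = 0 := by linarith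
      rw [hz, zero_mul]
      linarith
    · nlinarith
  have h1α : (0:ℝ) < 1 - α := by linarith
  have h4β : p * (4 * β - 3) < 2 * q := by
    have key : (1 - α) * (p * (4 * β - 3) - 2 * q)
        = -((p - 2 * q) * α + 3 * p + 2 * q) - 4 * p * (β * (α - 1) - α) := by ring
    have h0 : β * (α - 1) - α = 0 := by rw [hβeq]; ring
    have h2 : (1 - α) * (p * (4 * β - 3) - 2 * q) < 0 := by
      rw [key, h0]; linarith
    nlinarith
  have hKsqnn : 0 ≤ bbar ^ 2 + β * (1 - β) * p ^ 2 := by nlinarith [sq_nonneg bbar, sq_nonneg p]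
  have hKsq : K ^ 2 = bbar ^ 2 + β * (1 - β) * p ^ 2 := by rw [hK]; exact Real.sq_sqrt hKsqnn
  have hKnn : 0 ≤ K := hK ▸ Real.sqrt_nonneg _
  have hnb : 0 < -bbar := by rw [hbbar]; nlinarith
  have hKgt : -bbar < K := by
    nlinarith [hKsq, sq_nonneg p,
      mul_pos (mul_pos hβpos (by linarith : (0:ℝ) < 1 - β)) (mul_pos hp hp)]
  have hKlt : K < 2 * (1 - β) * p + q := by
    have hRHS : 0 < 2 * (1 - β) * p + q := by nlinarith
    have hdiff : (2 * (1 - β) * p + q) ^ 2 - K ^ 2 = (1 - β) * p * (2 * q - p * (4 * β - 3)) := by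
      rw [hKsq, hbbar]; ring
    have hsq : K ^ 2 < (2 * (1 - β) * p + q) ^ 2 := by
      nlinarith [hdiff, mul_pos (mul_pos (by linarith : (0:ℝ) < 1 - β) hp)
        (by linarith : (0:ℝ) < 2 * q - p * (4 * β - 3))]
    exact lt_of_pow_lt_pow_left₀ 2 hRHS.le hsq
  have hpR : p ^ 2 * Rbar = bbar + K := by rw [hRbar]; field_simp
  have hpRpos : 0 < bbar + K := by linarith
  have hpRlt : bbar + K < (1 - β) * p := by linarith
  have A1 : p ^ 2 * Rbar ^ 2 < (1 - β) ^ 2 := by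
    have h1 : (p ^ 2 * Rbar) ^ 2 < ((1 - β) * p) ^ 2 := by nlinarith
    have hp2 : 0 < p ^ 2 := by positivity
    nlinarith [h1, hp2]
  have A3 : 0 < Q := by
    rw [hQ]
    have h2 : (1 - α) ^ 2 * (p ^ 2 * Rbar ^ 2) < (1 - α) ^ 2 * (1 - β) ^ 2 :=
      mul_lt_mul_of_pos_left A1 (pow_pos h1α 2)
    have h3 : (1 - α) ^ 2 * (1 - β) ^ 2 = 1 := by nlinarith [hbb]
    apply mul_pos hβpos
    nlinarith
  refine ⟨A1, A2, A3, ?_⟩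
  intro T hT
  -- basic facts about `l` on `[0, ∞)`
  have hqqp : (0:ℝ) < 4 * q * (q + p) :=
    mul_pos (by linarith only [hq] : (0:ℝ) < 4 * q) (by linarith only [hp, hq])
  have hEfact : ∀ t : ℝ, 0 ≤ t →
      4 * q * (q + p) ≤ (2 * q + p) ^ 2 * Real.exp (2 * q * t) - p ^ 2 := by
    intro t ht
    have hexp : (1:ℝ) ≤ Real.exp (2 * q * t) :=
      Real.one_le_exp (mul_nonneg (by linarith) ht)
    linarith only [mul_le_mul_of_nonneg_left hexp (sq_nonneg (2 * q + p))]
  set l0 : ℝ := p * (p + 2 * q) / (2 * (p + q)) with hl0_def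
  have hl0pos : 0 < l0 :=
    div_pos (mul_pos hp (by linarith only [hp, hq])) (by linarith only [hp, hq])
  have hlb : ∀ t : ℝ, 0 ≤ t → l0 ≤ l t ∧ l t ≤ p := by
    intro t ht
    have hE := hEfact t ht
    set E := (2 * q + p) ^ 2 * Real.exp (2 * q * t) - p ^ 2 with hE_def
    have hEpos : 0 < E := lt_of_lt_of_le hqqp hE
    have hfr : 2 * p * q / E ≤ p / (2 * (q + p)) := by
      rw [div_le_div_iff₀ hEpos (by linarith only [hp, hq] : (0:ℝ) < 2 * (q + p))]
      linarith only [mul_le_mul_of_nonneg_left hE hp.le]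
    have hfrnn : 0 ≤ 2 * p * q / E :=
      div_nonneg (by linarith only [mul_pos hp hq]) hEpos.le
    constructor
    · rw [hl t, ← hE_def]
      have heq : p * (1 - p / (2 * (q + p))) = l0 := by
        rw [hl0_def]; field_simp; ring
      have hmul := mul_le_mul_of_nonneg_left hfr hp.le
      linarith only [heq, hmul]
    · rw [hl t, ← hE_def]
      have hmn := mul_nonneg hp.le hfrnn
      linarith only [hmn]
  have hlcont : ContinuousOn l (Set.Ici 0) := by
    have hcf : ContinuousOn
        (fun t : ℝ => p * (1 - 2 * p * q / ((2 * q + p) ^ 2 * Real.exp (2 * q * t) - p ^ 2)))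
        (Set.Ici 0) := by
      apply continuousOn_const.mul
      apply continuousOn_const.sub
      apply ContinuousOn.div continuousOn_const
      · exact Continuous.continuousOn (by continuity)
      · intro t ht
        exact ne_of_gt (by linarith only [hEfact t ht, hqqp])
    exact hcf.congr (fun t ht => hl t)
  -- facts about `d`
  set γ : ℝ := β - α * p * Rbar with hγ_def
  have hd' : ∀ t : ℝ, d t = -(p + q) + γ * l t := by
    intro t; rw [hd t, hb t, hγ_def]; ring
  set D : ℝ := (p + q) + |γ| * p with hD_def
  have hDnn : 0 ≤ D := by
    have hmn := mul_nonneg (abs_nonneg γ) hp.le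
    rw [hD_def]; linarith only [hmn, hp, hq]
  have hd_ub : ∀ t : ℝ, 0 ≤ t → d t ≤ D := by
    intro t ht
    obtain ⟨h1, h2⟩ := hlb t ht
    have hltnn : 0 ≤ l t := le_trans hl0pos.le h1
    rw [hd' t, hD_def]
    linarith only [mul_nonneg (sub_nonneg.mpr (le_abs_self γ)) hltnn,
      mul_nonneg (abs_nonneg γ) (by linarith only [h2] : 0 ≤ p - l t), hp, hq]
  have hd_lb : ∀ t : ℝ, 0 ≤ t → -D ≤ d t := by
    intro t ht
    obtain ⟨h1, h2⟩ := hlb t ht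
    have hltnn : 0 ≤ l t := le_trans hl0pos.le h1
    rw [hd' t, hD_def]
    linarith only [mul_nonneg (by linarith only [neg_abs_le γ] : 0 ≤ |γ| + γ) hltnn,
      mul_nonneg (abs_nonneg γ) (by linarith only [h2] : 0 ≤ p - l t), hp, hq]
  have hdcont : ContinuousOn d (Set.Ici 0) :=
    (continuousOn_const.add (continuousOn_const.mul hlcont)).congr (fun t ht => hd' t)
  -- the a priori bound M
  set M : ℝ := max 1 ((2 * D + Q) / l0 ^ 2) with hM_def
  have hM1 : (1:ℝ) ≤ M := le_max_left _ _
  have hMpos : (0:ℝ) < M := lt_of_lt_of_le one_pos hM1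
  have hMkey0 : 2 * D + Q ≤ l0 ^ 2 * M := by
    have h := le_max_right 1 ((2 * D + Q) / l0 ^ 2)
    rw [← hM_def, div_le_iff₀ (pow_pos hl0pos 2)] at h
    linarith only [h]
  have hMkey : ∀ t : ℝ, 0 ≤ t → 0 ≤ (l t) ^ 2 * M ^ 2 - 2 * d t * M - Q := by
    intro t ht
    obtain ⟨h1, h2⟩ := hlb t ht
    have h3 := hd_ub t ht
    have e1 : l0 ^ 2 * M ^ 2 ≤ (l t) ^ 2 * M ^ 2 := by
      have f1 : 0 ≤ (l t - l0) * (l t + l0) :=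
        mul_nonneg (by linarith only [h1]) (by linarith only [h1, hl0pos])
      have f2 := mul_nonneg f1 (sq_nonneg M)
      linarith only [f2]
    have e2 : (2 * D + Q) * M ≤ l0 ^ 2 * M ^ 2 := by
      linarith only [mul_le_mul_of_nonneg_right hMkey0 hMpos.le]
    have e3 : 2 * d t * M + Q ≤ (2 * D + Q) * M := by
      linarith only [mul_le_mul_of_nonneg_right h3 hMpos.le,
        mul_nonneg (by linarith only [hM1] : (0:ℝ) ≤ M - 1) A3.le]
    linarith only [e1, e2, e3]
  -- the clamping functions
  set cl : ℝ → ℝ := fun x => max 0 (min x M) with hcl_def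
  have hcl0 : ∀ x : ℝ, 0 ≤ cl x := fun x => le_max_left _ _
  have hclM : ∀ x : ℝ, cl x ≤ M := fun x => max_le hMpos.le (min_le_right _ _)
  have hcl_id : ∀ x : ℝ, 0 ≤ x → x ≤ M → cl x = x := by
    intro x h1 h2
    rw [hcl_def]; simp only
    rw [min_eq_left h2, max_eq_right h1]
  have hcl_lip : ∀ x y : ℝ, |cl x - cl y| ≤ |x - y| := by
    intro x y
    rw [hcl_def]; simp only
    calc |max 0 (min x M) - max 0 (min y M)|
        = |max (min x M) 0 - max (min y M) 0| := by rw [max_comm, max_comm (0:ℝ)]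
      _ ≤ |min x M - min y M| := abs_max_sub_max_le_abs _ _ _
      _ ≤ |x - y| := by
          have h := abs_min_sub_min_le_max x M y M
          simpa using h
  set pr : ℝ → ℝ := fun τ => max 0 (min τ T) with hpr_def
  have hpr_mem : ∀ τ : ℝ, 0 ≤ pr τ ∧ pr τ ≤ T :=
    fun τ => ⟨le_max_left _ _, max_le hT.le (min_le_right _ _)⟩
  have hpr_id : ∀ τ ∈ Set.Icc (0:ℝ) T, pr τ = τ := by
    intro τ hτ
    rw [hpr_def]; simp only
    rw [min_eq_left hτ.2, max_eq_right hτ.1]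
  have hpr_cont : Continuous pr := continuous_const.max (continuous_id.min continuous_const)
  have hlpr : Continuous fun τ => l (pr τ) := by
    have := hlcont.comp_continuous hpr_cont (fun τ => Set.mem_Ici.mpr (hpr_mem τ).1)
    exact this
  have hdpr : Continuous fun τ => d (pr τ) := by
    have := hdcont.comp_continuous hpr_cont (fun τ => Set.mem_Ici.mpr (hpr_mem τ).1)
    exact this
  have hbd : ∀ τ : ℝ, l0 ≤ l (pr τ) ∧ l (pr τ) ≤ p ∧ -D ≤ d (pr τ) ∧ d (pr τ) ≤ D :=
    fun τ => ⟨(hlb _ (hpr_mem τ).1).1, (hlb _ (hpr_mem τ).1).2,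
      hd_lb _ (hpr_mem τ).1, hd_ub _ (hpr_mem τ).1⟩
  -- the truncated vector field
  set v : ℝ → ℝ → ℝ := fun τ x => (l (pr τ)) ^ 2 * (cl x) ^ 2 - 2 * d (pr τ) * cl x - Q
    with hv_def
  set C₀ : ℝ := p ^ 2 * M ^ 2 + 2 * D * M + Q with hC0_def
  set K₀ : ℝ := 2 * p ^ 2 * M + 2 * D with hK0_def
  have hK₀nn : 0 ≤ K₀ := by
    rw [hK0_def]
    linarith only [mul_nonneg (sq_nonneg p) hMpos.le, hDnn]
  have hC₀nn : 0 ≤ C₀ := by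
    rw [hC0_def]
    linarith only [mul_nonneg (sq_nonneg p) (sq_nonneg M), mul_nonneg hDnn hMpos.le, A3]
  have hPL : IsPicardLindelof (tmin := 0) (tmax := T) v ⟨T, hT.le, le_rfl⟩ (0:ℝ)
      (Real.toNNReal (C₀ * T + 1)) 0 (Real.toNNReal C₀) (Real.toNNReal K₀) := by
    refine ⟨?_, ?_, ?_, ?_⟩
    · -- Lipschitz
      intro t _
      apply LipschitzWith.lipschitzOnWith
      apply LipschitzWith.of_dist_le_mul
      intro x y
      rw [Real.dist_eq, Real.dist_eq, Real.coe_toNNReal _ hK₀nn]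
      obtain ⟨hb1, hb2, hb3, hb4⟩ := hbd t
      have hfac : v t x - v t y
          = ((l (pr t)) ^ 2 * (cl x + cl y) - 2 * d (pr t)) * (cl x - cl y) := by
        simp only [hv_def]; ring
      have hL2 : (l (pr t)) ^ 2 ≤ p ^ 2 := by
        linarith only [mul_nonneg (sub_nonneg.mpr hb2) (by linarith only [hb1, hl0pos, hp] :
          0 ≤ p + l (pr t))]
      have hsum1 : 0 ≤ cl x + cl y := by linarith only [hcl0 x, hcl0 y]
      have hsum2 : cl x + cl y ≤ 2 * M := by linarith only [hclM x, hclM y]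
      have hup : (l (pr t)) ^ 2 * (cl x + cl y) ≤ p ^ 2 * (2 * M) :=
        mul_le_mul hL2 hsum2 hsum1 (sq_nonneg p)
      have hlo : 0 ≤ (l (pr t)) ^ 2 * (cl x + cl y) := mul_nonneg (sq_nonneg _) hsum1
      have hA : |(l (pr t)) ^ 2 * (cl x + cl y) - 2 * d (pr t)| ≤ K₀ := by
        rw [abs_le, hK0_def]
        refine ⟨by linarith only [hlo, hb4, mul_nonneg (sq_nonneg p) hMpos.le],
          by linarith only [hup, hb3]⟩
      calc |v t x - v t y|
          = |(l (pr t)) ^ 2 * (cl x + cl y) - 2 * d (pr t)| * |cl x - cl y| := by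
            rw [hfac, abs_mul]
        _ ≤ K₀ * |x - y| := mul_le_mul hA (hcl_lip x y) (abs_nonneg _) hK₀nn
    · -- continuity in time
      intro x _
      apply Continuous.continuousOn
      simp only [hv_def]
      exact (((hlpr.pow 2).mul continuous_const).sub
        ((continuous_const.mul hdpr).mul continuous_const)).sub continuous_const
    · -- norm bound
      intro t ht x _
      obtain ⟨hb1, hb2, hb3, hb4⟩ := hbd t
      have hL2 : (l (pr t)) ^ 2 ≤ p ^ 2 := by
        linarith only [mul_nonneg (sub_nonneg.mpr hb2) (by linarith only [hb1, hl0pos, hp] :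
          0 ≤ p + l (pr t))]
      have h1 : (l (pr t)) ^ 2 * (cl x) ^ 2 ≤ p ^ 2 * M ^ 2 :=
        mul_le_mul hL2 (by
          have hh := mul_le_mul (hclM x) (hclM x) (hcl0 x) hMpos.le
          linarith only [hh]) (sq_nonneg _) (sq_nonneg p)
      have h1' : 0 ≤ (l (pr t)) ^ 2 * (cl x) ^ 2 := mul_nonneg (sq_nonneg _) (sq_nonneg _)
      have h2 : |d (pr t) * cl x| ≤ D * M := by
        rw [abs_mul]
        exact mul_le_mul (abs_le.mpr ⟨hb3, hb4⟩)
          (by rw [abs_of_nonneg (hcl0 x)]; exact hclM x) (abs_nonneg _) hDnn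
      obtain ⟨h2a, h2b⟩ := abs_le.mp h2
      rw [Real.coe_toNNReal _ hC₀nn, Real.norm_eq_abs, abs_le]
      simp only [hv_def, hC0_def]
      refine ⟨by linarith only [h1', h2b, mul_nonneg (sq_nonneg p) (sq_nonneg M),
          mul_nonneg hDnn hMpos.le, A3],
        by linarith only [h1, h2a, A3]⟩
    · -- C * tdist ≤ R
      have hmax : max (T - T) (T - 0) = T := by
        rw [sub_self, sub_zero]; exact max_eq_right hT.le
      show (Real.toNNReal C₀ : ℝ) * max (T - T) (T - 0) ≤ ((Real.toNNReal (C₀ * T + 1)) : ℝ) - ((0:NNReal):ℝ)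
      rw [hmax, Real.coe_toNNReal _ hC₀nn, Real.coe_toNNReal _ (by linarith only [mul_nonneg hC₀nn hT.le]), NNReal.coe_zero]; linarith only []
  obtain ⟨U, hUT', hUderiv⟩ := hPL.exists_eq_forall_mem_Icc_hasDerivWithinAt₀
  have hUT : U T = 0 := hUT'
  -- invariance: 0 ≤ U ≤ M on [0, T]
  have hU0 : ∀ τ ∈ Set.Icc (0:ℝ) T, 0 ≤ U τ := by
    apply stays_above hUderiv (le_of_eq hUT.symm)
    intro τ hτ hUτ
    have hclU : cl (U τ) = 0 := by
      rw [hcl_def]; simp only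
      rw [min_eq_left (le_trans hUτ.le hMpos.le), max_eq_left hUτ.le]
    simp only [hv_def, hclU]
    have hz : (l (pr τ)) ^ 2 * (0:ℝ) ^ 2 - 2 * d (pr τ) * 0 - Q = -Q := by ring
    rw [hz]
    linarith only [A3]
  have hUM : ∀ τ ∈ Set.Icc (0:ℝ) T, U τ ≤ M := by
    have hneg' : ∀ τ ∈ Set.Icc (0:ℝ) T, -U τ < -M → -(v τ (U τ)) ≤ 0 := by
      intro τ hτ h
      have hUτ : M < U τ := by linarith
      have hclU : cl (U τ) = M := by
        rw [hcl_def]; simp only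
        rw [min_eq_right hUτ.le, max_eq_right hMpos.le]
      have hkey := hMkey τ hτ.1
      simp only [hv_def, hclU]
      rw [hpr_id τ hτ]
      linarith only [hkey]
    have hVb : -M ≤ -U T := by rw [hUT]; linarith only [hMpos]
    have hres := stays_above (fun τ hτ => (hUderiv τ hτ).neg) hVb hneg'
    intro τ hτ
    have := hres τ hτ
    linarith only [this, Pi.neg_apply U τ]
  -- the derivative in the original (unclamped) form
  have hUeq : ∀ t ∈ Set.Icc (0:ℝ) T,
      HasDerivWithinAt U ((l t) ^ 2 * (U t) ^ 2 - 2 * d t * U t - Q) (Set.Icc (0:ℝ) T) t := by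
    intro t ht
    have h1 := hUderiv t ht
    have heq : v t (U t) = (l t) ^ 2 * (U t) ^ 2 - 2 * d t * U t - Q := by
      simp only [hv_def]
      rw [hpr_id t ht, hcl_id (U t) (hU0 t ht) (hUM t ht)]
    rwa [heq] at h1
  refine ⟨U, ⟨hUeq, hUT, hU0⟩, ?_⟩
  -- uniqueness
  rintro U' ⟨hU'd, hU'T, -⟩
  have hUcont : ContinuousOn U (Set.Icc 0 T) := fun t ht => (hUderiv t ht).continuousWithinAt
  have hU'cont : ContinuousOn U' (Set.Icc 0 T) := fun t ht => (hU'd t ht).continuousWithinAt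
  obtain ⟨A₁, hA₁⟩ := isCompact_Icc.exists_bound_of_continuousOn hUcont
  obtain ⟨A₂, hA₂⟩ := isCompact_Icc.exists_bound_of_continuousOn hU'cont
  set A : ℝ := max (max A₁ A₂) 0 with hA_def
  have hAnn : (0:ℝ) ≤ A := le_max_right _ _
  have hUA : ∀ t ∈ Set.Icc (0:ℝ) T, |U t| ≤ A := by
    intro t ht
    calc |U t| = ‖U t‖ := (Real.norm_eq_abs _).symm
      _ ≤ A₁ := hA₁ t ht
      _ ≤ A := le_trans (le_max_left _ _) (le_max_left _ _)
  have hU'A : ∀ t ∈ Set.Icc (0:ℝ) T, |U' t| ≤ A := by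
    intro t ht
    calc |U' t| = ‖U' t‖ := (Real.norm_eq_abs _).symm
      _ ≤ A₂ := hA₂ t ht
      _ ≤ A := le_trans (le_max_right _ _) (le_max_left _ _)
  set w : ℝ → ℝ → ℝ := fun τ x => (l (pr τ)) ^ 2 * x ^ 2 - 2 * d (pr τ) * x - Q with hw_def
  have hK₁nn : (0:ℝ) ≤ 2 * p ^ 2 * A + 2 * D := by
    linarith only [mul_nonneg (sq_nonneg p) hAnn, hDnn]
  have hwlip : ∀ τ : ℝ,
      LipschitzOnWith (Real.toNNReal (2 * p ^ 2 * A + 2 * D)) (w τ)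
        (Metric.closedBall (0:ℝ) A) := by
    intro τ
    apply LipschitzOnWith.of_dist_le_mul
    intro x hx y hy
    rw [Metric.mem_closedBall, Real.dist_eq, sub_zero] at hx hy
    rw [Real.dist_eq, Real.dist_eq, Real.coe_toNNReal _ hK₁nn]
    obtain ⟨hb1, hb2, hb3, hb4⟩ := hbd τ
    obtain ⟨hx1, hx2⟩ := abs_le.mp hx
    obtain ⟨hy1, hy2⟩ := abs_le.mp hy
    have hfac : w τ x - w τ y = ((l (pr τ)) ^ 2 * (x + y) - 2 * d (pr τ)) * (x - y) := by
      simp only [hw_def]; ring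
    have hL2 : (l (pr τ)) ^ 2 ≤ p ^ 2 := by
      linarith only [mul_nonneg (sub_nonneg.mpr hb2) (by linarith only [hb1, hl0pos, hp] :
        0 ≤ p + l (pr τ))]
    have hL2nn : 0 ≤ (l (pr τ)) ^ 2 := sq_nonneg _
    have habs : |(l (pr τ)) ^ 2 * (x + y)| ≤ p ^ 2 * (2 * A) := by
      rw [abs_mul, abs_of_nonneg hL2nn]
      apply mul_le_mul hL2 ?_ (abs_nonneg _) (sq_nonneg p)
      calc |x + y| ≤ |x| + |y| := abs_add_le x y
        _ ≤ 2 * A := by linarith only [hx, hy]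
    obtain ⟨hab1, hab2⟩ := abs_le.mp habs
    have hA' : |(l (pr τ)) ^ 2 * (x + y) - 2 * d (pr τ)| ≤ 2 * p ^ 2 * A + 2 * D := by
      rw [abs_le]
      exact ⟨by linarith only [hab1, hb4], by linarith only [hab2, hb3]⟩
    calc |w τ x - w τ y|
        = |(l (pr τ)) ^ 2 * (x + y) - 2 * d (pr τ)| * |x - y| := by rw [hfac, abs_mul]
      _ ≤ (2 * p ^ 2 * A + 2 * D) * |x - y| :=
          mul_le_mul_of_nonneg_right hA' (abs_nonneg _)
  have hderivIic : ∀ V : ℝ → ℝ,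
      (∀ t ∈ Set.Icc (0:ℝ) T,
        HasDerivWithinAt V ((l t) ^ 2 * (V t) ^ 2 - 2 * d t * V t - Q) (Set.Icc (0:ℝ) T) t) →
      ∀ t ∈ Set.Ioc (0:ℝ) T, HasDerivWithinAt V (w t (V t)) (Set.Iic t) t := by
    intro V hV t ht
    have ht' : t ∈ Set.Icc (0:ℝ) T := ⟨ht.1.le, ht.2⟩
    have h1 := hV t ht'
    have heq : w t (V t) = (l t) ^ 2 * (V t) ^ 2 - 2 * d t * V t - Q := by
      simp only [hw_def]
      rw [hpr_id t ht']
    rw [heq]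
    apply h1.mono_of_mem_nhdsWithin
    have hmem : Set.Icc (0:ℝ) t ∈ nhdsWithin t (Set.Iic t) := by
      rw [← Set.Ici_inter_Iic]
      exact Filter.inter_mem (nhdsWithin_le_nhds (Ici_mem_nhds ht.1)) self_mem_nhdsWithin
    exact Filter.mem_of_superset hmem (Set.Icc_subset_Icc_right ht.2)
  have hmemball : ∀ V : ℝ → ℝ, (∀ t ∈ Set.Icc (0:ℝ) T, |V t| ≤ A) →
      ∀ t ∈ Set.Ioc (0:ℝ) T, V t ∈ Metric.closedBall (0:ℝ) A := by
    intro V hV t ht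
    rw [Metric.mem_closedBall, Real.dist_eq, sub_zero]
    exact hV t ⟨ht.1.le, ht.2⟩
  have hEq := ODE_solution_unique_of_mem_Icc_left (fun t _ => hwlip t) hU'cont (hderivIic U' hU'd)
    (hmemball U' hU'A) hUcont (hderivIic U hUeq) (hmemball U hUA) (by rw [hU'T, hUT])
  exact fun t ht => hEq ht
end

section
/- Suppose p > 0 and 0 < α < 1. Set Q := β·(1 − (1−α)²·p²·R̄²) and d(t) := b(t) − α·p·R̄·l(t). Then for every T > 0 the backward Riccati equation U̇(t) − l(t)²·U(t)² + 2·d(t)·U(t) + Q = 0 for t ∈ [0,T], with U(T) = 0, has a unique solution U satisfying U(t) ≥ (1−α)·R(t;T) for all t ∈ [0,T], where R(·;T) is the unique solution of Ṙ(t) − l(t)²R(t)² + 2b(t)R(t) + β(1−β) = 0, R(T) = 0 satisfying R(t) ≥ b(t)/l(t)² for all t ∈ [0,T]. -/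
set_option maxHeartbeats 10000000

open Set

/-- Lemma 3.5 (iii): for `p > 0` and `0 < α < 1`, the backward Riccati equation
`U̇ − l²U² + 2dU + Q = 0`, `U(T) = 0`, has a unique solution satisfying
`U(t) ≥ (1−α)·R(t;T)` on `[0,T]`, where `R(·;T)` is the unique solution of
`Ṙ − l²R² + 2bR + β(1−β) = 0`, `R(T) = 0`, with `R(t) ≥ b(t)/l(t)²`. -/
theorem stmt_11 (p q α β : ℝ) (hq : 0 < q) (hp : 0 < p)
    (hα0 : 0 < α) (hα1 : α < 1) (hαβ : 1 / α + 1 / β = 1)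
    (l b : ℝ → ℝ)
    (hl : ∀ t : ℝ, l t = p * (1 - 2 * p * q / ((2 * q + p) ^ 2 * Real.exp (2 * q * t) - p ^ 2)))
    (hb : ∀ t : ℝ, b t = -(p + q) + β * l t)
    (bbar K Rbar Q : ℝ) (d : ℝ → ℝ)
    (hbbar : bbar = -(1 - β) * p - q)
    (hK : K = Real.sqrt (bbar ^ 2 + β * (1 - β) * p ^ 2))
    (hRbar : Rbar = (bbar + K) / p ^ 2)
    (hQ : Q = β * (1 - (1 - α) ^ 2 * p ^ 2 * Rbar ^ 2))
    (hd : ∀ t : ℝ, d t = b t - α * p * Rbar * l t) :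
    ∀ T : ℝ, 0 < T →
      ∀ R : ℝ → ℝ,
        ((∀ t ∈ Set.Icc (0 : ℝ) T,
            HasDerivWithinAt R ((l t) ^ 2 * (R t) ^ 2 - 2 * b t * R t - β * (1 - β))
              (Set.Icc (0 : ℝ) T) t) ∧
          R T = 0 ∧ (∀ t ∈ Set.Icc (0 : ℝ) T, b t / (l t) ^ 2 ≤ R t)) →
        ∃ U : ℝ → ℝ,
          ((∀ t ∈ Set.Icc (0 : ℝ) T,
              HasDerivWithinAt U ((l t) ^ 2 * (U t) ^ 2 - 2 * d t * U t - Q)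
                (Set.Icc (0 : ℝ) T) t) ∧
            U T = 0 ∧ (∀ t ∈ Set.Icc (0 : ℝ) T, (1 - α) * R t ≤ U t)) ∧
          (∀ U' : ℝ → ℝ,
            ((∀ t ∈ Set.Icc (0 : ℝ) T,
                HasDerivWithinAt U' ((l t) ^ 2 * (U' t) ^ 2 - 2 * d t * U' t - Q)
                  (Set.Icc (0 : ℝ) T) t) ∧
              U' T = 0 ∧ (∀ t ∈ Set.Icc (0 : ℝ) T, (1 - α) * R t ≤ U' t)) →
            ∀ t ∈ Set.Icc (0 : ℝ) T, U' t = U t) := by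
  intro T hT R hR
  obtain ⟨hRd, hRT, _hRlb⟩ := hR
  -- basic facts about α, β
  have hαne : α ≠ 0 := ne_of_gt hα0
  have h1α : (0:ℝ) < 1 - α := by linarith
  have hαm1 : α - 1 ≠ 0 := by intro h; linarith
  have hβne : β ≠ 0 := by
    intro h
    rw [h] at hαβ
    simp at hαβ
    rw [hαβ] at hα1
    exact lt_irrefl 1 hα1
  have hβval : β = α / (α - 1) := by
    field_simp at hαβ ⊢
    linarith
  -- the key algebraic identity
  have hkey : ∀ t : ℝ,
      l t ^ 2 * ((1 - α) * R t) ^ 2 - 2 * d t * ((1 - α) * R t) - Q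
        = (1 - α) * (l t ^ 2 * R t ^ 2 - 2 * b t * R t - β * (1 - β))
          - α * (1 - α) * (l t * R t - p * Rbar) ^ 2 := by
    intro t
    rw [hd, hQ, hβval]
    field_simp
    ring
  -- bounds and continuity of l
  have hD : ∀ t ∈ Icc (0:ℝ) T,
      4 * q * (q + p) ≤ (2 * q + p) ^ 2 * Real.exp (2 * q * t) - p ^ 2 := by
    intro t ht
    have h1 : (1:ℝ) ≤ Real.exp (2 * q * t) := Real.one_le_exp (by nlinarith [ht.1])
    nlinarith [sq_nonneg (2*q+p)]
  have hlb : ∀ t ∈ Icc (0:ℝ) T, p / 2 ≤ l t ∧ l t ≤ p := by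
    intro t ht
    have hDt := hD t ht
    have hDpos : (0:ℝ) < (2 * q + p) ^ 2 * Real.exp (2 * q * t) - p ^ 2 := by nlinarith
    have hr0 : 0 ≤ 2 * p * q / ((2 * q + p) ^ 2 * Real.exp (2 * q * t) - p ^ 2) := by positivity
    have hr1 : 2 * p * q / ((2 * q + p) ^ 2 * Real.exp (2 * q * t) - p ^ 2) ≤ 1 / 2 := by
      rw [div_le_iff₀ hDpos]; nlinarith
    rw [hl t]; constructor <;> nlinarith
  have hlcont : ContinuousOn l (Icc (0:ℝ) T) := by
    have hlf : l = fun t => p * (1 - 2 * p * q / ((2 * q + p) ^ 2 * Real.exp (2 * q * t) - p ^ 2)) :=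
      funext hl
    rw [hlf]
    apply ContinuousOn.mul continuousOn_const
    apply ContinuousOn.sub continuousOn_const
    apply ContinuousOn.div continuousOn_const
    · fun_prop
    · intro t ht
      have := hD t ht
      nlinarith
  have hdcont : ContinuousOn d (Icc (0:ℝ) T) := by
    have hdf : d = fun t => -(p + q) + (β - α * p * Rbar) * l t := by
      funext t; rw [hd t, hb t]; ring
    rw [hdf]
    exact continuousOn_const.add (continuousOn_const.mul hlcont)
  have hRcont : ContinuousOn R (Icc (0:ℝ) T) := fun t ht => (hRd t ht).continuousWithinAt
  -- bounds on R and d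
  obtain ⟨MR₀, hMR₀⟩ := isCompact_Icc.exists_bound_of_continuousOn hRcont
  set MR : ℝ := max MR₀ 0 with hMRdef
  clear_value MR
  have hMR0 : 0 ≤ MR := by rw [hMRdef]; exact le_max_right _ _
  have hMR : ∀ t ∈ Icc (0:ℝ) T, |R t| ≤ MR := by
    intro t ht
    calc |R t| = ‖R t‖ := (Real.norm_eq_abs _).symm
      _ ≤ MR₀ := hMR₀ t ht
      _ ≤ MR := by rw [hMRdef]; exact le_max_left _ _
  set Dd : ℝ := (p + q) + |β - α * p * Rbar| * p with hDddef
  clear_value Dd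
  have hDd0 : 0 ≤ Dd := by rw [hDddef]; positivity
  have hDd : ∀ t ∈ Icc (0:ℝ) T, |d t| ≤ Dd := by
    intro t ht
    rw [hDddef]
    obtain ⟨hl1, hl2⟩ := hlb t ht
    have hdt : d t = -(p + q) + (β - α * p * Rbar) * l t := by rw [hd t, hb t]; ring
    have hlabs : |l t| ≤ p := abs_le.mpr ⟨by linarith, hl2⟩
    calc |d t| = |-(p + q) + (β - α * p * Rbar) * l t| := by rw [hdt]
      _ ≤ |(-(p + q))| + |(β - α * p * Rbar) * l t| := abs_add_le _ _
      _ = (p + q) + |β - α * p * Rbar| * |l t| := by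
          rw [abs_neg, abs_mul, abs_of_pos (by linarith : (0:ℝ) < p + q)]
      _ ≤ (p + q) + |β - α * p * Rbar| * p := by
          have := abs_nonneg (β - α * p * Rbar)
          nlinarith
  -- the truncation level B
  obtain ⟨X, hX0, hX8⟩ : ∃ X : ℝ, 0 ≤ X ∧ p ^ 2 * X = 8 * (Dd + |Q| + 1) :=
    ⟨8 * (Dd + |Q| + 1) / p ^ 2, by positivity, by field_simp⟩
  set B : ℝ := MR + X + 1 with hBdef
  clear_value B
  have hB1 : (1:ℝ) ≤ B := by linarith
  have hB0 : (0:ℝ) ≤ B := by linarith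
  have hBMR : MR ≤ B := by linarith
  have hBbig : 2 * (Dd + |Q| + 1) ≤ p ^ 2 * B / 4 := by
    have hpB : p ^ 2 * B = p ^ 2 * MR + p ^ 2 * X + p ^ 2 := by rw [hBdef]; ring
    linarith [hpB, hX8, mul_nonneg (sq_nonneg p) hMR0, sq_nonneg p]
  have hRB : ∀ t ∈ Icc (0:ℝ) T, |(1 - α) * R t| ≤ B := by
    intro t ht
    have h1 := hMR t ht
    rw [abs_mul, abs_of_pos h1α]
    nlinarith [abs_nonneg (R t), mul_nonneg hα0.le (abs_nonneg (R t)), hMR t ht, hBMR]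
  have hB2 : ∀ t ∈ Icc (0:ℝ) T, 0 < l t ^ 2 * B ^ 2 - 2 * d t * B - Q := by
    intro t ht
    obtain ⟨hl1, hl2⟩ := hlb t ht
    have hdt := hDd t ht
    have hdt1 : d t ≤ Dd := le_of_abs_le hdt
    have hQ1 : Q ≤ |Q| := le_abs_self Q
    have hll : p ^ 2 / 4 ≤ l t ^ 2 := by nlinarith [hl1, hp.le]
    have h1 : p ^ 2 / 4 * B ^ 2 ≤ l t ^ 2 * B ^ 2 :=
      mul_le_mul_of_nonneg_right hll (sq_nonneg B)
    have h2 : 2 * (Dd + |Q| + 1) * B ≤ p ^ 2 * B / 4 * B :=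
      mul_le_mul_of_nonneg_right hBbig hB0
    have h3 : 2 * d t * B ≤ 2 * Dd * B := by
      nlinarith [mul_le_mul_of_nonneg_right hdt1 hB0]
    nlinarith [mul_le_mul_of_nonneg_right hB1 (abs_nonneg Q), abs_nonneg Q]
  -- truncated vector field
  set π : ℝ → ℝ → ℝ := fun t x => min (max x ((1 - α) * R t)) B with hπdef
  clear_value π
  set F : ℝ → ℝ → ℝ := fun t x => l t ^ 2 * (π t x) ^ 2 - 2 * d t * (π t x) - Q with hFdef
  clear_value F
  have hπabs : ∀ t ∈ Icc (0:ℝ) T, ∀ x : ℝ, |π t x| ≤ B := by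
    intro t ht x
    have h1 := hRB t ht
    have h2 : -B ≤ (1 - α) * R t := neg_le_of_abs_le h1
    rw [abs_le]
    constructor
    · simp only [hπdef, le_min_iff]
      exact ⟨le_trans h2 (le_max_right _ _), by linarith⟩
    · simp only [hπdef]; exact min_le_right _ _
  have hπlip : ∀ t : ℝ, ∀ x y : ℝ, |π t x - π t y| ≤ |x - y| := by
    intro t x y
    simp only [hπdef]
    calc |min (max x ((1 - α) * R t)) B - min (max y ((1 - α) * R t)) B|
        ≤ max |max x ((1 - α) * R t) - max y ((1 - α) * R t)| |B - B| :=
          abs_min_sub_min_le_max _ _ _ _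
      _ ≤ |x - y| := by
          rw [sub_self, abs_zero]
          exact max_le (abs_max_sub_max_le_abs _ _ _) (abs_nonneg _)
  set C₀ : ℝ := p ^ 2 * B ^ 2 + 2 * Dd * B + |Q| + 1 with hC₀def
  clear_value C₀
  have hC₀0 : (0:ℝ) ≤ C₀ := by
    rw [hC₀def]
    linarith [mul_nonneg (sq_nonneg p) (sq_nonneg B), mul_nonneg hDd0 hB0, abs_nonneg Q]
  set L : NNReal := Real.toNNReal (2 * p ^ 2 * B + 2 * Dd) with hLdef
  clear_value L
  have hLval : (L : ℝ) = 2 * p ^ 2 * B + 2 * Dd := by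
    rw [hLdef]
    exact Real.coe_toNNReal _ (by linarith [mul_nonneg (sq_nonneg p) hB0])
  have hFlip : ∀ t ∈ Icc (0:ℝ) T, ∀ x y : ℝ, |F t x - F t y| ≤ (L : ℝ) * |x - y| := by
    intro t ht x y
    obtain ⟨hl1, hl2⟩ := hlb t ht
    have hdt := hDd t ht
    have ha := hπabs t ht x
    have hb' := hπabs t ht y
    have hfactor : F t x - F t y
        = (π t x - π t y) * (l t ^ 2 * (π t x + π t y) - 2 * d t) := by
      simp only [hFdef]; ring
    rw [hfactor, abs_mul]
    have hbound : |l t ^ 2 * (π t x + π t y) - 2 * d t| ≤ 2 * p ^ 2 * B + 2 * Dd := by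
      calc |l t ^ 2 * (π t x + π t y) - 2 * d t|
          ≤ |l t ^ 2 * (π t x + π t y)| + |2 * d t| := abs_sub _ _
        _ = l t ^ 2 * |π t x + π t y| + 2 * |d t| := by
            rw [abs_mul, abs_mul, abs_of_nonneg (sq_nonneg (l t)),
              abs_of_nonneg (by norm_num : (0:ℝ) ≤ 2)]
        _ ≤ 2 * p ^ 2 * B + 2 * Dd := by
            have h1 : |π t x + π t y| ≤ 2 * B := by
              calc |π t x + π t y| ≤ |π t x| + |π t y| := abs_add_le _ _
                _ ≤ 2 * B := by linarith
            have h2 : l t ^ 2 ≤ p ^ 2 := pow_le_pow_left₀ (by linarith) hl2 2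
            have h3 : l t ^ 2 * |π t x + π t y| ≤ p ^ 2 * (2 * B) :=
              mul_le_mul h2 h1 (abs_nonneg _) (sq_nonneg p)
            linarith
    rw [hLval]
    calc |π t x - π t y| * |l t ^ 2 * (π t x + π t y) - 2 * d t|
        ≤ |x - y| * (2 * p ^ 2 * B + 2 * Dd) := by
          apply mul_le_mul (hπlip t x y) hbound (abs_nonneg _) (abs_nonneg _)
      _ = (2 * p ^ 2 * B + 2 * Dd) * |x - y| := by ring
  have hpl : IsPicardLindelof F (tmin := 0) (tmax := T) ⟨T, ⟨le_of_lt hT, le_refl T⟩⟩ 0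
      (Real.toNNReal (C₀ * T + 1)) 0 (Real.toNNReal C₀) L := by
    constructor
    · intro t ht
      apply LipschitzOnWith.of_dist_le_mul
      intro x _ y _
      rw [Real.dist_eq, Real.dist_eq]
      exact hFlip t ht x y
    · intro x _
      simp only [hFdef, hπdef]
      exact ((hlcont.pow 2).mul
          (((continuousOn_const.sup (continuousOn_const.mul hRcont)).inf continuousOn_const).pow 2)).sub
          ((continuousOn_const.mul hdcont).mul
            ((continuousOn_const.sup (continuousOn_const.mul hRcont)).inf continuousOn_const))
          |>.sub continuousOn_const
    · intro t ht x _
      rw [Real.coe_toNNReal _ hC₀0]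
      rw [Real.norm_eq_abs]
      obtain ⟨hl1, hl2⟩ := hlb t ht
      have hdt := hDd t ht
      have ha := hπabs t ht x
      have hπ2 : (π t x) ^ 2 ≤ B ^ 2 :=
        sq_le_sq' (by linarith [neg_le_of_abs_le ha]) (le_of_abs_le ha)
      have hl2' : l t ^ 2 ≤ p ^ 2 := pow_le_pow_left₀ (by linarith) hl2 2
      have h1 : l t ^ 2 * (π t x) ^ 2 ≤ p ^ 2 * B ^ 2 :=
        mul_le_mul hl2' hπ2 (sq_nonneg _) (by positivity)
      have h2 : |d t * π t x| ≤ Dd * B := by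
        rw [abs_mul]
        exact mul_le_mul hdt ha (abs_nonneg _) hDd0
      obtain ⟨h2l, h2r⟩ := abs_le.mp h2
      have hQl : -|Q| ≤ Q := neg_abs_le Q
      have hQr : Q ≤ |Q| := le_abs_self Q
      rw [abs_le]
      constructor
      · simp only [hFdef]
        linarith [h1, h2l, h2r, hQl, hQr, hC₀def,
          mul_nonneg (sq_nonneg (l t)) (sq_nonneg (π t x)),
          mul_nonneg (sq_nonneg p) (sq_nonneg B)]
      · simp only [hFdef]
        linarith [h1, h2l, h2r, hQl, hQr, hC₀def]
    · show (C₀.toNNReal : ℝ) * max (T - T) (T - 0) ≤ ((C₀ * T + 1).toNNReal : ℝ) - ((0 : NNReal) : ℝ)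
      rw [NNReal.coe_zero, sub_zero ((C₀ * T + 1).toNNReal : ℝ), Real.coe_toNNReal _ hC₀0,
        Real.coe_toNNReal _ (by linarith [mul_nonneg hC₀0 hT.le])]
      have hmax : max (T - T) (T - 0) = T := by
        rw [sub_self, sub_zero]
        exact max_eq_right hT.le
      rw [hmax]
      linarith
  obtain ⟨U, hUT, hU⟩ : ∃ U : ℝ → ℝ, U T = 0 ∧
      ∀ t ∈ Icc (0:ℝ) T, HasDerivWithinAt U (F t (U t)) (Icc (0:ℝ) T) t :=
    hpl.exists_eq_forall_mem_Icc_hasDerivWithinAt₀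
  have hUcont : ContinuousOn U (Icc (0:ℝ) T) := fun t ht => (hU t ht).continuousWithinAt
  -- upper bound : U ≤ B on [0,T]
  have hub : ∀ t ∈ Icc (0:ℝ) T, U t ≤ B := by
    by_contra hcon
    push_neg at hcon
    obtain ⟨t₁, ht₁, hBt₁⟩ := hcon
    have ht₁T : t₁ < T := by
      rcases lt_or_eq_of_le ht₁.2 with h | h
      · exact h
      · exfalso; rw [h, hUT] at hBt₁; linarith
    set S : Set ℝ := {u | u ∈ Icc t₁ T ∧ U u ≤ B} with hSdef
    have hSclosed : IsClosed S := by
      have hSeq : S = Icc t₁ T ∩ U ⁻¹' (Iic B) := by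
        ext u; simp [hSdef]
      rw [hSeq]
      exact ContinuousOn.preimage_isClosed_of_isClosed
        (hUcont.mono (Icc_subset_Icc ht₁.1 (le_refl T))) isClosed_Icc isClosed_Iic
    have hTS : T ∈ S := ⟨⟨le_of_lt ht₁T, le_refl T⟩, by rw [hUT]; linarith⟩
    have hSne : S.Nonempty := ⟨T, hTS⟩
    have hSbdd : BddBelow S := ⟨t₁, fun u hu => hu.1.1⟩
    set s₀ := sInf S with hs₀def
    have hs₀S : s₀ ∈ S := hSclosed.csInf_mem hSne hSbdd
    have hs₀ge : t₁ ≤ s₀ := le_csInf hSne fun u hu => hu.1.1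
    have ht₁s₀ : t₁ < s₀ := by
      rcases lt_or_eq_of_le hs₀ge with h | h
      · exact h
      · exfalso; rw [← h] at hs₀S; exact absurd hs₀S.2 (not_le.mpr hBt₁)
    have hs₀T : s₀ ≤ T := hs₀S.1.2
    have hIccsub : Icc t₁ s₀ ⊆ Icc (0:ℝ) T := Icc_subset_Icc ht₁.1 hs₀T
    have hsm : StrictMonoOn U (Icc t₁ s₀) := by
      apply strictMonoOn_of_deriv_pos (convex_Icc t₁ s₀) (hUcont.mono hIccsub)
      intro u hu
      rw [interior_Icc] at hu
      have hu0T : u ∈ Ioo (0:ℝ) T :=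
        ⟨lt_of_le_of_lt ht₁.1 hu.1, lt_of_lt_of_le hu.2 hs₀T⟩
      have huIcc : u ∈ Icc (0:ℝ) T := ⟨hu0T.1.le, hu0T.2.le⟩
      have hder : HasDerivAt U (F u (U u)) u :=
        (hU u huIcc).hasDerivAt (Icc_mem_nhds hu0T.1 hu0T.2)
      have huS : u ∉ S := fun h => absurd (csInf_le hSbdd h) (not_le.mpr hu.2)
      have hUu : B < U u := by
        by_contra h
        exact huS ⟨⟨hu.1.le, hu0T.2.le⟩, not_lt.mp h⟩
      rw [hder.deriv]
      have hmB : (1 - α) * R u ≤ U u := by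
        have := le_of_abs_le (hRB u huIcc); linarith
      simp only [hFdef, hπdef]
      rw [max_eq_left hmB, min_eq_right hUu.le]
      exact hB2 u huIcc
    have hcomp := hsm ⟨le_refl t₁, hs₀ge⟩ ⟨hs₀ge, le_refl s₀⟩ ht₁s₀
    linarith [hs₀S.2]
  -- lower bound : (1-α) R ≤ U on [0,T]
  have hlbU : ∀ t ∈ Icc (0:ℝ) T, (1 - α) * R t ≤ U t := by
    by_contra hcon
    push_neg at hcon
    obtain ⟨t₁, ht₁, hWt₁⟩ := hcon
    set W : ℝ → ℝ := fun u => U u - (1 - α) * R u with hWdef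
    have hWcont : ContinuousOn W (Icc (0:ℝ) T) :=
      hUcont.sub (continuousOn_const.mul hRcont)
    have hWT : W T = 0 := by simp only [hWdef]; rw [hUT, hRT]; ring
    have hWt₁neg : W t₁ < 0 := by simp only [hWdef]; linarith
    have ht₁T : t₁ < T := by
      rcases lt_or_eq_of_le ht₁.2 with h | h
      · exact h
      · exfalso; rw [h] at hWt₁neg; rw [hWT] at hWt₁neg; exact lt_irrefl 0 hWt₁neg
    set S : Set ℝ := {u | u ∈ Icc t₁ T ∧ 0 ≤ W u} with hSdef
    have hSclosed : IsClosed S := by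
      have hSeq : S = Icc t₁ T ∩ W ⁻¹' (Ici 0) := by
        ext u; simp [hSdef]
      rw [hSeq]
      exact ContinuousOn.preimage_isClosed_of_isClosed
        (hWcont.mono (Icc_subset_Icc ht₁.1 (le_refl T))) isClosed_Icc isClosed_Ici
    have hTS : T ∈ S := ⟨⟨le_of_lt ht₁T, le_refl T⟩, by rw [hWT]⟩
    have hSne : S.Nonempty := ⟨T, hTS⟩
    have hSbdd : BddBelow S := ⟨t₁, fun u hu => hu.1.1⟩
    set s₀ := sInf S with hs₀def
    have hs₀S : s₀ ∈ S := hSclosed.csInf_mem hSne hSbdd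
    have hs₀ge : t₁ ≤ s₀ := le_csInf hSne fun u hu => hu.1.1
    have ht₁s₀ : t₁ < s₀ := by
      rcases lt_or_eq_of_le hs₀ge with h | h
      · exact h
      · exfalso; rw [← h] at hs₀S; linarith [hs₀S.2]
    have hs₀T : s₀ ≤ T := hs₀S.1.2
    have hIccsub : Icc t₁ s₀ ⊆ Icc (0:ℝ) T := Icc_subset_Icc ht₁.1 hs₀T
    have hderW : ∀ u ∈ Ioo t₁ s₀, HasDerivAt W
        (F u (U u) - (1 - α) * (l u ^ 2 * R u ^ 2 - 2 * b u * R u - β * (1 - β))) u := by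
      intro u hu
      have hu0T : u ∈ Ioo (0:ℝ) T :=
        ⟨lt_of_le_of_lt ht₁.1 hu.1, lt_of_lt_of_le hu.2 hs₀T⟩
      have huIcc : u ∈ Icc (0:ℝ) T := ⟨hu0T.1.le, hu0T.2.le⟩
      have hdU : HasDerivAt U (F u (U u)) u :=
        (hU u huIcc).hasDerivAt (Icc_mem_nhds hu0T.1 hu0T.2)
      have hdR : HasDerivAt R (l u ^ 2 * R u ^ 2 - 2 * b u * R u - β * (1 - β)) u :=
        (hRd u huIcc).hasDerivAt (Icc_mem_nhds hu0T.1 hu0T.2)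
      exact hdU.sub (hdR.const_mul ((1:ℝ) - α))
    have hanti : AntitoneOn W (Icc t₁ s₀) := by
      apply antitoneOn_of_deriv_nonpos (convex_Icc t₁ s₀) (hWcont.mono hIccsub)
      · intro u hu
        rw [interior_Icc] at hu
        exact (hderW u hu).differentiableAt.differentiableWithinAt
      · intro u hu
        rw [interior_Icc] at hu
        have hu0T : u ∈ Ioo (0:ℝ) T :=
          ⟨lt_of_le_of_lt ht₁.1 hu.1, lt_of_lt_of_le hu.2 hs₀T⟩
        have huIcc : u ∈ Icc (0:ℝ) T := ⟨hu0T.1.le, hu0T.2.le⟩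
        rw [(hderW u hu).deriv]
        have huS : u ∉ S := fun h => absurd (csInf_le hSbdd h) (not_le.mpr hu.2)
        have hWu : W u < 0 := by
          by_contra h
          exact huS ⟨⟨hu.1.le, hu0T.2.le⟩, not_lt.mp h⟩
        have hUu : U u < (1 - α) * R u := by
          simp only [hWdef] at hWu; linarith
        have hmB : (1 - α) * R u ≤ B := le_of_abs_le (hRB u huIcc)
        have hFval : F u (U u) = l u ^ 2 * ((1 - α) * R u) ^ 2
            - 2 * d u * ((1 - α) * R u) - Q := by
          simp only [hFdef, hπdef]
          rw [max_eq_right hUu.le, min_eq_left hmB]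
        rw [hFval, hkey u]
        have h0 : 0 ≤ α * (1 - α) * (l u * R u - p * Rbar) ^ 2 :=
          mul_nonneg (mul_pos hα0 h1α).le (sq_nonneg _)
        linarith
    have hcomp := hanti ⟨le_refl t₁, hs₀ge⟩ ⟨hs₀ge, le_refl s₀⟩ hs₀ge
    linarith [hs₀S.2]
  -- the truncation is inactive along U
  have hFU : ∀ t ∈ Icc (0:ℝ) T, F t (U t) = l t ^ 2 * (U t) ^ 2 - 2 * d t * U t - Q := by
    intro t ht
    have h1 := hlbU t ht
    have h2 := hub t ht
    simp only [hFdef, hπdef]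
    rw [max_eq_left h1, min_eq_left h2]
  have hUode : ∀ t ∈ Icc (0:ℝ) T,
      HasDerivWithinAt U (l t ^ 2 * (U t) ^ 2 - 2 * d t * U t - Q) (Icc (0:ℝ) T) t := by
    intro t ht
    have := hU t ht
    rwa [hFU t ht] at this
  refine ⟨U, ⟨hUode, hUT, hlbU⟩, ?_⟩
  -- uniqueness
  intro U' hU'
  obtain ⟨hU'd, hU'T, _hU'lb⟩ := hU'
  have hU'cont : ContinuousOn U' (Icc (0:ℝ) T) := fun t ht => (hU'd t ht).continuousWithinAt
  obtain ⟨M1, hM1⟩ := isCompact_Icc.exists_bound_of_continuousOn hU'cont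
  obtain ⟨M2, hM2⟩ := isCompact_Icc.exists_bound_of_continuousOn hUcont
  set M : ℝ := max (max M1 M2) 0 with hMdef
  clear_value M
  have hM0 : (0:ℝ) ≤ M := by rw [hMdef]; exact le_max_right _ _
  have hU'M : ∀ t ∈ Icc (0:ℝ) T, |U' t| ≤ M := by
    intro t ht
    calc |U' t| = ‖U' t‖ := (Real.norm_eq_abs _).symm
      _ ≤ M1 := hM1 t ht
      _ ≤ M := by rw [hMdef]; exact le_trans (le_max_left _ _) (le_max_left _ _)
  have hUM : ∀ t ∈ Icc (0:ℝ) T, |U t| ≤ M := by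
    intro t ht
    calc |U t| = ‖U t‖ := (Real.norm_eq_abs _).symm
      _ ≤ M2 := hM2 t ht
      _ ≤ M := by rw [hMdef]; exact le_trans (le_max_right _ _) (le_max_left _ _)
  set v : ℝ → ℝ → ℝ :=
    fun t x => if t ∈ Icc (0:ℝ) T then l t ^ 2 * x ^ 2 - 2 * d t * x - Q else 0 with hvdef
  clear_value v
  set K' : NNReal := Real.toNNReal (2 * p ^ 2 * M + 2 * Dd) with hK'def
  clear_value K'
  have hK'val : (K' : ℝ) = 2 * p ^ 2 * M + 2 * Dd := by
    rw [hK'def]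
    exact Real.coe_toNNReal _ (by linarith [mul_nonneg (sq_nonneg p) hM0])
  have hv : ∀ t : ℝ, LipschitzOnWith K' (v t) (Metric.closedBall (0:ℝ) M) := by
    intro t
    apply LipschitzOnWith.of_dist_le_mul
    intro x hx y hy
    rw [Real.dist_eq, Real.dist_eq]
    by_cases ht : t ∈ Icc (0:ℝ) T
    · simp only [hvdef, if_pos ht]
      obtain ⟨hl1, hl2⟩ := hlb t ht
      have hdt := hDd t ht
      have hx' : |x| ≤ M := by
        rw [Metric.mem_closedBall, Real.dist_eq, sub_zero] at hx; exact hx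
      have hy' : |y| ≤ M := by
        rw [Metric.mem_closedBall, Real.dist_eq, sub_zero] at hy; exact hy
      have hfactor : l t ^ 2 * x ^ 2 - 2 * d t * x - Q - (l t ^ 2 * y ^ 2 - 2 * d t * y - Q)
          = (x - y) * (l t ^ 2 * (x + y) - 2 * d t) := by ring
      rw [hfactor, abs_mul, hK'val]
      have hbound : |l t ^ 2 * (x + y) - 2 * d t| ≤ 2 * p ^ 2 * M + 2 * Dd := by
        calc |l t ^ 2 * (x + y) - 2 * d t|
            ≤ |l t ^ 2 * (x + y)| + |2 * d t| := abs_sub _ _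
          _ = l t ^ 2 * |x + y| + 2 * |d t| := by
              rw [abs_mul, abs_mul, abs_of_nonneg (sq_nonneg (l t)),
                abs_of_nonneg (by norm_num : (0:ℝ) ≤ 2)]
          _ ≤ 2 * p ^ 2 * M + 2 * Dd := by
              have h1 : |x + y| ≤ 2 * M := by
                calc |x + y| ≤ |x| + |y| := abs_add_le _ _
                  _ ≤ 2 * M := by linarith
              have h2 : l t ^ 2 ≤ p ^ 2 := pow_le_pow_left₀ (by linarith) hl2 2
              have h3 : l t ^ 2 * |x + y| ≤ p ^ 2 * (2 * M) :=
                mul_le_mul h2 h1 (abs_nonneg _) (sq_nonneg p)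
              linarith
      calc |x - y| * |l t ^ 2 * (x + y) - 2 * d t|
          ≤ |x - y| * (2 * p ^ 2 * M + 2 * Dd) := by
            apply mul_le_mul_of_nonneg_left hbound (abs_nonneg _)
        _ = (2 * p ^ 2 * M + 2 * Dd) * |x - y| := by ring
    · simp only [hvdef, if_neg ht]
      simp only [sub_self, abs_zero]
      positivity
  have hEq : EqOn U' U (Icc (0:ℝ) T) := by
    apply ODE_solution_unique_of_mem_Icc_left (fun t _ => hv t) hU'cont ?_ ?_ hUcont ?_ ?_ ?_
    · intro u hu
      have huIcc : u ∈ Icc (0:ℝ) T := ⟨hu.1.le, hu.2⟩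
      have h1 := (hU'd u huIcc).mono_of_mem_nhdsWithin (Icc_mem_nhdsLE_of_mem hu)
      have h2 : v u (U' u) = l u ^ 2 * (U' u) ^ 2 - 2 * d u * U' u - Q := by
        simp only [hvdef, if_pos huIcc]
      rw [h2]
      exact h1
    · intro u hu
      have huIcc : u ∈ Icc (0:ℝ) T := ⟨hu.1.le, hu.2⟩
      rw [Metric.mem_closedBall, Real.dist_eq, sub_zero]
      exact hU'M u huIcc
    · intro u hu
      have huIcc : u ∈ Icc (0:ℝ) T := ⟨hu.1.le, hu.2⟩
      have h1 := (hUode u huIcc).mono_of_mem_nhdsWithin (Icc_mem_nhdsLE_of_mem hu)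
      have h2 : v u (U u) = l u ^ 2 * (U u) ^ 2 - 2 * d u * U u - Q := by
        simp only [hvdef, if_pos huIcc]
      rw [h2]
      exact h1
    · intro u hu
      have huIcc : u ∈ Icc (0:ℝ) T := ⟨hu.1.le, hu.2⟩
      rw [Metric.mem_closedBall, Real.dist_eq, sub_zero]
      exact hUM u huIcc
    · rw [hU'T, hUT]
  intro t ht
  exact hEq ht
end

section
/- For q > 0, p ≥ 0, and α ∈ (−∞,1) with α ≠ 0, set d̄ := b̄ − α·p²·R̄ and Q := β·(1 − (1−α)²·p²·R̄²). Then d̄² + p²·Q = b̄² + β(1−β)·p² = K²; in particular √(d̄² + p²·Q) = K > 0 and d̄ − p²·Ū = −K, where Ū denotes the larger root of p²x² − 2d̄x − Q = 0 if p > 0 and the unique solution of −2d̄x − Q = 0 if p = 0. -/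
/-- For `q > 0`, `p ≥ 0`, `α < 1`, `α ≠ 0`, with `d̄ := b̄ − αp²R̄` and
`Q := β(1 − (1−α)²p²R̄²)`: `d̄² + p²Q = b̄² + β(1−β)p² = K²`; in particular
`√(d̄² + p²Q) = K > 0` and `d̄ − p²Ū = −K`. -/
theorem stmt_12 (p q α β : ℝ) (hq : 0 < q) (hp : 0 ≤ p)
    (hα1 : α < 1) (hα0 : α ≠ 0) (hαβ : 1 / α + 1 / β = 1)
    (bbar K Rbar dbar Q Ubar : ℝ)
    (hbbar : bbar = -(1 - β) * p - q)
    (hK : K = Real.sqrt (bbar ^ 2 + β * (1 - β) * p ^ 2))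
    (hRbar0 : p = 0 → Rbar = β * (1 - β) / (2 * q))
    (hRbar1 : 0 < p → Rbar = (bbar + K) / p ^ 2)
    (hdbar : dbar = bbar - α * p ^ 2 * Rbar)
    (hQ : Q = β * (1 - (1 - α) ^ 2 * p ^ 2 * Rbar ^ 2))
    (hUbar0 : p = 0 → -2 * dbar * Ubar - Q = 0)
    (hUbar1 : 0 < p → Ubar = (dbar + Real.sqrt (dbar ^ 2 + p ^ 2 * Q)) / p ^ 2) :
    dbar ^ 2 + p ^ 2 * Q = bbar ^ 2 + β * (1 - β) * p ^ 2 ∧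
    dbar ^ 2 + p ^ 2 * Q = K ^ 2 ∧
    Real.sqrt (dbar ^ 2 + p ^ 2 * Q) = K ∧
    0 < K ∧
    dbar - p ^ 2 * Ubar = -K := by
  -- β ≠ 0
  have hβ0 : β ≠ 0 := by
    intro h
    rw [h, div_zero, add_zero] at hαβ
    field_simp at hαβ
    linarith
  -- key relation between α and β
  have hβ' : α * β - α - β = 0 := by
    field_simp at hαβ
    linarith
  have h1β : (1 - β) * (1 - α) = 1 := by linear_combination hβ'
  have h1βpos : 0 < 1 - β := by nlinarith
  -- positivity of E := bbar² + β(1−β)p²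
  have hEpos : 0 < bbar ^ 2 + β * (1 - β) * p ^ 2 := by
    subst hbbar
    nlinarith [mul_nonneg (mul_nonneg h1βpos.le hp) hq.le,
      mul_nonneg h1βpos.le (sq_nonneg p), sq_nonneg q]
  have hK0 : 0 < K := by
    rw [hK]; exact Real.sqrt_pos.mpr hEpos
  have hK2 : K ^ 2 = bbar ^ 2 + β * (1 - β) * p ^ 2 := by
    rw [hK, sq, Real.mul_self_sqrt hEpos.le]
  rcases eq_or_lt_of_le hp with hp0 | hp0
  · -- case p = 0
    have hp0 : p = 0 := hp0.symm
    subst hp0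
    have hbq : bbar = -q := by rw [hbbar]; ring
    have hmain : dbar ^ 2 + 0 ^ 2 * Q = bbar ^ 2 + β * (1 - β) * 0 ^ 2 := by
      rw [hdbar]; ring
    have hKq : K = q := by
      rw [hK, hbq]
      rw [show (-q) ^ 2 + β * (1 - β) * 0 ^ 2 = q ^ 2 by ring]
      exact Real.sqrt_sq hq.le
    refine ⟨hmain, by rw [hmain, hK2], by rw [hmain, ← hK2, Real.sqrt_sq hK0.le], hK0, ?_⟩
    rw [hdbar, hbq, hKq]; ring
  · -- case p > 0
    have hRbar := hRbar1 hp0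
    have hp2 : p ^ 2 ≠ 0 := by positivity
    have hR : p ^ 2 * Rbar ^ 2 - 2 * bbar * Rbar - β * (1 - β) = 0 := by
      have hpR : p ^ 2 * Rbar = bbar + K := by
        rw [hRbar]; field_simp
      have : p ^ 2 * (p ^ 2 * Rbar ^ 2 - 2 * bbar * Rbar - β * (1 - β)) =
          K ^ 2 - (bbar ^ 2 + β * (1 - β) * p ^ 2) := by
        linear_combination (p ^ 2 * Rbar + K - bbar) * hpR
      have h2 : p ^ 2 * (p ^ 2 * Rbar ^ 2 - 2 * bbar * Rbar - β * (1 - β)) = 0 := by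
        rw [this, hK2]; ring
      exact (mul_eq_zero.mp h2).resolve_left hp2
    have hmain : dbar ^ 2 + p ^ 2 * Q = bbar ^ 2 + β * (1 - β) * p ^ 2 := by
      rw [hdbar, hQ]
      linear_combination (α * p ^ 2) * hR + ((1 - α) * p ^ 4 * Rbar ^ 2 - β * p ^ 2) * hβ'
    have hsqrt : Real.sqrt (dbar ^ 2 + p ^ 2 * Q) = K := by
      rw [hmain, ← hK2, Real.sqrt_sq hK0.le]
    refine ⟨hmain, by rw [hmain, hK2], hsqrt, hK0, ?_⟩
    rw [hUbar1 hp0, hsqrt]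
    field_simp
    ring
end

section
/- For q > 0, p ≥ 0, α ∈ (−∞,1) with α ≠ 0, and any λ̄ ∈ ℝ, one has: Ū = (1−α)·R̄, m̄ = (1−α)·v̄, and f̄ = (1−α)·ḡ, where f̄ := p²·m̄² + 2·γ̄·m̄ − p²·Ū + α(α−1)·(p²·v̄² − (1−β)²·λ̄²) and ḡ := p²·v̄² + 2·ρ̄·v̄ − p²·R̄ − β(1−β)·λ̄². -/
/-!
Both Riccati equations have a unique *stabilizing* root, i.e. one whose closed-loop coefficient
`d - p² x` is negative. Since `β` is the conjugate exponent of `α`, `(1 - α)(1 - β) = 1`, and a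
direct computation shows that `(1 - α) R̄` solves the second Riccati equation with the same
closed-loop coefficient `b̄ - p² R̄ = -K` as `R̄`; hence `Ū = (1 - α) R̄`. The two linear equations
for `v̄` and `m̄` then share this nonzero coefficient and `m̄ = (1 - α) v̄` is read off, after which
`f̄ = (1 - α) ḡ` is an algebraic identity.
-/

def IsStabilizingRoot (a d Q x : ℝ) : Prop :=
  a * x ^ 2 - 2 * d * x - Q = 0 ∧ 0 < a * x - d

namespace IsStabilizingRoot

variable {a d Q x y : ℝ}

theorem unique (hx : IsStabilizingRoot a d Q x) (hy : IsStabilizingRoot a d Q y) : x = y := by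
  have hfactor : (x - y) * ((a * x - d) + (a * y - d)) = 0 := by
    linear_combination hx.1 - hy.1
  have hsum : (a * x - d) + (a * y - d) ≠ 0 := (add_pos hx.2 hy.2).ne'
  exact sub_eq_zero.1 ((mul_eq_zero.1 hfactor).resolve_right hsum)

theorem discr_pos (hx : IsStabilizingRoot a d Q x) : 0 < d ^ 2 + a * Q := by
  have hsq : d ^ 2 + a * Q = (a * x - d) ^ 2 := by linear_combination (-a) * hx.1
  rw [hsq]
  exact pow_pos hx.2 2

theorem larger_root (ha : 0 < a) (hD : 0 < d ^ 2 + a * Q) :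
    IsStabilizingRoot a d Q ((d + √(d ^ 2 + a * Q)) / a) := by
  have hax : a * ((d + √(d ^ 2 + a * Q)) / a) = d + √(d ^ 2 + a * Q) := by
    field_simp
  have hsq := Real.sq_sqrt hD.le
  generalize (d + √(d ^ 2 + a * Q)) / a = x at hax ⊢
  refine ⟨mul_left_cancel₀ ha.ne' ?_, ?_⟩
  · linear_combination (a * x - d + √(d ^ 2 + a * Q)) * hax + hsq
  · rw [hax, add_sub_cancel_left]
    exact Real.sqrt_pos.2 hD

theorem one_sub_mul {α β b R : ℝ} (hconj : (1 - α) * (1 - β) = 1)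
    (hR : IsStabilizingRoot a b (β * (1 - β)) R) :
    IsStabilizingRoot a (b - α * a * R) (β * (1 - (1 - α) ^ 2 * a * R ^ 2)) ((1 - α) * R) := by
  refine ⟨?_, by linarith [hR.2]⟩
  linear_combination (1 - α) * hR.1 + (β - (1 - α) * a * R ^ 2) * hconj

end IsStabilizingRoot

theorem one_sub_mul_one_sub_of_conj {α β : ℝ} (hα0 : α ≠ 0) (hα1 : α ≠ 1)
    (hαβ : 1 / α + 1 / β = 1) : (1 - α) * (1 - β) = 1 := by
  have hβ0 : β ≠ 0 := by
    rintro rfl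
    rw [div_zero, add_zero, div_eq_one_iff_eq hα0] at hαβ
    exact hα1 hαβ.symm
  field_simp at hαβ
  linear_combination -hαβ

theorem isStabilizingRoot_Rbar {p q β bbar K Rbar : ℝ} (hq : 0 < q) (hp : 0 ≤ p)
    (hβ1 : 0 < 1 - β) (hbbar : bbar = -(1 - β) * p - q)
    (hK : K = √(bbar ^ 2 + β * (1 - β) * p ^ 2))
    (hRbar0 : p = 0 → Rbar = β * (1 - β) / (2 * q))
    (hRbar1 : 0 < p → Rbar = (bbar + K) / p ^ 2) :
    IsStabilizingRoot (p ^ 2) bbar (β * (1 - β)) Rbar := by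
  rcases hp.eq_or_lt with rfl | hp
  · rw [hRbar0 rfl, hbbar]
    constructor
    · field_simp
      ring
    · simpa using hq
  · have hD : 0 < bbar ^ 2 + p ^ 2 * (β * (1 - β)) := by
      have hexpand : bbar ^ 2 + p ^ 2 * (β * (1 - β)) = (1 - β) * p * (p + 2 * q) + q ^ 2 := by
        rw [hbbar]
        ring
      rw [hexpand]
      positivity
    rw [hRbar1 hp, hK, show bbar ^ 2 + β * (1 - β) * p ^ 2 = bbar ^ 2 + p ^ 2 * (β * (1 - β)) by
      ring]
    exact .larger_root (by positivity) hD

theorem eq_one_sub_mul_of_linear {α β a b R v m l ρ : ℝ} (hconj : (1 - α) * (1 - β) = 1)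
    (hcl : b - a * R ≠ 0) (hv : (b - a * R) * v + β * (1 - β) * l - R * ρ = 0)
    (hm : (b - α * a * R - a * ((1 - α) * R)) * m - (α * (α - 1) * a * R * v - β * l)
      - (1 - α) * R * (ρ + α * a * v) = 0) :
    m = (1 - α) * v :=
  mul_left_cancel₀ hcl (by linear_combination hm - (1 - α) * hv + β * l * hconj)

theorem stmt_13_general (p q α β : ℝ) (hq : 0 < q) (hp : 0 ≤ p)
    (hα1 : α < 1) (hα0 : α ≠ 0) (hαβ : 1 / α + 1 / β = 1)
    (bbar K Rbar : ℝ)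
    (hbbar : bbar = -(1 - β) * p - q)
    (hK : K = Real.sqrt (bbar ^ 2 + β * (1 - β) * p ^ 2))
    (hRbar0 : p = 0 → Rbar = β * (1 - β) / (2 * q))
    (hRbar1 : 0 < p → Rbar = (bbar + K) / p ^ 2)
    (lambar rhobar vbar : ℝ)
    (hvbar : (bbar - p ^ 2 * Rbar) * vbar + β * (1 - β) * lambar - Rbar * rhobar = 0)
    (dbar Q Ubar : ℝ)
    (hdbar : dbar = bbar - α * p ^ 2 * Rbar)
    (hQ : Q = β * (1 - (1 - α) ^ 2 * p ^ 2 * Rbar ^ 2))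
    (hUbar0 : p = 0 → -2 * dbar * Ubar - Q = 0)
    (hUbar1 : 0 < p → Ubar = (dbar + Real.sqrt (dbar ^ 2 + p ^ 2 * Q)) / p ^ 2)
    (hbar gambar mbar fbar gbar : ℝ)
    (hhbar : hbar = α * (α - 1) * p ^ 2 * Rbar * vbar - β * lambar)
    (hgambar : gambar = rhobar + α * p ^ 2 * vbar)
    (hmbar : (dbar - p ^ 2 * Ubar) * mbar - hbar - Ubar * gambar = 0)
    (hfbar : fbar = p ^ 2 * mbar ^ 2 + 2 * gambar * mbar - p ^ 2 * Ubar
      + α * (α - 1) * (p ^ 2 * vbar ^ 2 - (1 - β) ^ 2 * lambar ^ 2))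
    (hgbar : gbar = p ^ 2 * vbar ^ 2 + 2 * rhobar * vbar - p ^ 2 * Rbar
      - β * (1 - β) * lambar ^ 2) :
    Ubar = (1 - α) * Rbar ∧ mbar = (1 - α) * vbar ∧ fbar = (1 - α) * gbar := by
  have hconj := one_sub_mul_one_sub_of_conj hα0 hα1.ne hαβ
  have hβ1 : 0 < 1 - β :=
    (pos_iff_pos_of_mul_pos (hconj.symm ▸ one_pos : 0 < (1 - α) * (1 - β))).1 (sub_pos.2 hα1)
  have hR := isStabilizingRoot_Rbar hq hp hβ1 hbbar hK hRbar0 hRbar1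
  have hRscaled : IsStabilizingRoot (p ^ 2) dbar Q ((1 - α) * Rbar) :=
    hdbar ▸ hQ ▸ hR.one_sub_mul hconj
  have hU : IsStabilizingRoot (p ^ 2) dbar Q Ubar := by
    rcases hp.eq_or_lt with rfl | hp
    · exact ⟨by linear_combination hUbar0 rfl, by linarith [hRscaled.2]⟩
    · rw [hUbar1 hp]
      exact .larger_root (by positivity) hRscaled.discr_pos
  have hUR : Ubar = (1 - α) * Rbar := hU.unique hRscaled
  subst hdbar hhbar hgambar hUR
  have hmv : mbar = (1 - α) * vbar := eq_one_sub_mul_of_linear hconj (by linarith [hR.2]) hvbar hmbar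
  refine ⟨rfl, hmv, ?_⟩
  rw [hfbar, hgbar, hmv]
  linear_combination -(1 - α) * (1 - β) * lambar ^ 2 * hconj

/-- For `q > 0`, `p ≥ 0`, `α < 1`, `α ≠ 0`, and any `λ̄ ∈ ℝ`:
`Ū = (1−α)·R̄`, `m̄ = (1−α)·v̄`, and `f̄ = (1−α)·ḡ`. -/
theorem stmt_13 (p q α β : ℝ) (hq : 0 < q) (hp : 0 ≤ p)
    (hα1 : α < 1) (hα0 : α ≠ 0) (hαβ : 1 / α + 1 / β = 1)
    (bbar K Rbar : ℝ)
    (hbbar : bbar = -(1 - β) * p - q)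
    (hK : K = Real.sqrt (bbar ^ 2 + β * (1 - β) * p ^ 2))
    (hRbar0 : p = 0 → Rbar = β * (1 - β) / (2 * q))
    (hRbar1 : 0 < p → Rbar = (bbar + K) / p ^ 2)
    (lambar rhobar vbar : ℝ)
    (hrhobar : rhobar = -β * p * lambar)
    (hvbar : (bbar - p ^ 2 * Rbar) * vbar + β * (1 - β) * lambar - Rbar * rhobar = 0)
    (dbar Q Ubar : ℝ)
    (hdbar : dbar = bbar - α * p ^ 2 * Rbar)
    (hQ : Q = β * (1 - (1 - α) ^ 2 * p ^ 2 * Rbar ^ 2))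
    (hUbar0 : p = 0 → -2 * dbar * Ubar - Q = 0)
    (hUbar1 : 0 < p → Ubar = (dbar + Real.sqrt (dbar ^ 2 + p ^ 2 * Q)) / p ^ 2)
    (hbar gambar mbar fbar gbar : ℝ)
    (hhbar : hbar = α * (α - 1) * p ^ 2 * Rbar * vbar - β * lambar)
    (hgambar : gambar = rhobar + α * p ^ 2 * vbar)
    (hmbar : (dbar - p ^ 2 * Ubar) * mbar - hbar - Ubar * gambar = 0)
    (hfbar : fbar = p ^ 2 * mbar ^ 2 + 2 * gambar * mbar - p ^ 2 * Ubar
      + α * (α - 1) * (p ^ 2 * vbar ^ 2 - (1 - β) ^ 2 * lambar ^ 2))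
    (hgbar : gbar = p ^ 2 * vbar ^ 2 + 2 * rhobar * vbar - p ^ 2 * Rbar
      - β * (1 - β) * lambar ^ 2) :
    Ubar = (1 - α) * Rbar ∧ mbar = (1 - α) * vbar ∧ fbar = (1 - α) * gbar :=
  stmt_13_general p q α β hq hp hα1 hα0 hαβ bbar K Rbar hbbar hK hRbar0 hRbar1 lambar rhobar vbar
    hvbar dbar Q Ubar hdbar hQ hUbar0 hUbar1 hbar gambar mbar fbar gbar hhbar hgambar hmbar hfbar
    hgbar
end
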